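/- arXiv:1404.4484 — 12 statements merged into one kernel-verified Lean document; each statement's English description precedes it below -/
import Mathlib

section
/- There is an absolute constant C such that for every integer k ≥ 1 and every k-degenerate finite simple graph G on n ≥ 4 vertices, the separation dimension of G satisfies π(G) ≤ C · k · log log n. -/
/-- A family of linear orders (given as injective rank functions into `ℕ`) of the
vertex set of `G` is *pairwise suitable* for `G` if every two disjoint edges are
separated by some order in the family. -/
def SepFamily {V : Type*} (G : SimpleGraph V) {m : ℕ} (F : Fin m → V → ℕ) : Prop :=
  (∀ i, Function.Injective (F i)) ∧
  ∀ a b c d : V, G.Adj a b → G.Adj c d → a ≠ c → a ≠ d → b ≠ c → b ≠ d →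
    ∃ i, (F i a < F i c ∧ F i a < F i d ∧ F i b < F i c ∧ F i b < F i d) ∨
         (F i c < F i a ∧ F i d < F i a ∧ F i c < F i b ∧ F i d < F i b)

/-- The separation dimension of `G`: the minimum cardinality of a pairwise suitable
family of linear orders of `V(G)`. -/
noncomputable def sepDim {V : Type*} (G : SimpleGraph V) : ℕ :=
  sInf {m : ℕ | ∃ F : Fin m → V → ℕ, SepFamily G F}

/-- `G` is `k`-degenerate: the vertices can be enumerated so that every vertex is
succeeded by at most `k` of its neighbours. -/
def Degenerate {V : Type*} (G : SimpleGraph V) (k : ℕ) : Prop :=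
  ∃ ord : V → ℕ, Function.Injective ord ∧
    ∀ v : V, Nat.card {u : V // G.Adj v u ∧ ord v < ord u} ≤ k

/-!
Orient every edge of a `k`-degenerate graph towards its later endpoint in a degeneracy order;
the out-edges then split into `k` selectors `nbr i : V → V` (with `nbr i v = v` for "no edge").
Fix an order `σ` and a colour `i`, and rank each vertex by the later endpoint of its edge
`{v, nbr i v}`. For disjoint edges `a → b` of colour `i` and `{c, d}`, if `b` is `σ`-above
`a, c, d` and their `nbr i`-images, then `{c, d}` lies below `{a, b}` in this ranking, up to one
tie that a tie-break order or its reverse resolves; if both `c` and `d` point to `b`, exchange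
the roles of the two edges. So it suffices to have orders in which any vertex lies above any
six others. The orders `v ↦ enc v xor N` do this as soon as the masks `N` realise every bit
pattern on every six of the `L ≈ log n` bit positions, and a union bound gives such a family of
`O(log L) = O(log log n)` masks.
-/

open Finset Function Real

theorem Degenerate.exists_selectors {V : Type*} [Finite V] {G : SimpleGraph V} {k : ℕ}
    (h : Degenerate G k) :
    ∃ nbr : Fin k → V → V, (∀ a b, G.Adj a b → ∃ i, nbr i a = b ∨ nbr i b = a) ∧
      ∀ i i' a b, nbr i a = b → nbr i' b = a → a = b := by
  classical
  have := Fintype.ofFinite V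
  obtain ⟨ord, hinj, hord⟩ := h
  have e : ∀ v, {u // G.Adj v u ∧ ord v < ord u} ↪ Fin k := fun v =>
    (Embedding.nonempty_of_card_le (by simpa [Nat.card_eq_fintype_card] using hord v)).some
  let nbr : Fin k → V → V := fun i v => extend (e v) Subtype.val (fun _ => v) i
  have hnbr : ∀ v u (h : G.Adj v u ∧ ord v < ord u), nbr (e v ⟨u, h⟩) v = u := fun v u h =>
    (e v).injective.extend_apply _ _ _
  have hup : ∀ i v, nbr i v = v ∨ ord v < ord (nbr i v) := by
    intro i v
    by_cases h : ∃ u, e v u = i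
    · obtain ⟨⟨u, hu⟩, rfl⟩ := h
      exact Or.inr (by rw [hnbr]; exact hu.2)
    · exact Or.inl (extend_apply' _ _ _ h)
  refine ⟨nbr, fun a b hab => ?_, fun i i' a b hab hba => ?_⟩
  · rcases lt_or_gt_of_ne (hinj.ne hab.ne) with h | h
    · exact ⟨_, Or.inl (hnbr a b ⟨hab, h⟩)⟩
    · exact ⟨_, Or.inr (hnbr b a ⟨hab.symm, h⟩)⟩
  · rcases hup i a with h | h
    · exact (hab ▸ h).symm
    rcases hup i' b with h' | h'
    · exact hba ▸ h'
    rw [hab] at h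
    rw [hba] at h'
    exact absurd h h'.asymm

namespace SepDim

def IsSuitable {ι V : Type*} (σ : ι → V → ℕ) (r : ℕ) : Prop :=
  ∀ (y : V) (T : List V), T.length ≤ r → ∃ j, ∀ x ∈ T, x ≠ y → σ j x < σ j y

def IsBitUniversal {ι : Type*} (N : ι → ℕ) (L r : ℕ) : Prop :=
  ∀ (γ : ℕ → Bool) (P : List ℕ), P.length ≤ r → ∃ j, ∀ q ∈ P, q < L → (N j).testBit q = γ q

theorem xor_lt_xor_of_testBit {x y N q : ℕ} (hq : (x ^^^ y).testBit q = true)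
    (hhigh : ∀ j, q < j → (x ^^^ y).testBit j = false) (hN : N.testBit q = x.testBit q) :
    x ^^^ N < y ^^^ N := by
  have hx : x.testBit q = !y.testBit q := by
    rw [Nat.testBit_xor] at hq
    revert hq; cases x.testBit q <;> cases y.testBit q <;> decide
  refine Nat.lt_of_testBit q ?_ ?_ fun j hj => ?_
  · simp [Nat.testBit_xor, hN]
  · simp [Nat.testBit_xor, hN, hx]
  · have hxy : x.testBit j = y.testBit j := by simpa [Nat.testBit_xor] using hhigh j hj
    simp [Nat.testBit_xor, hxy]

theorem IsBitUniversal.isSuitable_xor {ι V : Type*} {N : ι → ℕ} {L r : ℕ}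
    (hN : IsBitUniversal N L r) (enc : V → ℕ) (henc : Injective enc)
    (hlt : ∀ v, enc v < 2 ^ L) : IsSuitable (fun j v => enc v ^^^ N j) r := by
  intro y T hT
  have hmsb : ∀ x, ∃ q, x ≠ y → (enc x ^^^ enc y).testBit q = true ∧
      ∀ j, q < j → (enc x ^^^ enc y).testBit j = false := by
    intro x
    by_cases h : x = y
    · exact ⟨0, fun h' => absurd h h'⟩
    · obtain ⟨q, hq⟩ :=
        Nat.exists_most_significant_bit (Nat.xor_ne_zero_iff.mpr (henc.ne h))
      exact ⟨q, fun _ => hq⟩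
  choose p hp using hmsb
  obtain ⟨j, hj⟩ := hN (fun q => !(enc y).testBit q) (T.map p) (by simpa using hT)
  refine ⟨j, fun x hx hxy => xor_lt_xor_of_testBit (hp x hxy).1 (hp x hxy).2 ?_⟩
  have hpL : p x < L := by
    have := Nat.ge_two_pow_of_testBit (hp x hxy).1
    have := Nat.xor_lt_two_pow (hlt x) (hlt y)
    exact (Nat.pow_lt_pow_iff_right (by norm_num)).mp (by omega : 2 ^ p x < 2 ^ L)
  have hbit := (hp x hxy).1
  rw [Nat.testBit_xor] at hbit
  rw [hj (p x) (List.mem_map_of_mem hx) hpL]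
  revert hbit; cases (enc x).testBit (p x) <;> cases (enc y).testBit (p x) <;> decide

section Counting

variable {α κ : Type*} [Fintype α] [DecidableEq α]

theorem exists_forall_exists_notMem {s b : ℕ} (C : Finset κ) (B : κ → Finset α)
    (hB : ∀ c ∈ C, #(B c) ≤ b) (h : #C * b ^ s < Fintype.card α ^ s) :
    ∃ M : Fin s → α, ∀ c ∈ C, ∃ j, M j ∉ B c := by
  by_contra! hcon
  have hcover :
      (univ : Finset (Fin s → α)) ⊆ C.biUnion fun c => Fintype.piFinset fun _ => B c :=
    fun M _ => by
      obtain ⟨c, hc, hM⟩ := hcon M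
      exact mem_biUnion.mpr ⟨c, hc, Fintype.mem_piFinset.mpr hM⟩
  have := (card_le_card hcover).trans <| card_biUnion_le_card_mul _ _ _ fun c hc => by
    rw [Fintype.card_piFinset_const]
    exact Nat.pow_le_pow_left (hB c hc) s
  simp only [card_univ, Fintype.card_fun, Fintype.card_fin] at this
  omega

end Counting

theorem testBit_sum_two_pow (S : Finset ℕ) (q : ℕ) :
    (∑ i ∈ S, 2 ^ i).testBit q ↔ q ∈ S := by
  rw [← Nat.mem_bitIndices, ← List.mem_toFinset, toFinset_bitIndices_sum_two_pow]

theorem card_not_forall_eq_le {L r : ℕ} (p : Fin r → Fin L) (γ : Fin L → Bool) :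
    #{f : Fin L → Bool | ¬ ∀ m, f (p m) = γ (p m)} ≤ 2 ^ L - 2 ^ (L - r) := by
  classical
  set P := univ.image p
  have hsub : Fintype.piFinset (fun q => if q ∈ P then {γ q} else univ) ⊆
      ({f | ∀ m, f (p m) = γ (p m)} : Finset (Fin L → Bool)) := by
    intro f hf
    simp only [Fintype.mem_piFinset] at hf
    simp only [mem_filter, mem_univ, true_and]
    exact fun m => by simpa [P] using hf (p m)
  have hgood : 2 ^ (L - r) ≤ #{f : Fin L → Bool | ∀ m, f (p m) = γ (p m)} := by
    refine le_trans ?_ (card_le_card hsub)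
    have hP : #P ≤ r := card_image_le.trans (by simp)
    have hPc := card_compl P
    rw [compl_eq_univ_sdiff, ← filter_notMem_eq_sdiff, Fintype.card_fin] at hPc
    rw [Fintype.card_piFinset]
    simp only [apply_ite card, card_singleton, card_univ, Fintype.card_bool, prod_ite,
      prod_const_one, prod_const, one_mul]
    exact Nat.pow_le_pow_right (by norm_num) (by omega)
  have := card_filter_add_card_filter_not (s := (univ : Finset (Fin L → Bool)))
    (fun f => ∀ m, f (p m) = γ (p m))
  simp only [card_univ, Fintype.card_fun, Fintype.card_fin, Fintype.card_bool] at this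
  omega

-- Union bound: for each of the at most `2 ^ r * L ^ r` patterns on `r` positions, at most
-- `(2 ^ L - 2 ^ (L - r)) ^ s` families of `s` masks miss it.
theorem exists_isBitUniversal {L r s : ℕ} (hL : 0 < L)
    (h : 2 ^ r * L ^ r * (2 ^ L - 2 ^ (L - r)) ^ s < (2 ^ L) ^ s) :
    ∃ N : Fin s → ℕ, IsBitUniversal N L r := by
  classical
  let C := univ.image fun pγ : (Fin r → Fin L) × (Fin L → Bool) => (pγ.1, pγ.2 ∘ pγ.1)
  have hC : #C ≤ 2 ^ r * L ^ r := (card_le_univ C).trans (by simp [mul_comm])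
  obtain ⟨M, hM⟩ := exists_forall_exists_notMem C
    (fun c => {f : Fin L → Bool | ¬ ∀ m, f (c.1 m) = c.2 m}) (b := 2 ^ L - 2 ^ (L - r))
    (fun c hc => by
      obtain ⟨⟨p, γ⟩, -, rfl⟩ := mem_image.mp hc
      exact card_not_forall_eq_le p γ)
    (by simpa using (Nat.mul_le_mul_right _ hC).trans_lt h)
  refine ⟨fun j => ∑ q ∈ (univ.filter fun q => M j q = true).map Fin.valEmbedding, 2 ^ q,
    fun γ P hP => ?_⟩
  let p : Fin r → Fin L := fun m => ⟨P[(m : ℕ)]?.getD 0 % L, Nat.mod_lt _ hL⟩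
  obtain ⟨j, hj⟩ := hM _ (mem_image_of_mem _ (mem_univ (p, fun q : Fin L => γ q)))
  refine ⟨j, fun q hq hqL => ?_⟩
  simp only [mem_filter, mem_univ, true_and, not_not] at hj
  obtain ⟨i, hi, rfl⟩ := List.mem_iff_getElem.mp hq
  have hjm : M j ⟨P[i], hqL⟩ = γ P[i] := by
    simpa [p, List.getElem?_eq_getElem hi, Nat.mod_eq_of_lt hqL] using hj ⟨i, by omega⟩
  rw [Bool.eq_iff_iff, testBit_sum_two_pow, ← hjm]
  simp only [mem_map, mem_filter, mem_univ, true_and, Fin.valEmbedding_apply]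
  exact ⟨fun ⟨a, ha, hap⟩ => (Fin.ext hap : a = ⟨P[i], hqL⟩) ▸ ha, fun h => ⟨_, h, rfl⟩⟩

theorem two_pow_six_mul_pow_lt {L l s : ℕ} (hL : 6 ≤ L) (hLl : L ≤ 2 ^ l)
    (hs : s = 45 * (7 + 6 * l)) :
    2 ^ 6 * L ^ 6 * (2 ^ L - 2 ^ (L - 6)) ^ s < (2 ^ L) ^ s := by
  obtain ⟨t, rfl⟩ : ∃ t, L = t + 6 := ⟨L - 6, by omega⟩
  -- `45` is chosen so that `2 * 63 ^ 45 ≤ 64 ^ 45`.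
  have hcore : 64 * (t + 6) ^ 6 * 63 ^ s < 64 ^ s :=
    calc 64 * (t + 6) ^ 6 * 63 ^ s < 2 ^ (7 + 6 * l) * 63 ^ s := by
          gcongr
          calc 64 * (t + 6) ^ 6 ≤ 64 * (2 ^ l) ^ 6 := by gcongr
            _ < 2 ^ (7 + 6 * l) := by
              rw [← pow_mul, mul_comm l 6, pow_add]
              have : 0 < 2 ^ (6 * l) := by positivity
              omega
      _ = (2 * 63 ^ 45) ^ (7 + 6 * l) := by rw [mul_pow, ← pow_mul, hs]
      _ ≤ (64 ^ 45) ^ (7 + 6 * l) := by gcongr; norm_num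
      _ = 64 ^ s := by rw [← pow_mul, hs]
  have h63 : 2 ^ (t + 6) - 2 ^ (t + 6 - 6) = 63 * 2 ^ t := by
    rw [Nat.add_sub_cancel, pow_add]; omega
  rw [h63, pow_add, mul_pow, mul_pow]
  have := Nat.mul_lt_mul_of_pos_right hcore (by positivity : 0 < (2 ^ t) ^ s)
  norm_num at this ⊢
  linarith

theorem exists_isSuitable_six (V : Type*) [Fintype V] :
    ∃ σ : Fin (45 * (7 + 6 * (Nat.log 2 (Nat.log 2 (Fintype.card V) + 6) + 1))) → V → ℕ,
      IsSuitable σ 6 := by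
  set L := Nat.log 2 (Fintype.card V) + 6
  obtain ⟨N, hN⟩ := exists_isBitUniversal (by omega : 0 < L)
    (two_pow_six_mul_pow_lt le_add_self (Nat.lt_pow_succ_log_self one_lt_two L).le rfl)
  have hV : Fintype.card V < 2 ^ L :=
    (Nat.lt_pow_succ_log_self one_lt_two _).trans_le (Nat.pow_le_pow_right two_pos (by omega))
  exact ⟨_, hN.isSuitable_xor (fun v => Fintype.equivFin V v)
    (fun v w h => (Fintype.equivFin V).injective (Fin.ext h))
    (fun v => (Fintype.equivFin V v).2.trans hV)⟩

theorem exists_rank_and_reverse (V : Type*) [Fintype V] :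
    ∃ τ : Bool → V → ℕ, (∀ ε v, τ ε v < Fintype.card V) ∧ (∀ ε, Injective (τ ε)) ∧
      ∀ v w, v ≠ w → ∃ ε, τ ε v < τ ε w := by
  set n := Fintype.card V
  let enc : V → ℕ := fun v => Fintype.equivFin V v
  have henc : ∀ v, enc v < n := fun v => (Fintype.equivFin V v).2
  have henc_inj : Injective enc := fun v w h => (Fintype.equivFin V).injective (Fin.ext h)
  refine ⟨fun ε v => if ε then enc v else n - 1 - enc v, fun ε v => ?_,
    fun ε v w h => henc_inj ?_, fun v w hvw => ?_⟩
  · have := henc v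
    cases ε <;> simp only [Bool.false_eq_true, if_true, if_false] <;> omega
  · have := henc v
    have := henc w
    cases ε <;> simp only [Bool.false_eq_true, if_true, if_false] at h <;> omega
  · have := henc v
    rcases lt_or_gt_of_ne (henc_inj.ne hvw) with h | h
    · exact ⟨true, h⟩
    · exact ⟨false, by simp only [Bool.false_eq_true, if_false]; omega⟩

section Separation

variable {V : Type*}

def EdgeBefore (f : V → ℕ) (a b c d : V) : Prop :=
  max (f a) (f b) < min (f c) (f d)

theorem edgeBefore_swap_left {g : V → ℕ} {a b c d : V} :
    EdgeBefore g b a c d ↔ EdgeBefore g a b c d := by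
  rw [EdgeBefore, EdgeBefore, max_comm]

theorem edgeBefore_swap_right {g : V → ℕ} {a b c d : V} :
    EdgeBefore g a b d c ↔ EdgeBefore g a b c d := by
  rw [EdgeBefore, EdgeBefore, min_comm]

theorem sepDim_le_card {ι : Type*} [Fintype ι] (G : SimpleGraph V) (F : ι → V → ℕ)
    (hinj : ∀ i, Injective (F i))
    (hsep : ∀ a b c d, G.Adj a b → G.Adj c d → a ≠ c → a ≠ d → b ≠ c → b ≠ d →
      ∃ i, EdgeBefore (F i) a b c d ∨ EdgeBefore (F i) c d a b) :
    sepDim G ≤ Fintype.card ι := by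
  refine Nat.sInf_le ⟨fun i => F ((Fintype.equivFin ι).symm i), fun i => hinj _, ?_⟩
  intro a b c d hab hcd hac had hbc hbd
  obtain ⟨i, h⟩ := hsep a b c d hab hcd hac had hbc hbd
  refine ⟨Fintype.equivFin ι i, ?_⟩
  simp only [Equiv.symm_apply_apply]
  simp only [EdgeBefore, max_lt_iff, lt_min_iff] at h
  tauto

def lexRank (key tie : V → ℕ) (n : ℕ) (v : V) : ℕ :=
  key v * n + tie v

variable {key tie : V → ℕ} {n : ℕ}

theorem lexRank_lt_of_key_lt (htie : ∀ v, tie v < n) {v w : V} (h : key v < key w) :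
    lexRank key tie n v < lexRank key tie n w :=
  calc key v * n + tie v < (key v + 1) * n := by
        rw [add_mul, one_mul]; exact Nat.add_lt_add_left (htie v) _
    _ ≤ key w * n := Nat.mul_le_mul_right n h
    _ ≤ key w * n + tie w := Nat.le_add_right _ _

theorem lexRank_injective (htie : ∀ v, tie v < n) (hinj : Injective tie) :
    Injective (lexRank key tie n) := fun v w h => hinj <| by
  simpa [lexRank, Nat.mul_add_mod_of_lt (htie _)] using congrArg (· % n) h

-- `v` is ranked at the later endpoint of its edge `{v, f v}`, just below `f v` if that is
-- the later one.
def edgeKey (σ : V → ℕ) (f : V → V) (v : V) : ℕ :=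
  2 * max (σ v) (σ (f v)) + if σ (f v) ≤ σ v then 1 else 0

variable {σ : V → ℕ} {f : V → V}

theorem edgeKey_of_le {v : V} (h : σ (f v) ≤ σ v) : edgeKey σ f v = 2 * σ v + 1 := by
  rw [edgeKey, max_eq_left h, if_pos h]

theorem edgeKey_of_lt {v : V} (h : σ v < σ (f v)) : edgeKey σ f v = 2 * σ (f v) := by
  rw [edgeKey, max_eq_right h.le, if_neg h.not_ge, add_zero]

theorem edgeKey_lt {v : V} {b : ℕ} (hv : σ v < b) (hfv : σ (f v) < b) :
    edgeKey σ f v < 2 * b := by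
  have := max_lt hv hfv
  unfold edgeKey
  split <;> omega

theorem lexRank_edgeKey_lt {A B X : V} (htie : ∀ v, tie v < n) (hfA : f A = B)
    (hA : σ A < σ B) (hX : σ X < σ B) (hfX : f X ≠ B → σ (f X) < σ B)
    (htieX : f X = B → tie X < tie A) :
    lexRank (edgeKey σ f) tie n X < lexRank (edgeKey σ f) tie n A := by
  have hkA : edgeKey σ f A = 2 * σ B := by rw [edgeKey_of_lt (hfA ▸ hA), hfA]
  by_cases hXB : f X = B
  · have hkX : edgeKey σ f X = 2 * σ B := by rw [edgeKey_of_lt (hXB ▸ hX), hXB]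
    unfold lexRank
    rw [hkX, hkA]
    exact Nat.add_lt_add_left (htieX hXB) _
  · exact lexRank_lt_of_key_lt htie (hkA ▸ edgeKey_lt hX (hfX hXB))

theorem exists_edgeBefore_lexRank_edgeKey {τ : Bool → V → ℕ} (hτ : ∀ ε v, τ ε v < n)
    (hrev : ∀ v w, v ≠ w → ∃ ε, τ ε v < τ ε w) {A B C D : V} (hfA : f A = B)
    (hAB : A ≠ B) (hCA : C ≠ A) (hDA : D ≠ A) (hCB : C ≠ B) (hDB : D ≠ B)
    (hCD : ¬(f C = B ∧ f D = B)) (hσ : ∀ X ∈ [A, C, D, f B, f C, f D], X ≠ B → σ X < σ B) :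
    ∃ ε, EdgeBefore (lexRank (edgeKey σ f) (τ ε) n) C D A B := by
  simp only [List.mem_cons, List.not_mem_nil, or_false, forall_eq_or_imp, forall_eq] at hσ
  obtain ⟨hA, hC, hD, hfB, hfC, hfD⟩ := hσ
  obtain ⟨ε, hεC, hεD⟩ :
      ∃ ε, (f C = B → τ ε C < τ ε A) ∧ (f D = B → τ ε D < τ ε A) := by
    by_cases hfCB : f C = B
    · obtain ⟨ε, hε⟩ := hrev C A hCA
      exact ⟨ε, fun _ => hε, fun hfDB => absurd ⟨hfCB, hfDB⟩ hCD⟩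
    · by_cases hfDB : f D = B
      · obtain ⟨ε, hε⟩ := hrev D A hDA
        exact ⟨ε, fun h => absurd h hfCB, fun _ => hε⟩
      · exact ⟨true, fun h => absurd h hfCB, fun h => absurd h hfDB⟩
  have hAB_lt : lexRank (edgeKey σ f) (τ ε) n A < lexRank (edgeKey σ f) (τ ε) n B := by
    refine lexRank_lt_of_key_lt (hτ ε) ?_
    rw [edgeKey_of_lt (hfA ▸ hA hAB), hfA, edgeKey_of_le ?_]
    · omega
    · by_cases h : f B = B
      · rw [h]
      · exact (hfB h).le
  have hCA' := lexRank_edgeKey_lt (hτ ε) hfA (hA hAB) (hC hCB) hfC hεC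
  have hDA' := lexRank_edgeKey_lt (hτ ε) hfA (hA hAB) (hD hDB) hfD hεD
  exact ⟨ε, max_lt_iff.mpr ⟨lt_min hCA' (hCA'.trans hAB_lt), lt_min hDA' (hDA'.trans hAB_lt)⟩⟩

theorem sepDim_le_of_isSuitable [Fintype V] (G : SimpleGraph V) {k s : ℕ}
    (nbr : Fin k → V → V) (hcover : ∀ a b, G.Adj a b → ∃ i, nbr i a = b ∨ nbr i b = a)
    (hanti : ∀ i i' a b, nbr i a = b → nbr i' b = a → a = b)
    {σ : Fin s → V → ℕ} (hσ : IsSuitable σ 6) : sepDim G ≤ k * (s * 2) := by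
  obtain ⟨τ, hτ, hτ_inj, hrev⟩ := exists_rank_and_reverse V
  let F : Fin k × Fin s × Bool → V → ℕ := fun x =>
    lexRank (edgeKey (σ x.2.1) (nbr x.1)) (τ x.2.2) (Fintype.card V)
  have horiented : ∀ i i' a b c d, nbr i a = b → nbr i' c = d → a ≠ b → c ≠ d →
      a ≠ c → a ≠ d → b ≠ c → b ≠ d →
      ∃ x, EdgeBefore (F x) a b c d ∨ EdgeBefore (F x) c d a b := by
    intro i i' a b c d hab hcd hab' hcd' hac had hbc hbd
    by_cases hin : nbr i c = b ∧ nbr i d = b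
    -- then `b` cannot point to `d`, so the two edges exchange their roles
    · have hout : ¬(nbr i' a = d ∧ nbr i' b = d) := fun h => hbd (hanti i' i b d h.2 hin.2)
      obtain ⟨j, hj⟩ := hσ d [c, a, b, nbr i' d, nbr i' a, nbr i' b] (by simp)
      obtain ⟨ε, h⟩ :=
        exists_edgeBefore_lexRank_edgeKey hτ hrev hcd hcd' hac hbc had hbd hout hj
      exact ⟨(i', j, ε), Or.inl h⟩
    · obtain ⟨j, hj⟩ := hσ b [a, c, d, nbr i b, nbr i c, nbr i d] (by simp)
      obtain ⟨ε, h⟩ := exists_edgeBefore_lexRank_edgeKey hτ hrev hab hab' hac.symm had.symm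
        hbc.symm hbd.symm hin hj
      exact ⟨(i, j, ε), Or.inr h⟩
  have := sepDim_le_card G F (fun x => lexRank_injective (hτ _) (hτ_inj _)) ?_
  · simpa using this
  intro a b c d hab hcd hac had hbc hbd
  obtain ⟨i, hi⟩ := hcover a b hab
  obtain ⟨i', hi'⟩ := hcover c d hcd
  rcases hi with hi | hi <;> rcases hi' with hi' | hi'
  · exact horiented i i' a b c d hi hi' hab.ne hcd.ne hac had hbc hbd
  · simpa only [edgeBefore_swap_left, edgeBefore_swap_right] using
      horiented i i' a b d c hi hi' hab.ne hcd.ne.symm had hac hbd hbc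
  · simpa only [edgeBefore_swap_left, edgeBefore_swap_right] using
      horiented i i' b a c d hi hi' hab.ne.symm hcd.ne hbc hbd hac had
  · simpa only [edgeBefore_swap_left, edgeBefore_swap_right] using
      horiented i i' b a d c hi hi' hab.ne.symm hcd.ne.symm hbd hbc had hac

end Separation

theorem ninety_mul_le_logb_logb {n : ℕ} (hn : 4 ≤ n) :
    (90 * (13 + 6 * Nat.log 2 (Nat.log 2 n + 6)) : ℝ) ≤ 2790 * logb 2 (logb 2 n) := by
  have h2 : 2 ≤ logb 2 (n : ℝ) := by
    rw [Real.le_logb_iff_rpow_le one_lt_two (by positivity)]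
    norm_num
    exact_mod_cast hn
  have h1 : 1 ≤ logb 2 (logb 2 (n : ℝ)) := by
    rw [Real.le_logb_iff_rpow_le one_lt_two (by positivity)]
    norm_num
    exact h2
  have hL : ((Nat.log 2 n + 6 : ℕ) : ℝ) ≤ 2 ^ 2 * logb 2 n := by
    have := Real.natLog_le_logb n 2
    push_cast at this ⊢
    linarith
  have hl : (Nat.log 2 (Nat.log 2 n + 6) : ℝ) ≤ 2 + logb 2 (logb 2 n) :=
    calc _ ≤ logb 2 ((Nat.log 2 n + 6 : ℕ) : ℝ) := by exact_mod_cast Real.natLog_le_logb _ 2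
      _ ≤ logb 2 (2 ^ 2 * logb 2 n) := Real.logb_le_logb_of_le one_lt_two (by positivity) hL
      _ = 2 + logb 2 (logb 2 n) := by
        rw [Real.logb_mul (by positivity) (by positivity), Real.logb_pow,
          Real.logb_self_eq_one one_lt_two]
        ring
  linarith

end SepDim

/-- There is an absolute constant `C` such that every `k`-degenerate graph (`k ≥ 1`)
on `n ≥ 4` vertices has separation dimension at most `C · k · log log n`
(logarithms to base 2). -/
theorem stmt0 :
    ∃ C : ℝ, 0 < C ∧
      ∀ (k : ℕ), 1 ≤ k →
      ∀ (V : Type) [Fintype V], ∀ (G : SimpleGraph V),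
        4 ≤ Fintype.card V → Degenerate G k →
        (sepDim G : ℝ) ≤ C * k * Real.logb 2 (Real.logb 2 (Fintype.card V)) := by
  refine ⟨2790, by norm_num, fun k _ V _ G hn hG => ?_⟩
  obtain ⟨nbr, hcover, hanti⟩ := hG.exists_selectors
  obtain ⟨σ, hσ⟩ := SepDim.exists_isSuitable_six V
  calc (sepDim G : ℝ)
      ≤ k * (90 * (13 + 6 * Nat.log 2 (Nat.log 2 (Fintype.card V) + 6))) := by
        exact_mod_cast (SepDim.sepDim_le_of_isSuitable G nbr hcover hanti hσ).trans_eq (by ring)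
    _ ≤ k * (2790 * Real.logb 2 (Real.logb 2 (Fintype.card V))) :=
        mul_le_mul_of_nonneg_left (SepDim.ninety_mul_le_logb_logb hn) k.cast_nonneg
    _ = 2790 * k * Real.logb 2 (Real.logb 2 (Fintype.card V)) := by ring
end

section
/- Let G be a k-degenerate finite simple graph on n vertices, and suppose there exists a 3-suitable family of permutations of [n] of cardinality r. Then the separation dimension of G satisfies π(G) ≤ 4·k·r. -/
open scoped Classical

/-- A family of permutations of `[n]` is 3-suitable if for all distinct `a b c`
some permutation places both `b` and `c` before `a`. -/
def ThreeSuitable {n r : ℕ} (E : Fin r → Equiv.Perm (Fin n)) : Prop :=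
  ∀ a b c : Fin n, a ≠ b → a ≠ c → b ≠ c →
    ∃ i, (E i) b < (E i) a ∧ (E i) c < (E i) a

namespace SepHelper

variable {n : ℕ}

noncomputable def rkf (ord : Fin n → ℕ) (v : Fin n) : ℕ :=
  (Finset.univ.filter (fun u => ord u < ord v)).card

lemma rkf_le (ord : Fin n → ℕ) (v : Fin n) : rkf ord v ≤ n := by
  have h := Finset.card_filter_le (Finset.univ : Finset (Fin n)) (fun u => ord u < ord v)
  simpa [rkf] using h

lemma rkf_lt {ord : Fin n → ℕ} {u v : Fin n} (h : ord u < ord v) :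
    rkf ord u < rkf ord v := by
  apply Finset.card_lt_card
  refine (Finset.ssubset_iff_of_subset ?_).mpr ⟨u, by simp [h], by simp⟩
  intro x hx
  simp only [Finset.mem_filter, Finset.mem_univ, true_and] at *
  exact hx.trans h

lemma rkf_inj {ord : Fin n → ℕ} (hord : Function.Injective ord) :
    Function.Injective (rkf ord) := by
  intro u v h
  by_contra hne
  have hne' : ord u ≠ ord v := fun hh => hne (hord hh)
  rcases hne'.lt_or_gt with h' | h'
  · exact absurd h (rkf_lt h').ne
  · exact absurd h (rkf_lt h').ne'

noncomputable def cnt (ord : Fin n → ℕ) (v : Fin n) : ℕ :=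
  (Finset.univ.filter (fun u => ord v < ord u)).card

lemma cnt_le (ord : Fin n → ℕ) (v : Fin n) : cnt ord v ≤ n := by
  have h := Finset.card_filter_le (Finset.univ : Finset (Fin n)) (fun u => ord v < ord u)
  simpa [cnt] using h

lemma cnt_lt {ord : Fin n → ℕ} {v w : Fin n} (h : ord v < ord w) :
    cnt ord w < cnt ord v := by
  apply Finset.card_lt_card
  refine (Finset.ssubset_iff_of_subset ?_).mpr ⟨w, by simp [h], by simp⟩
  intro x hx
  simp only [Finset.mem_filter, Finset.mem_univ, true_and] at *
  exact h.trans hx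

noncomputable def gf (hp : Fin n → Prop) (par : Fin n → Fin n) : ℕ → Fin n → Bool
  | 0, _ => false
  | m+1, v => if hp v then !(gf hp par m (par v)) else false

lemma gf_stable (ord : Fin n → ℕ) (hp : Fin n → Prop) (par : Fin n → Fin n)
    (hmono : ∀ v, hp v → ord v < ord (par v)) :
    ∀ m v, cnt ord v ≤ m → gf hp par (m+1) v = gf hp par m v := by
  intro m
  induction m with
  | zero =>
    intro v hv
    by_cases h : hp v
    · exfalso
      have h1 : 0 < cnt ord v := Finset.card_pos.mpr ⟨par v, by simp [cnt, hmono v h]⟩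
      omega
    · simp [gf, h]
  | succ m ih =>
    intro v hv
    by_cases h : hp v
    · show (if hp v then !(gf hp par (m+1) (par v)) else false)
        = (if hp v then !(gf hp par m (par v)) else false)
      rw [if_pos h, if_pos h, ih (par v) ?_]
      have := cnt_lt (hmono v h)
      omega
    · simp [gf, h]

noncomputable def gcol (hp : Fin n → Prop) (par : Fin n → Fin n) : Fin n → Bool :=
  gf hp par (n+1)

lemma gcol_prop (ord : Fin n → ℕ) (hp : Fin n → Prop) (par : Fin n → Fin n)
    (hmono : ∀ v, hp v → ord v < ord (par v)) {v : Fin n} (h : hp v) :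
    gcol hp par v = !(gcol hp par (par v)) := by
  have h1 : gcol hp par v = !(gf hp par n (par v)) := by
    show (if hp v then !(gf hp par n (par v)) else false) = _
    rw [if_pos h]
  have h2 : gf hp par (n+1) (par v) = gf hp par n (par v) :=
    gf_stable ord hp par hmono n (par v) (cnt_le ord (par v))
  rw [h1, gcol, h2]

def pulled (hp : Fin n → Prop) (par : Fin n → Fin n) (p : Bool) (v : Fin n) : Prop :=
  hp v ∧ gcol hp par v = p

noncomputable def Bmap (hp : Fin n → Prop) (par : Fin n → Fin n) (p : Bool) (v : Fin n) : Fin n :=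
  if pulled hp par p v then par v else v

noncomputable def midv (hp : Fin n → Prop) (par : Fin n → Fin n) (p : Bool) (v : Fin n) : ℕ :=
  if pulled hp par p v then 0 else 1

noncomputable def terv (ord : Fin n → ℕ) (j : Bool) (v : Fin n) : ℕ :=
  if j then rkf ord v else n - rkf ord v

noncomputable def keyF (σ : Fin n → Fin n) (ord : Fin n → ℕ) (hp : Fin n → Prop)
    (par : Fin n → Fin n) (p j : Bool) (v : Fin n) : ℕ :=
  (2*n+2) * (σ (Bmap hp par p v)).val + ((n+1) * midv hp par p v + terv ord j v)

lemma midv_le (hp : Fin n → Prop) (par : Fin n → Fin n) (p : Bool) (v : Fin n) :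
    midv hp par p v ≤ 1 := by
  unfold midv; split <;> omega

lemma terv_le (ord : Fin n → ℕ) (j : Bool) (v : Fin n) : terv ord j v ≤ n := by
  unfold terv; split
  · exact rkf_le ord v
  · omega

lemma key3_lt {n A1 A2 m1 m2 t1 t2 : ℕ} (hm1 : m1 ≤ 1) (hm2 : m2 ≤ 1)
    (ht1 : t1 ≤ n) (ht2 : t2 ≤ n)
    (h : A1 < A2 ∨ (A1 = A2 ∧ (m1 < m2 ∨ (m1 = m2 ∧ t1 < t2)))) :
    (2*n+2) * A1 + ((n+1) * m1 + t1) < (2*n+2) * A2 + ((n+1) * m2 + t2) := by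
  have hi1 : (n+1) * m1 + t1 < 2*n+2 := by
    have : (n+1) * m1 ≤ (n+1) * 1 := Nat.mul_le_mul_left _ hm1
    omega
  rcases h with h | ⟨rfl, h⟩
  · calc (2*n+2) * A1 + ((n+1) * m1 + t1) < (2*n+2) * A1 + (2*n+2) := by omega
      _ = (2*n+2) * (A1 + 1) := by ring
      _ ≤ (2*n+2) * A2 := Nat.mul_le_mul_left _ h
      _ ≤ (2*n+2) * A2 + ((n+1) * m2 + t2) := Nat.le_add_right _ _
  · apply Nat.add_lt_add_left
    rcases h with h | ⟨rfl, h⟩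
    · calc (n+1) * m1 + t1 < (n+1) * m1 + (n+1) := by omega
        _ = (n+1) * (m1 + 1) := by ring
        _ ≤ (n+1) * m2 := Nat.mul_le_mul_left _ h
        _ ≤ (n+1) * m2 + t2 := Nat.le_add_right _ _
    · omega

lemma keyF_lt_primary {σ : Fin n → Fin n} {ord : Fin n → ℕ} {hp : Fin n → Prop}
    {par : Fin n → Fin n} {p j : Bool} {u v : Fin n}
    (h : σ (Bmap hp par p u) < σ (Bmap hp par p v)) :
    keyF σ ord hp par p j u < keyF σ ord hp par p j v :=
  key3_lt (midv_le _ _ _ _) (midv_le _ _ _ _) (terv_le _ _ _) (terv_le _ _ _) (Or.inl h)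

lemma keyF_lt_mid {σ : Fin n → Fin n} {ord : Fin n → ℕ} {hp : Fin n → Prop}
    {par : Fin n → Fin n} {p j : Bool} {u v : Fin n}
    (h : σ (Bmap hp par p u) = σ (Bmap hp par p v))
    (h2 : pulled hp par p u) (h3 : ¬ pulled hp par p v) :
    keyF σ ord hp par p j u < keyF σ ord hp par p j v := by
  refine key3_lt (midv_le _ _ _ _) (midv_le _ _ _ _) (terv_le _ _ _) (terv_le _ _ _)
    (Or.inr ⟨congrArg Fin.val h, Or.inl ?_⟩)
  simp [midv, h2, h3]

lemma keyF_lt_ter {σ : Fin n → Fin n} {ord : Fin n → ℕ} {hp : Fin n → Prop}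
    {par : Fin n → Fin n} {p j : Bool} {u v : Fin n}
    (h : σ (Bmap hp par p u) = σ (Bmap hp par p v))
    (h2 : midv hp par p u = midv hp par p v)
    (h3 : terv ord j u < terv ord j v) :
    keyF σ ord hp par p j u < keyF σ ord hp par p j v :=
  key3_lt (midv_le _ _ _ _) (midv_le _ _ _ _) (terv_le _ _ _) (terv_le _ _ _)
    (Or.inr ⟨congrArg Fin.val h, Or.inr ⟨h2, h3⟩⟩)

lemma keyF_inj {σ : Fin n → Fin n} {ord : Fin n → ℕ} {hp : Fin n → Prop}
    {par : Fin n → Fin n} {p j : Bool} (hord : Function.Injective ord) :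
    Function.Injective (keyF σ ord hp par p j) := by
  intro u v h
  have hiu : (n+1) * midv hp par p u + terv ord j u < 2*n+2 := by
    have h1 : (n+1) * midv hp par p u ≤ (n+1) * 1 := Nat.mul_le_mul_left _ (midv_le _ _ _ _)
    have h2 := terv_le ord j u
    omega
  have hiv : (n+1) * midv hp par p v + terv ord j v < 2*n+2 := by
    have h1 : (n+1) * midv hp par p v ≤ (n+1) * 1 := Nat.mul_le_mul_left _ (midv_le _ _ _ _)
    have h2 := terv_le ord j v
    omega
  have hI : (n+1) * midv hp par p u + terv ord j u = (n+1) * midv hp par p v + terv ord j v := by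
    have := congrArg (fun x => x % (2*n+2)) h
    simpa [keyF, Nat.mul_add_mod, Nat.mod_eq_of_lt hiu, Nat.mod_eq_of_lt hiv] using this
  have hT : terv ord j u = terv ord j v := by
    have := congrArg (fun x => x % (n+1)) hI
    simpa [Nat.mul_add_mod, Nat.mod_eq_of_lt (Nat.lt_succ_of_le (terv_le ord j u)),
      Nat.mod_eq_of_lt (Nat.lt_succ_of_le (terv_le ord j v))] using this
  have hR : rkf ord u = rkf ord v := by
    rcases j with _ | _
    · have h1 := rkf_le ord u
      have h2 := rkf_le ord v
      simp only [terv, if_neg Bool.false_ne_true] at hT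
      omega
    · simpa [terv] using hT
  exact rkf_inj hord hR

lemma exists_ter {ord : Fin n → ℕ} (hord : Function.Injective ord) {u v : Fin n}
    (h : u ≠ v) : ∃ j : Bool, terv ord j u < terv ord j v := by
  have hne : rkf ord u ≠ rkf ord v := fun hh => h (rkf_inj hord hh)
  rcases hne.lt_or_gt with h' | h'
  · exact ⟨true, by simpa [terv] using h'⟩
  · refine ⟨false, ?_⟩
    have h1 := rkf_le ord u
    simp only [terv, if_neg Bool.false_ne_true]
    omega

lemma sepDim_le_of_family {V : Type*} (G : SimpleGraph V) {I : Type} [Fintype I]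
    (F : I → V → ℕ) (h1 : ∀ i, Function.Injective (F i))
    (h2 : ∀ a b c d : V, G.Adj a b → G.Adj c d → a ≠ c → a ≠ d → b ≠ c → b ≠ d →
      ∃ i, (F i a < F i c ∧ F i a < F i d ∧ F i b < F i c ∧ F i b < F i d) ∨
           (F i c < F i a ∧ F i d < F i a ∧ F i c < F i b ∧ F i d < F i b)) :
    sepDim G ≤ Fintype.card I := by
  apply Nat.sInf_le
  refine ⟨fun i => F ((Fintype.equivFin I).symm i), fun i => h1 _, ?_⟩
  intro a b c d ha hb h3 h4 h5 h6
  obtain ⟨i, hi⟩ := h2 a b c d ha hb h3 h4 h5 h6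
  exact ⟨Fintype.equivFin I i, by simpa using hi⟩

end SepHelper

/-- If `G` is a `k`-degenerate graph on `n` vertices and there is a 3-suitable family
of permutations of `[n]` of cardinality `r`, then `π(G) ≤ 4·k·r`. -/
theorem stmt1 (n k r : ℕ) (G : SimpleGraph (Fin n)) (hG : Degenerate G k)
    (E : Fin r → Equiv.Perm (Fin n)) (hE : ThreeSuitable E) :
    sepDim G ≤ 4 * k * r := by
  classical
  obtain ⟨ord, hord, hdeg⟩ := hG
  by_cases hpair : ∃ a b c d : Fin n, G.Adj a b ∧ G.Adj c d ∧ a ≠ c ∧ a ≠ d ∧ b ≠ c ∧ b ≠ d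
  swap
  · -- no two disjoint edges at all
    apply Nat.sInf_le
    exact ⟨fun _ v => SepHelper.rkf ord v, fun _ => SepHelper.rkf_inj hord,
      fun a b c d h1 h2 h3 h4 h5 h6 =>
        absurd ⟨a, b, c, d, h1, h2, h3, h4, h5, h6⟩ hpair⟩
  obtain ⟨a₀, b₀, c₀, d₀, hab₀, hcd₀, hac₀, had₀, hbc₀, hbd₀⟩ := hpair
  have hk : 0 < k := by
    have hne : ord a₀ ≠ ord b₀ := fun h => hab₀.ne (hord h)
    rcases hne.lt_or_gt with h | h
    · haveI : Nonempty {u // G.Adj a₀ u ∧ ord a₀ < ord u} := ⟨⟨b₀, hab₀, h⟩⟩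
      exact lt_of_lt_of_le Nat.card_pos (hdeg a₀)
    · haveI : Nonempty {u // G.Adj b₀ u ∧ ord b₀ < ord u} := ⟨⟨a₀, hab₀.symm, h⟩⟩
      exact lt_of_lt_of_le Nat.card_pos (hdeg b₀)
  -- a labelling of the out-edges of each vertex with labels in `Fin k`
  have hemb : ∀ v : Fin n, Nonempty ({u // G.Adj v u ∧ ord v < ord u} ↪ Fin k) := by
    intro v
    haveI : Fintype {u // G.Adj v u ∧ ord v < ord u} := Fintype.ofFinite _
    apply Function.Embedding.nonempty_of_card_le
    rw [Fintype.card_fin, ← Nat.card_eq_fintype_card]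
    exact hdeg v
  set lab : Fin n → Fin n → Fin k := fun v u =>
    if h : G.Adj v u ∧ ord v < ord u then (hemb v).some ⟨u, h⟩ else ⟨0, hk⟩ with hlab
  have hlabinj : ∀ v u u', (G.Adj v u ∧ ord v < ord u) → (G.Adj v u' ∧ ord v < ord u') →
      lab v u = lab v u' → u = u' := by
    intro v u u' h h' heq
    simp only [hlab, dif_pos h, dif_pos h'] at heq
    have := (hemb v).some.injective heq
    exact congrArg Subtype.val this
  set hasP : Fin k → Fin n → Prop :=
    fun t v => ∃ u, (G.Adj v u ∧ ord v < ord u) ∧ lab v u = t with hhasP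
  set parf : Fin k → Fin n → Fin n :=
    fun t v => if h : hasP t v then h.choose else v with hparf
  have parf_spec : ∀ t v, hasP t v →
      (G.Adj v (parf t v) ∧ ord v < ord (parf t v)) ∧ lab v (parf t v) = t := by
    intro t v h
    simp only [hparf, dif_pos h]
    exact h.choose_spec
  have parf_eq : ∀ v u, (G.Adj v u ∧ ord v < ord u) → parf (lab v u) v = u := by
    intro v u h
    have hP : hasP (lab v u) v := ⟨u, h, rfl⟩
    have hs := parf_spec _ _ hP
    exact hlabinj v _ u hs.1 h hs.2
  have hmono : ∀ t v, hasP t v → ord v < ord (parf t v) := fun t v h => (parf_spec t v h).1.2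
  -- the family of orders
  set F : (Fin k × Fin r × Bool × Bool) → Fin n → ℕ := fun q =>
    SepHelper.keyF (⇑(E q.2.1)) ord (hasP q.1) (parf q.1) q.2.2.1 q.2.2.2 with hF
  have hFinj : ∀ q, Function.Injective (F q) := by
    intro q
    simp only [hF]
    exact SepHelper.keyF_inj hord
  have twoSuit : ∀ x w z1 z2 : Fin n, x ≠ w → z1 ≠ x → z2 ≠ x → z1 ≠ z2 →
      ∃ i, E i w < E i x := by
    intro x w z1 z2 hxw hz1 hz2 hz12
    by_cases h : w = z1
    · obtain ⟨i, h1, _⟩ := hE x w z2 hxw hz2.symm (by rw [h]; exact hz12)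
      exact ⟨i, h1⟩
    · obtain ⟨i, h1, _⟩ := hE x w z1 hxw hz1.symm (fun hh => h hh)
      exact ⟨i, h1⟩
  -- the main separation claim, for oriented edges
  have sep : ∀ a b c d : Fin n, G.Adj a b → G.Adj c d → a ≠ c → a ≠ d → b ≠ c → b ≠ d →
      ord a < ord b → ord c < ord d →
      ∃ q, (F q a < F q c ∧ F q a < F q d ∧ F q b < F q c ∧ F q b < F q d) ∨
           (F q c < F q a ∧ F q d < F q a ∧ F q c < F q b ∧ F q d < F q b) := by
    intro a b c d hab hcd hac had hbc hbd hoab hocd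
    have hedge : G.Adj a b ∧ ord a < ord b := ⟨hab, hoab⟩
    set t : Fin k := lab a b with ht
    have hPa : hasP t a := ⟨b, hedge, rfl⟩
    have hparA : parf t a = b := parf_eq a b hedge
    set p : Bool := SepHelper.gcol (hasP t) (parf t) a with hp
    have hpullA : SepHelper.pulled (hasP t) (parf t) p a := ⟨hPa, rfl⟩
    have hBa : SepHelper.Bmap (hasP t) (parf t) p a = b := by
      rw [SepHelper.Bmap, if_pos hpullA, hparA]
    have hgb : SepHelper.gcol (hasP t) (parf t) b ≠ p := by
      have hh := SepHelper.gcol_prop ord (hasP t) (parf t) (hmono t) hPa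
      rw [hparA] at hh
      rw [hp, hh]
      exact fun hcontra => (Bool.not_ne_self _) hcontra.symm
    have hnpullB : ¬ SepHelper.pulled (hasP t) (parf t) p b := fun h => hgb h.2
    have hBb : SepHelper.Bmap (hasP t) (parf t) p b = b := by
      rw [SepHelper.Bmap, if_neg hnpullB]
    by_cases hc' : SepHelper.Bmap (hasP t) (parf t) p c = b
    · by_cases hd' : SepHelper.Bmap (hasP t) (parf t) p d = b
      · -- Case A3 : both c and d are pulled onto b; switch to the edge cd
        have hpullC : SepHelper.pulled (hasP t) (parf t) p c := by
          by_contra h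
          rw [SepHelper.Bmap, if_neg h] at hc'
          exact hbc hc'.symm
        have hpullD : SepHelper.pulled (hasP t) (parf t) p d := by
          by_contra h
          rw [SepHelper.Bmap, if_neg h] at hd'
          exact hbd hd'.symm
        have hparC : parf t c = b := by
          rw [SepHelper.Bmap, if_pos hpullC] at hc'; exact hc'
        have hparD : parf t d = b := by
          rw [SepHelper.Bmap, if_pos hpullD] at hd'; exact hd'
        have hocb : ord c < ord b := by
          have := hmono t c hpullC.1; rwa [hparC] at this
        have hodb : ord d < ord b := by
          have := hmono t d hpullD.1; rwa [hparD] at this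
        have hedge' : G.Adj c d ∧ ord c < ord d := ⟨hcd, hocd⟩
        set t' : Fin k := lab c d with ht'
        have hPc : hasP t' c := ⟨d, hedge', rfl⟩
        have hparC' : parf t' c = d := parf_eq c d hedge'
        set p' : Bool := SepHelper.gcol (hasP t') (parf t') c with hp'
        have hpullC' : SepHelper.pulled (hasP t') (parf t') p' c := ⟨hPc, rfl⟩
        have hBc' : SepHelper.Bmap (hasP t') (parf t') p' c = d := by
          rw [SepHelper.Bmap, if_pos hpullC', hparC']
        have hgd : SepHelper.gcol (hasP t') (parf t') d ≠ p' := by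
          have hh := SepHelper.gcol_prop ord (hasP t') (parf t') (hmono t') hPc
          rw [hparC'] at hh
          rw [hp', hh]
          exact fun hcontra => (Bool.not_ne_self _) hcontra.symm
        have hnpullD' : ¬ SepHelper.pulled (hasP t') (parf t') p' d := fun h => hgd h.2
        have hBd' : SepHelper.Bmap (hasP t') (parf t') p' d = d := by
          rw [SepHelper.Bmap, if_neg hnpullD']
        have hBbne : SepHelper.Bmap (hasP t') (parf t') p' b ≠ d := by
          intro h
          by_cases hb : SepHelper.pulled (hasP t') (parf t') p' b
          · rw [SepHelper.Bmap, if_pos hb] at h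
            have := hmono t' b hb.1
            rw [h] at this
            exact absurd this (not_lt.mpr hodb.le)
          · rw [SepHelper.Bmap, if_neg hb] at h
            exact hbd h
        by_cases ha' : SepHelper.Bmap (hasP t') (parf t') p' a = d
        · -- Case B2 : a is also pulled onto d
          have hpullA' : SepHelper.pulled (hasP t') (parf t') p' a := by
            by_contra hh
            rw [SepHelper.Bmap, if_neg hh] at ha'
            exact had ha'
          obtain ⟨j, hj⟩ := SepHelper.exists_ter hord hac
          obtain ⟨i, hi⟩ := twoSuit d (SepHelper.Bmap (hasP t') (parf t') p' b) a c
            (fun h => hBbne h.symm) had hcd.ne hac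
          refine ⟨(t', i, p', j), Or.inl ⟨?_, ?_, ?_, ?_⟩⟩ <;> simp only [hF]
          · apply SepHelper.keyF_lt_ter
            · rw [ha', hBc']
            · simp only [SepHelper.midv, if_pos hpullA', if_pos hpullC']
            · exact hj
          · apply SepHelper.keyF_lt_mid
            · rw [ha', hBd']
            · exact hpullA'
            · exact hnpullD'
          · apply SepHelper.keyF_lt_primary
            rw [hBc']
            exact hi
          · apply SepHelper.keyF_lt_primary
            rw [hBd']
            exact hi
        · -- Case B1 : neither a nor b is pulled onto d
          have hEx : ∃ i, E i (SepHelper.Bmap (hasP t') (parf t') p' a) < E i d ∧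
              E i (SepHelper.Bmap (hasP t') (parf t') p' b) < E i d := by
            by_cases heq : SepHelper.Bmap (hasP t') (parf t') p' a
                = SepHelper.Bmap (hasP t') (parf t') p' b
            · obtain ⟨i, h1⟩ := twoSuit d (SepHelper.Bmap (hasP t') (parf t') p' a) a c
                (fun h => ha' h.symm) had hcd.ne hac
              exact ⟨i, h1, heq ▸ h1⟩
            · obtain ⟨i, h1, h2⟩ := hE d (SepHelper.Bmap (hasP t') (parf t') p' a)
                (SepHelper.Bmap (hasP t') (parf t') p' b)
                (fun h => ha' h.symm) (fun h => hBbne h.symm) heq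
              exact ⟨i, h1, h2⟩
          obtain ⟨i, h1, h2⟩ := hEx
          refine ⟨(t', i, p', true), Or.inl ⟨?_, ?_, ?_, ?_⟩⟩ <;> simp only [hF] <;>
            apply SepHelper.keyF_lt_primary
          · rw [hBc']; exact h1
          · rw [hBd']; exact h1
          · rw [hBc']; exact h2
          · rw [hBd']; exact h2
      · -- Case A2 : c pulled onto b, d not
        have hpullC : SepHelper.pulled (hasP t) (parf t) p c := by
          by_contra h
          rw [SepHelper.Bmap, if_neg h] at hc'
          exact hbc hc'.symm
        obtain ⟨j, hj⟩ := SepHelper.exists_ter hord (fun h : c = a => hac h.symm)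
        obtain ⟨i, hi⟩ := twoSuit b (SepHelper.Bmap (hasP t) (parf t) p d) a c
          (fun h => hd' h.symm) hab.ne (Ne.symm hbc) hac
        refine ⟨(t, i, p, j), Or.inr ⟨?_, ?_, ?_, ?_⟩⟩ <;> simp only [hF]
        · apply SepHelper.keyF_lt_ter
          · rw [hc', hBa]
          · simp only [SepHelper.midv, if_pos hpullC, if_pos hpullA]
          · exact hj
        · apply SepHelper.keyF_lt_primary
          rw [hBa]
          exact hi
        · apply SepHelper.keyF_lt_mid
          · rw [hc', hBb]
          · exact hpullC
          · exact hnpullB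
        · apply SepHelper.keyF_lt_primary
          rw [hBb]
          exact hi
    · by_cases hd' : SepHelper.Bmap (hasP t) (parf t) p d = b
      · -- Case A2' : d pulled onto b, c not
        have hpullD : SepHelper.pulled (hasP t) (parf t) p d := by
          by_contra h
          rw [SepHelper.Bmap, if_neg h] at hd'
          exact hbd hd'.symm
        obtain ⟨j, hj⟩ := SepHelper.exists_ter hord (fun h : d = a => had h.symm)
        obtain ⟨i, hi⟩ := twoSuit b (SepHelper.Bmap (hasP t) (parf t) p c) a d
          (fun h => hc' h.symm) hab.ne (Ne.symm hbd) had
        refine ⟨(t, i, p, j), Or.inr ⟨?_, ?_, ?_, ?_⟩⟩ <;> simp only [hF]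
        · apply SepHelper.keyF_lt_primary
          rw [hBa]
          exact hi
        · apply SepHelper.keyF_lt_ter
          · rw [hd', hBa]
          · simp only [SepHelper.midv, if_pos hpullD, if_pos hpullA]
          · exact hj
        · apply SepHelper.keyF_lt_primary
          rw [hBb]
          exact hi
        · apply SepHelper.keyF_lt_mid
          · rw [hd', hBb]
          · exact hpullD
          · exact hnpullB
      · -- Case A1 : neither c nor d is pulled onto b
        have hEx : ∃ i, E i (SepHelper.Bmap (hasP t) (parf t) p c) < E i b ∧
            E i (SepHelper.Bmap (hasP t) (parf t) p d) < E i b := by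
          by_cases heq : SepHelper.Bmap (hasP t) (parf t) p c
              = SepHelper.Bmap (hasP t) (parf t) p d
          · obtain ⟨i, h1⟩ := twoSuit b (SepHelper.Bmap (hasP t) (parf t) p c) a c
              (fun h => hc' h.symm) hab.ne (Ne.symm hbc) hac
            exact ⟨i, h1, heq ▸ h1⟩
          · obtain ⟨i, h1, h2⟩ := hE b (SepHelper.Bmap (hasP t) (parf t) p c)
              (SepHelper.Bmap (hasP t) (parf t) p d)
              (fun h => hc' h.symm) (fun h => hd' h.symm) heq
            exact ⟨i, h1, h2⟩
        obtain ⟨i, h1, h2⟩ := hEx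
        refine ⟨(t, i, p, true), Or.inr ⟨?_, ?_, ?_, ?_⟩⟩ <;> simp only [hF] <;>
          apply SepHelper.keyF_lt_primary
        · rw [hBa]; exact h1
        · rw [hBa]; exact h2
        · rw [hBb]; exact h1
        · rw [hBb]; exact h2
  -- remove the orientation assumption
  have hsep : ∀ a b c d : Fin n, G.Adj a b → G.Adj c d → a ≠ c → a ≠ d → b ≠ c → b ≠ d →
      ∃ q, (F q a < F q c ∧ F q a < F q d ∧ F q b < F q c ∧ F q b < F q d) ∨
           (F q c < F q a ∧ F q d < F q a ∧ F q c < F q b ∧ F q d < F q b) := by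
    intro a b c d h1 h2 h3 h4 h5 h6
    have hne1 : ord a ≠ ord b := fun h => h1.ne (hord h)
    have hne2 : ord c ≠ ord d := fun h => h2.ne (hord h)
    rcases hne1.lt_or_gt with h7 | h7 <;> rcases hne2.lt_or_gt with h8 | h8
    · exact sep a b c d h1 h2 h3 h4 h5 h6 h7 h8
    · obtain ⟨q, hq⟩ := sep a b d c h1 h2.symm h4 h3 h6 h5 h7 h8
      exact ⟨q, by tauto⟩
    · obtain ⟨q, hq⟩ := sep b a c d h1.symm h2 h5 h6 h3 h4 h7 h8
      exact ⟨q, by tauto⟩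
    · obtain ⟨q, hq⟩ := sep b a d c h1.symm h2.symm h6 h5 h4 h3 h7 h8
      exact ⟨q, by tauto⟩
  calc sepDim G ≤ Fintype.card (Fin k × Fin r × Bool × Bool) :=
        SepHelper.sepDim_le_of_family G F hFinj hsep
    _ = 4 * k * r := by
        simp only [Fintype.card_prod, Fintype.card_fin, Fintype.card_bool]
        ring
end

section
/- Every k-degenerate finite simple graph G has star arboricity at most 2k; that is, the edge set of G can be covered by at most 2k spanning star forests. -/
/-- A star forest: an acyclic graph containing no path on four distinct vertices,
i.e. a forest each of whose components is a star. -/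
def IsStarForest {V : Type*} (H : SimpleGraph V) : Prop :=
  H.IsAcyclic ∧
  ∀ a b c d : V, H.Adj a b → H.Adj b c → H.Adj c d → a ≠ c → a ≠ d → b ≠ d → False

/-- The star arboricity of `G`: the minimum number of spanning star forests of `G`
whose union covers all edges of `G`. -/
noncomputable def starArboricity {V : Type*} (G : SimpleGraph V) : ℕ :=
  sInf {m : ℕ | ∃ H : Fin m → SimpleGraph V,
    (∀ i, H i ≤ G ∧ IsStarForest (H i)) ∧ ∀ u v, G.Adj u v → ∃ i, (H i).Adj u v}


open SimpleGraph

section StarAux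
variable {V : Type*}

/-- The chosen "parent" of `v` in colour `c`. -/
noncomputable def spar (G : SimpleGraph V) (ord : V → ℕ) (col : V → V → ℕ) (c : ℕ) (v : V) :
    Option V :=
  @dite _ (∃ u, G.Adj v u ∧ ord v < ord u ∧ col v u = c) (Classical.propDecidable _)
    (fun h => some h.choose) (fun _ => none)

lemma spar_spec {G : SimpleGraph V} {ord : V → ℕ} {col : V → V → ℕ} {c : ℕ} {v u : V}
    (h : spar G ord col c v = some u) :
    G.Adj v u ∧ ord v < ord u ∧ col v u = c := by
  unfold spar at h
  split at h
  · next hex =>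
    have : hex.choose = u := by injection h
    exact this ▸ hex.choose_spec
  · simp at h

/-- depth with fuel -/
def dAux (f : V → Option V) : ℕ → V → ℕ
  | 0, _ => 0
  | n + 1, v =>
    match f v with
    | none => 0
    | some u => dAux f n u + 1

lemma dAux_stable (f : V → Option V) (m : V → ℕ)
    (hf : ∀ v u, f v = some u → m u < m v) :
    ∀ n n' v, m v < n → m v < n' → dAux f n v = dAux f n' v := by
  intro n
  induction n with
  | zero => intro n' v h; omega
  | succ n ih =>
    intro n' v h h'
    obtain ⟨n', rfl⟩ : ∃ t, n' = t + 1 := ⟨n' - 1, by omega⟩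
    cases hfv : f v with
    | none => simp [dAux, hfv]
    | some u =>
      have hlt := hf v u hfv
      simp only [dAux, hfv]
      rw [ih n' u (by omega) (by omega)]

noncomputable def sdepth (f : V → Option V) (m : V → ℕ) (v : V) : ℕ := dAux f (m v + 1) v

lemma dAux_succ (f : V → Option V) (n : ℕ) (v u : V) (h : f v = some u) :
    dAux f (n + 1) v = dAux f n u + 1 := by
  simp [dAux, h]

lemma sdepth_step (f : V → Option V) (m : V → ℕ)
    (hf : ∀ v u, f v = some u → m u < m v) (v u : V) (h : f v = some u) :
    sdepth f m v = sdepth f m u + 1 := by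
  have hlt := hf v u h
  unfold sdepth
  rw [dAux_succ f (m v) v u h,
    dAux_stable f m hf (m v) (m u + 1) u (by omega) (by omega)]

lemma walk_support_eq_map {G : SimpleGraph V} {u v : V} (p : G.Walk u v) :
    p.support = (List.range (p.length + 1)).map p.getVert := by
  induction p with
  | nil => simp [SimpleGraph.Walk.getVert]
  | cons h q ih =>
    rw [SimpleGraph.Walk.support_cons, ih, SimpleGraph.Walk.length_cons]
    conv_rhs => rw [List.range_succ_eq_map]
    simp only [List.map_cons, List.map_map]
    rfl

lemma cycle_getVert_ne {G : SimpleGraph V} {v : V} {p : G.Walk v v} (hp : p.IsCycle)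
    {i j : ℕ} (hi : 1 ≤ i) (hij : i < j) (hj : j ≤ p.length) :
    p.getVert i ≠ p.getVert j := by
  have hnd : p.support.tail.Nodup := hp.support_nodup
  have htail : p.support.tail = (List.range p.length).map (fun t => p.getVert (t + 1)) := by
    rw [walk_support_eq_map, List.range_succ_eq_map]
    simp [List.map_map, Function.comp]
  rw [htail] at hnd
  intro hEq
  have hlen : ((List.range p.length).map (fun t => p.getVert (t + 1))).length = p.length := by
    simp
  have hi' : i - 1 < ((List.range p.length).map (fun t => p.getVert (t + 1))).length := by
    rw [hlen]; omega
  have hj' : j - 1 < ((List.range p.length).map (fun t => p.getVert (t + 1))).length := by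
    rw [hlen]; omega
  have hgi : ((List.range p.length).map (fun t => p.getVert (t + 1)))[i - 1] = p.getVert i := by
    simp only [List.getElem_map, List.getElem_range]
    congr 1; omega
  have hgj : ((List.range p.length).map (fun t => p.getVert (t + 1)))[j - 1] = p.getVert j := by
    simp only [List.getElem_map, List.getElem_range]
    congr 1; omega
  have : i - 1 = j - 1 := (hnd.getElem_inj_iff).mp (by rw [hgi, hgj]; exact hEq)
  omega

theorem aux_main [Fintype V] (k : ℕ) (G : SimpleGraph V) (ord : V → ℕ)
    (hord : Function.Injective ord) (col : V → V → ℕ)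
    (hlt : ∀ v u, G.Adj v u → ord v < ord u → col v u < k)
    (hinj : ∀ v u u', G.Adj v u → ord v < ord u → G.Adj v u' → ord v < ord u' →
      col v u = col v u' → u = u') :
    starArboricity G ≤ 2 * k := by
  classical
  -- measure
  set m : V → ℕ := fun v => (Finset.univ.filter fun w => ord v < ord w).card with hm
  have hmlt : ∀ v u : V, ord v < ord u → m u < m v := by
    intro v u h
    apply Finset.card_lt_card
    constructor
    · intro w hw
      simp only [Finset.mem_filter, Finset.mem_univ, true_and] at *
      omega
    · intro hsub
      have hu : u ∈ Finset.univ.filter fun w => ord v < ord w := by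
        simp only [Finset.mem_filter, Finset.mem_univ, true_and]; exact h
      have := hsub hu
      simp only [Finset.mem_filter, Finset.mem_univ, true_and] at this
      omega
  have hf : ∀ c (v u : V), spar G ord col c v = some u → m u < m v :=
    fun c v u h => hmlt _ _ (spar_spec h).2.1
  set d : ℕ → V → ℕ := fun c => sdepth (spar G ord col c) m with hd'
  have hd : ∀ c (v u : V), spar G ord col c v = some u → d c v = d c u + 1 :=
    fun c v u h => sdepth_step _ _ (hf c) _ _ h
  set Srel : ℕ → Bool → V → V → Prop :=
    fun c b v u => spar G ord col c v = some u ∧ d c u % 2 = cond b 1 0 with hSrel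
  set H : Fin (2 * k) → SimpleGraph V :=
    fun i => SimpleGraph.fromRel (Srel (i.val % k) (decide (i.val < k))) with hH
  -- basic facts about Srel
  have hS : ∀ c b (x y : V), Srel c b x y →
      G.Adj x y ∧ d c x % 2 ≠ cond b 1 0 ∧ d c y % 2 = cond b 1 0 := by
    intro c b x y hxy
    obtain ⟨h1, h2⟩ := hxy
    have hsp := spar_spec h1
    have hstep := hd c x y h1
    exact ⟨hsp.1, by omega, h2⟩
  have huniq : ∀ c b (x y z : V), Srel c b x y → Srel c b x z → y = z := by
    intro c b x y z h1 h2
    have := h1.1.symm.trans h2.1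
    exact Option.some_inj.mp this
  have hL : ∀ c b (x y : V), (SimpleGraph.fromRel (Srel c b)).Adj x y →
      d c x % 2 ≠ cond b 1 0 → Srel c b x y := by
    intro c b x y hxy hx
    obtain ⟨hne, h | h⟩ := hxy
    · exact h
    · exact absurd (hS c b y x h).2.2 hx
  -- star forest property
  have key : ∀ c b, SimpleGraph.fromRel (Srel c b) ≤ G ∧
      IsStarForest (SimpleGraph.fromRel (Srel c b)) := by
    intro c b
    refine ⟨?_, ?_, ?_⟩
    · intro x y hxy
      obtain ⟨hne, h | h⟩ := hxy
      · exact (hS c b x y h).1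
      · exact ((hS c b y x h).1).symm
    · -- acyclic
      intro v p hp
      have h3 := hp.three_le_length
      have e01 : (SimpleGraph.fromRel (Srel c b)).Adj (p.getVert 0) (p.getVert 1) :=
        p.adj_getVert_succ (by omega)
      have e12 : (SimpleGraph.fromRel (Srel c b)).Adj (p.getVert 1) (p.getVert 2) :=
        p.adj_getVert_succ (by omega)
      have e23 : (SimpleGraph.fromRel (Srel c b)).Adj (p.getVert 2) (p.getVert 3) :=
        p.adj_getVert_succ (by omega)
      rcases e12.2 with h | h
      · -- Srel (a1) (a2), so a1 is not a head
        have hx := (hS c b _ _ h).2.1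
        have h02 : p.getVert 0 = p.getVert 2 :=
          huniq c b _ _ _ (hL c b _ _ e01.symm hx) h
        have h0n : p.getVert 0 = p.getVert p.length := by
          rw [p.getVert_zero, p.getVert_length]
        exact cycle_getVert_ne hp (i := 2) (j := p.length) (by omega) (by omega) le_rfl
          (h02.symm.trans h0n)
      · -- Srel (a2) (a1), so a2 is not a head
        have hx := (hS c b _ _ h).2.1
        have h13 : p.getVert 1 = p.getVert 3 :=
          huniq c b _ _ _ h (hL c b _ _ e23 hx)
        exact cycle_getVert_ne hp (i := 1) (j := 3) le_rfl (by omega) (by omega) h13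
    · -- no P4
      intro a x y z hax hxy hyz hay haz hxz
      rcases hxy.2 with h | h
      · -- Srel x y : x is not a head
        have hx := (hS c b _ _ h).2.1
        exact hay (huniq c b _ _ _ (hL c b _ _ hax.symm hx) h)
      · -- Srel y x : y is not a head
        have hy := (hS c b _ _ h).2.1
        exact hxz (huniq c b _ _ _ (hL c b _ _ hxy.symm hy) (hL c b _ _ hyz hy))
  -- coverage
  have main : ∀ u v : V, G.Adj u v → ord u < ord v → ∃ i, (H i).Adj u v := by
    intro u v huv hlt'
    have hc : col u v < k := hlt u v huv hlt'
    have hfuv : spar G ord col (col u v) u = some v := by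
      unfold spar
      have hex : ∃ w, G.Adj u w ∧ ord u < ord w ∧ col u w = col u v := ⟨v, huv, hlt', rfl⟩
      rw [dif_pos hex]
      have hch := hex.choose_spec
      exact congrArg some (hinj u _ v hch.1 hch.2.1 huv hlt' hch.2.2)
    by_cases hb : d (col u v) v % 2 = 1
    · refine ⟨⟨col u v, by omega⟩, ?_⟩
      have h1 : (⟨col u v, by omega⟩ : Fin (2 * k)).val % k = col u v := Nat.mod_eq_of_lt hc
      have h2 : decide ((⟨col u v, by omega⟩ : Fin (2 * k)).val < k) = true := by
        simpa using hc
      rw [hH]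
      simp only [h1, h2]
      exact ⟨huv.ne, Or.inl ⟨hfuv, by simpa using hb⟩⟩
    · refine ⟨⟨col u v + k, by omega⟩, ?_⟩
      have h1 : (⟨col u v + k, by omega⟩ : Fin (2 * k)).val % k = col u v := by
        simp [Nat.add_mod_right, Nat.mod_eq_of_lt hc]
      have h2 : decide ((⟨col u v + k, by omega⟩ : Fin (2 * k)).val < k) = false := by
        simp
      rw [hH]
      simp only [h1, h2]
      exact ⟨huv.ne, Or.inl ⟨hfuv, by simpa using Nat.mod_two_ne_one.mp hb⟩⟩
  apply Nat.sInf_le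
  refine ⟨H, fun i => key _ _, ?_⟩
  intro u v huv
  rcases lt_trichotomy (ord u) (ord v) with h | h | h
  · exact main u v huv h
  · exact absurd (hord h) huv.ne
  · obtain ⟨i, hi⟩ := main v u huv.symm h
    exact ⟨i, hi.symm⟩

end StarAux

/-- Every `k`-degenerate finite simple graph has star arboricity at most `2k`. -/
theorem stmt2 {V : Type*} [Fintype V] (k : ℕ) (G : SimpleGraph V)
    (hG : Degenerate G k) : starArboricity G ≤ 2 * k := by
  classical
  obtain ⟨ord, hord, hcard⟩ := hG
  have hemb : ∀ v : V, ∃ g : {u : V // G.Adj v u ∧ ord v < ord u} → Fin k,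
      Function.Injective g := by
    intro v
    have h1 : Nat.card {u : V // G.Adj v u ∧ ord v < ord u} ≤ k := hcard v
    letI := Fintype.ofFinite {u : V // G.Adj v u ∧ ord v < ord u}
    rw [Nat.card_eq_fintype_card] at h1
    obtain ⟨g⟩ := Function.Embedding.nonempty_of_card_le
      (α := {u : V // G.Adj v u ∧ ord v < ord u}) (β := Fin k)
      (by simpa using h1)
    exact ⟨g, g.injective⟩
  choose gfun hginj using hemb
  set col : V → V → ℕ := fun v u =>
    if h : G.Adj v u ∧ ord v < ord u then (gfun v ⟨u, h⟩).val else 0 with hcol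
  apply aux_main k G ord hord col
  · intro v u ha ho
    rw [hcol]
    simp only
    rw [dif_pos ⟨ha, ho⟩]
    exact (gfun v ⟨u, ⟨ha, ho⟩⟩).isLt
  · intro v u u' ha ho ha' ho' hcc
    rw [hcol] at hcc
    simp only at hcc
    rw [dif_pos ⟨ha, ho⟩, dif_pos ⟨ha', ho'⟩] at hcc
    have := hginj v (Fin.val_injective hcc)
    exact Subtype.mk_eq_mk.mp this
end

section
/- Every k-degenerate finite simple graph G has arboricity at most k; that is, the edge set of G can be partitioned into at most k spanning forests. -/
/-- The arboricity of `G`: the minimum number of spanning forests of `G`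
whose union covers all edges of `G`. -/
noncomputable def arboricity {V : Type*} (G : SimpleGraph V) : ℕ :=
  sInf {m : ℕ | ∃ H : Fin m → SimpleGraph V,
    (∀ i, H i ≤ G ∧ (H i).IsAcyclic) ∧ ∀ u v, G.Adj u v → ∃ i, (H i).Adj u v}

namespace SimpleGraph

variable {V α ι : Type*} [LinearOrder α]

theorem isAcyclic_of_subsingleton_upNeighbors (H : SimpleGraph V) {f : V → α}
    (hf : Function.Injective f) (hup : ∀ a, {b | H.Adj a b ∧ f a < f b}.Subsingleton) :
    H.IsAcyclic := by
  classical
  intro v c hc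
  obtain ⟨u, hu, hmin⟩ := c.support.toFinset.exists_min_image f ⟨v, by simp⟩
  set c' := c.rotate u (List.mem_toFinset.1 hu)
  have hc' : c'.IsCycle := hc.rotate _
  have above : ∀ {x}, x ∈ c'.support → H.Adj u x → f u < f x := fun hx hadj =>
    (hmin _ (by simpa [c'] using hx)).lt_of_ne (hf.ne hadj.ne)
  have hsnd := c'.adj_snd hc'.not_nil
  have hpen := (c'.adj_penultimate hc'.not_nil).symm
  exact hc'.snd_ne_penultimate <| hup u
    ⟨hsnd, above (c'.getVert_mem_support _) hsnd⟩ ⟨hpen, above (c'.getVert_mem_support _) hpen⟩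

def upLabelGraph (G : SimpleGraph V) (f : V → α) (c : ∀ v, {u // G.Adj v u ∧ f v < f u} → ι)
    (i : ι) : SimpleGraph V :=
  fromRel fun a b => ∃ h, c a ⟨b, h⟩ = i

variable {G : SimpleGraph V} {f : V → α} {c : ∀ v, {u // G.Adj v u ∧ f v < f u} → ι}

theorem upLabelGraph_adj_of_lt {i : ι} {a b : V} (hab : f a < f b) :
    (G.upLabelGraph f c i).Adj a b ↔ ∃ h, c a ⟨b, h⟩ = i := by
  refine ⟨?_, fun ⟨h, hi⟩ => (fromRel_adj _ a b).2 ⟨h.1.ne, .inl ⟨h, hi⟩⟩⟩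
  rintro ⟨-, hr | ⟨h, -⟩⟩
  · exact hr
  · exact absurd h.2 hab.not_gt

theorem upLabelGraph_le (i : ι) : G.upLabelGraph f c i ≤ G := by
  rintro a b ⟨-, ⟨h, -⟩ | ⟨h, -⟩⟩
  exacts [h.1, h.1.symm]

theorem upLabelGraph_isAcyclic (hf : Function.Injective f) (hc : ∀ v, Function.Injective (c v))
    (i : ι) : (G.upLabelGraph f c i).IsAcyclic := by
  refine isAcyclic_of_subsingleton_upNeighbors _ hf fun a b hb b' hb' => ?_
  obtain ⟨h, hi⟩ := (upLabelGraph_adj_of_lt hb.2).1 hb.1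
  obtain ⟨h', hi'⟩ := (upLabelGraph_adj_of_lt hb'.2).1 hb'.1
  exact congrArg Subtype.val (hc a (hi.trans hi'.symm))

theorem exists_upLabelGraph_adj (hf : Function.Injective f) {a b : V} (hab : G.Adj a b) :
    ∃ i, (G.upLabelGraph f c i).Adj a b := by
  rcases (hf.ne hab.ne).lt_or_gt with hlt | hgt
  · exact ⟨_, (upLabelGraph_adj_of_lt hlt).2 ⟨⟨hab, hlt⟩, rfl⟩⟩
  · exact ⟨_, ((upLabelGraph_adj_of_lt hgt).2 ⟨⟨hab.symm, hgt⟩, rfl⟩).symm⟩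

end SimpleGraph

open SimpleGraph in
/-- Every `k`-degenerate finite simple graph has arboricity at most `k`. -/
theorem stmt3 {V : Type*} [Fintype V] (k : ℕ) (G : SimpleGraph V)
    (hG : Degenerate G k) : arboricity G ≤ k := by
  classical
  obtain ⟨ord, hinj, hcard⟩ := hG
  have c : ∀ v, {u // G.Adj v u ∧ ord v < ord u} ↪ Fin k := fun v =>
    (Function.Embedding.nonempty_of_card_le <| by
      simpa only [Fintype.card_fin, Nat.card_eq_fintype_card] using hcard v).some
  exact Nat.sInf_le ⟨G.upLabelGraph ord (fun v => c v),
    fun i => ⟨upLabelGraph_le i, upLabelGraph_isAcyclic hinj (fun v => (c v).injective) i⟩,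
    fun _ _ hab => exists_upLabelGraph_adj hinj hab⟩
end

section
/- Let G be a finite simple graph on n vertices and σ any bijection from V(G) to [n]. Let C_{G,σ} be the set of open intervals (σ(u), σ(v)) over all edges {u,v} of G with σ(u) < σ(v), partially ordered by (a,b) ⊲ (c,d) iff b ≤ c, and let dim(C_{G,σ}) be its order dimension. Then π(G^{1/2}) ≤ dim(C_{G,σ}) + 2, where G^{1/2} is the graph obtained from G by subdividing every edge once. -/
/-- The graph `G^{1/2}` obtained from `G` by subdividing every edge once:
one new vertex for each edge of `G`, adjacent exactly to the two ends of that edge. -/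
def subdiv {V : Type*} (G : SimpleGraph V) : SimpleGraph (V ⊕ ↥G.edgeSet) :=
  SimpleGraph.fromRel fun x y => ∃ (u : V) (e : G.edgeSet),
    x = Sum.inl u ∧ y = Sum.inr e ∧ u ∈ (e : Sym2 V)

/-- A realizer of size `m` of a (strict) partial order `r`: a family of `m` linear
extensions (given as injective rank functions) whose intersection is exactly `r`. -/
def IsRealizer {α : Type*} (r : α → α → Prop) {m : ℕ} (L : Fin m → α → ℕ) : Prop :=
  (∀ i, Function.Injective (L i)) ∧ ∀ x y, r x y ↔ (x ≠ y ∧ ∀ i, L i x < L i y)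

/-- The order dimension of a (strict) partial order `r`: the minimum size of a realizer. -/
noncomputable def orderDim {α : Type*} (r : α → α → Prop) : ℕ :=
  sInf {m : ℕ | ∃ L : Fin m → α → ℕ, IsRealizer r L}

/-- The collection `C_{G,σ}` of open intervals `(σ u, σ v)` over edges `{u,v}` of `G`
with `σ u < σ v`. -/
def CIdx {V : Type*} [Fintype V] (G : SimpleGraph V) (σ : V ≃ Fin (Fintype.card V)) :=
  {p : Fin (Fintype.card V) × Fin (Fintype.card V) //
    ∃ u v : V, G.Adj u v ∧ σ u < σ v ∧ p = (σ u, σ v)}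

/-- The interval order on `C_{G,σ}`: `(a,b) ⊲ (c,d)` iff `b ≤ c`. -/
def CRel {V : Type*} [Fintype V] (G : SimpleGraph V) (σ : V ≃ Fin (Fintype.card V))
    (x y : CIdx G σ) : Prop := x.val.2 ≤ y.val.1

/-!
Let `L₁, …, L_d` realize the interval order `C_{G,σ}`, and let `{u, e}`, `{v, f}` be disjoint
edges of `G^{1/2}` with `u ∈ e`, `v ∈ f` and `σ u < σ v`. One of `d + 2` orders puts `{u, e}`
before `{v, f}`:
* if `v` is the left end of `f`: order by `σ`, placing each subdivision vertex at the left end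
  of its interval;
* if `u`, `v` are the right ends of `e`, `f`: the same with subdivision vertices at right ends;
* otherwise `(σ u, σ v)` is spanned by `e` on the left and `f` on the right, so `f` does not
  precede `e` in `C_{G,σ}` and some `L_i` puts `e` below `f`. Order subdivision vertices by
  `L_i`, and each vertex `x` right after every interval ending at or before `σ x`.

All the comparisons needed are strict, so ties in these orders can be broken arbitrarily.
-/

open Function

section Ranks

variable {α : Type*}

theorem exists_injective_rank_of_strictOrder [Finite α] (t : α → α → Prop)
    (hirr : ∀ x, ¬ t x x) (htrans : ∀ x y z, t x y → t y z → t x z) :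
    ∃ g : α → ℕ, Injective g ∧ ∀ x y, t x y → g x < g y := by
  classical
  have := Fintype.ofFinite α
  let n := Fintype.card α
  let e := Fintype.equivFin α
  let height : α → ℕ := fun x => (Finset.univ.filter fun z => t z x).card
  have height_lt : ∀ x y, t x y → height x < height y := by
    intro x y hxy
    refine Finset.card_lt_card ⟨fun z hz => ?_, fun hsub => ?_⟩
    · simp only [Finset.mem_filter, Finset.mem_univ, true_and] at hz ⊢
      exact htrans z x y hz hxy
    · have := hsub (Finset.mem_filter.2 ⟨Finset.mem_univ x, hxy⟩)
      exact hirr x (Finset.mem_filter.1 this).2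
  -- `e x < n` breaks the ties of the height
  refine ⟨fun x => n * height x + e x, fun x y hxy => ?_, fun x y hxy => ?_⟩
  · have hmod := congrArg (· % n) hxy
    simp only [Nat.mul_add_mod] at hmod
    rw [Nat.mod_eq_of_lt (e x).isLt, Nat.mod_eq_of_lt (e y).isLt] at hmod
    exact e.injective (Fin.ext hmod)
  · have := height_lt x y hxy
    have := (e x).isLt
    nlinarith

theorem exists_linearExtension_swap [Finite α] (r : α → α → Prop)
    (hirr : ∀ x, ¬ r x x) (htrans : ∀ x y z, r x y → r y z → r x z)
    {a b : α} (hab : ¬ r a b) (hne : a ≠ b) :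
    ∃ g : α → ℕ, Injective g ∧ (∀ x y, r x y → g x < g y) ∧ g b < g a := by
  -- `r` with `b < a` added, closed under transitivity
  let t : α → α → Prop := fun x y => r x y ∨ ((x = b ∨ r x b) ∧ (a = y ∨ r a y))
  have hirr_t : ∀ x, ¬ t x x := by
    rintro x (h | ⟨rfl | h₁, rfl | h₂⟩)
    · exact hirr x h
    · exact hne rfl
    · exact hab h₂
    · exact hab h₁
    · exact hab (htrans _ _ _ h₂ h₁)
  have htrans_t : ∀ x y z, t x y → t y z → t x z := by
    rintro x y z (h | ⟨h₁, h₂⟩) (h' | ⟨h₁', h₂'⟩)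
    · exact .inl (htrans _ _ _ h h')
    · refine .inr ⟨?_, h₂'⟩
      rcases h₁' with rfl | h₁'
      · exact .inr h
      · exact .inr (htrans _ _ _ h h₁')
    · refine .inr ⟨h₁, ?_⟩
      rcases h₂ with rfl | h₂
      · exact .inr h'
      · exact .inr (htrans _ _ _ h₂ h')
    · exact .inr ⟨h₁, h₂'⟩
  obtain ⟨g, hg, hgt⟩ := exists_injective_rank_of_strictOrder t hirr_t htrans_t
  exact ⟨g, hg, fun x y h => hgt x y (.inl h), hgt b a (.inr ⟨.inl rfl, .inl rfl⟩)⟩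

theorem exists_isRealizer [Finite α] (r : α → α → Prop)
    (hirr : ∀ x, ¬ r x x) (htrans : ∀ x y z, r x y → r y z → r x z) :
    ∃ m, ∃ L : Fin m → α → ℕ, IsRealizer r L := by
  let P := {p : α × α // ¬ r p.1 p.2 ∧ p.1 ≠ p.2}
  have hswap (p : P) := exists_linearExtension_swap r hirr htrans p.2.1 p.2.2
  choose g hg hgr hgp using hswap
  let e := Finite.equivFin P
  refine ⟨Nat.card P, fun i => g (e.symm i), fun i => hg _, fun x y => ⟨?_, ?_⟩⟩
  · exact fun hxy => ⟨fun h => hirr x (h ▸ hxy), fun i => hgr _ x y hxy⟩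
  · rintro ⟨hne, hlt⟩
    by_contra hxy
    have := hlt (e ⟨(x, y), hxy, hne⟩)
    simp only [Equiv.symm_apply_apply] at this
    exact lt_asymm this (hgp _)

theorem exists_isRealizer_orderDim [Finite α] (r : α → α → Prop)
    (hirr : ∀ x, ¬ r x x) (htrans : ∀ x y z, r x y → r y z → r x z) :
    ∃ L : Fin (orderDim r) → α → ℕ, IsRealizer r L :=
  Nat.sInf_mem (exists_isRealizer r hirr htrans)

theorem IsRealizer.exists_lt_of_not_rel {r : α → α → Prop} {m : ℕ} {L : Fin m → α → ℕ}
    (hL : IsRealizer r L) {x y : α} (hne : x ≠ y) (hyx : ¬ r y x) : ∃ i, L i x < L i y := by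
  by_contra! hle
  exact hyx ((hL.2 y x).2 ⟨hne.symm, fun i => (hle i).lt_of_ne fun h => hne (hL.1 i h.symm)⟩)

end Ranks

section Separation

variable {α β : Type*}

def PairBefore [LT β] (k : α → β) (a b c d : α) : Prop :=
  k a < k c ∧ k a < k d ∧ k b < k c ∧ k b < k d

theorem PairBefore.mono [LT β] {k : α → β} {g : α → ℕ} (hg : ∀ x y, k x < k y → g x < g y)
    {a b c d : α} (h : PairBefore k a b c d) : PairBefore g a b c d :=
  ⟨hg _ _ h.1, hg _ _ h.2.1, hg _ _ h.2.2.1, hg _ _ h.2.2.2⟩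

theorem sepDim_le_of_keys [Finite α] [Preorder β] (G : SimpleGraph α) {m : ℕ}
    (K : Fin m → α → β)
    (hK : ∀ a b c d, G.Adj a b → G.Adj c d → a ≠ c → a ≠ d → b ≠ c → b ≠ d →
      ∃ i, PairBefore (K i) a b c d ∨ PairBefore (K i) c d a b) :
    sepDim G ≤ m := by
  have hrank (i : Fin m) := exists_injective_rank_of_strictOrder (fun x y => K i x < K i y)
    (fun _ => lt_irrefl _) (fun _ _ _ => lt_trans)
  choose g hg hgK using hrank
  refine Nat.sInf_le ⟨g, hg, fun a b c d hab hcd hac had hbc hbd => ?_⟩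
  obtain ⟨i, hi⟩ := hK a b c d hab hcd hac had hbc hbd
  refine ⟨i, hi.imp (·.mono (hgK i)) fun h => ?_⟩
  obtain ⟨hca, hcb, hda, hdb⟩ := h.mono (hgK i)
  exact ⟨hca, hda, hcb, hdb⟩

variable {V : Type*} (G : SimpleGraph V)

theorem subdiv_adj_iff {x y : V ⊕ G.edgeSet} :
    (subdiv G).Adj x y ↔ ∃ u, ∃ e : G.edgeSet, u ∈ (e : Sym2 V) ∧
      (x = .inl u ∧ y = .inr e ∨ x = .inr e ∧ y = .inl u) := by
  simp only [subdiv, SimpleGraph.fromRel_adj]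
  constructor
  · rintro ⟨-, ⟨u, e, rfl, rfl, hu⟩ | ⟨u, e, rfl, rfl, hu⟩⟩
    exacts [⟨u, e, hu, .inl ⟨rfl, rfl⟩⟩, ⟨u, e, hu, .inr ⟨rfl, rfl⟩⟩]
  · rintro ⟨u, e, hu, ⟨rfl, rfl⟩ | ⟨rfl, rfl⟩⟩
    exacts [⟨Sum.inl_ne_inr, .inl ⟨u, e, rfl, rfl, hu⟩⟩,
      ⟨Sum.inr_ne_inl, .inr ⟨u, e, rfl, rfl, hu⟩⟩]

theorem sepDim_subdiv_le_of_keys [Finite V] [Preorder β] {m : ℕ}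
    (K : Fin m → V ⊕ G.edgeSet → β)
    (hK : ∀ u v (e f : G.edgeSet), u ∈ (e : Sym2 V) → v ∈ (f : Sym2 V) → u ≠ v → e ≠ f →
      ∃ i, PairBefore (K i) (.inl u) (.inr e) (.inl v) (.inr f) ∨
        PairBefore (K i) (.inl v) (.inr f) (.inl u) (.inr e)) :
    sepDim (subdiv G) ≤ m := by
  refine sepDim_le_of_keys _ K fun a b c d hab hcd hac had hbc hbd => ?_
  obtain ⟨u, e, hu, hab⟩ := (subdiv_adj_iff G).1 hab
  obtain ⟨v, f, hv, hcd⟩ := (subdiv_adj_iff G).1 hcd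
  have hdisj : u ≠ v ∧ e ≠ f := by
    constructor <;> rintro rfl <;>
      rcases hab with ⟨rfl, rfl⟩ | ⟨rfl, rfl⟩ <;> rcases hcd with ⟨rfl, rfl⟩ | ⟨rfl, rfl⟩ <;>
      simp_all
  obtain ⟨i, hi⟩ := hK u v e f hu hv hdisj.1 hdisj.2
  refine ⟨i, ?_⟩
  rcases hab with ⟨rfl, rfl⟩ | ⟨rfl, rfl⟩ <;> rcases hcd with ⟨rfl, rfl⟩ | ⟨rfl, rfl⟩ <;>
    simp only [PairBefore] at hi ⊢ <;> tauto

end Separation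

theorem Sym2.eq_inf_or_eq_sup_of_mem {α : Type*} [LinearOrder α] {s : Sym2 α} {a : α}
    (h : a ∈ s) : a = s.inf ∨ a = s.sup := by
  induction s with
  | _ x y =>
    rcases le_total x y with hxy | hxy <;> rcases Sym2.mem_iff.1 h with rfl | rfl <;>
      simp [hxy]

section Intervals

variable {V : Type*} [Fintype V] {G : SimpleGraph V} {σ : V ≃ Fin (Fintype.card V)}

instance : Finite (CIdx G σ) := Subtype.finite

noncomputable instance : Fintype (CIdx G σ) := Fintype.ofFinite _

theorem CIdx.fst_lt_snd (x : CIdx G σ) : x.1.1 < x.1.2 := by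
  obtain ⟨u, v, -, h, hx⟩ := x.2
  rw [hx]
  exact h

theorem CRel_irrefl (x : CIdx G σ) : ¬ CRel G σ x x :=
  not_le.2 x.fst_lt_snd

theorem CRel_trans (x y z : CIdx G σ) (hxy : CRel G σ x y) (hyz : CRel G σ y z) :
    CRel G σ x z :=
  hxy.trans (y.fst_lt_snd.le.trans hyz)

variable (σ)

def edgeInterval (e : G.edgeSet) : CIdx G σ :=
  ⟨(((e : Sym2 V).map σ).inf, ((e : Sym2 V).map σ).sup), by
    obtain ⟨e, he⟩ := e
    induction e with
    | _ x y =>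
      have hne : σ x ≠ σ y := σ.injective.ne (G.ne_of_adj he)
      rcases hne.lt_or_gt with h | h
      · exact ⟨x, y, he, h, by simp [h.le]⟩
      · exact ⟨y, x, he.symm, h, by simp [h.le]⟩⟩

variable {σ}

theorem edgeInterval_injective : Injective (edgeInterval (G := G) σ) := by
  intro e f h
  have h' := congrArg Subtype.val h
  simp only [edgeInterval, Prod.mk.injEq] at h'
  exact Subtype.ext (Sym2.map.injective σ.injective (Sym2.inf_eq_inf_and_sup_eq_sup.1 h'))

theorem edgeInterval_eq_or_eq_of_mem {e : G.edgeSet} {u : V} (hu : u ∈ (e : Sym2 V)) :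
    σ u = (edgeInterval σ e).1.1 ∨ σ u = (edgeInterval σ e).1.2 :=
  Sym2.eq_inf_or_eq_sup_of_mem (Sym2.mem_map.2 ⟨u, hu, rfl⟩)

theorem edgeInterval_fst_le_of_mem {e : G.edgeSet} {u : V} (hu : u ∈ (e : Sym2 V)) :
    (edgeInterval σ e).1.1 ≤ σ u := by
  rcases edgeInterval_eq_or_eq_of_mem hu with h | h <;> rw [h]
  exact (edgeInterval σ e).fst_lt_snd.le

end Intervals

section Keys

variable {V : Type*} [Fintype V] {G : SimpleGraph V} (σ : V ≃ Fin (Fintype.card V))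

def leftKey : V ⊕ G.edgeSet → ℕ :=
  Sum.elim (fun x => σ x) fun e => (edgeInterval σ e).1.1

def rightKey : V ⊕ G.edgeSet → ℕ :=
  Sum.elim (fun x => σ x) fun e => (edgeInterval σ e).1.2

noncomputable def reach (ℓ : CIdx G σ → ℕ) (p : Fin (Fintype.card V)) : ℕ :=
  (Finset.univ.filter fun x : CIdx G σ => x.1.2 ≤ p).sup fun x => ℓ x + 1

noncomputable def extensionKey (ℓ : CIdx G σ → ℕ) : V ⊕ G.edgeSet → ℕ :=
  Sum.elim (fun x => reach σ ℓ (σ x)) fun e => ℓ (edgeInterval σ e) + 1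

noncomputable def realizerKeys {m : ℕ} (L : Fin m → CIdx G σ → ℕ) :
    Fin (m + 2) → V ⊕ G.edgeSet → ℕ :=
  Matrix.vecCons (leftKey σ) (Matrix.vecCons (rightKey σ) fun i => extensionKey σ (L i))

variable {σ}

theorem reach_le {ℓ : CIdx G σ → ℕ} (hℓ : ∀ x y, CRel G σ x y → ℓ x < ℓ y)
    {p : Fin (Fintype.card V)} {y : CIdx G σ} (hp : p ≤ y.1.1) : reach σ ℓ p ≤ ℓ y :=
  Finset.sup_le fun x hx => hℓ x y ((Finset.mem_filter.1 hx).2.trans hp)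

theorem lt_reach (ℓ : CIdx G σ → ℕ) {p : Fin (Fintype.card V)} {x : CIdx G σ}
    (hx : x.1.2 ≤ p) : ℓ x < reach σ ℓ p :=
  Nat.lt_of_succ_le (Finset.le_sup (f := fun x => ℓ x + 1)
    (Finset.mem_filter.2 ⟨Finset.mem_univ x, hx⟩))

variable {u v : V} {e f : G.edgeSet}

theorem pairBefore_leftKey (hu : u ∈ (e : Sym2 V)) (huv : σ u < σ v)
    (hv : σ v = (edgeInterval σ f).1.1) :
    PairBefore (leftKey σ) (.inl u) (.inr e) (.inl v) (.inr f) := by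
  have := edgeInterval_fst_le_of_mem (σ := σ) hu
  simp only [PairBefore, leftKey, Sum.elim_inl, Sum.elim_inr]
  omega

theorem pairBefore_rightKey (hu : σ u = (edgeInterval σ e).1.2) (huv : σ u < σ v)
    (hv : σ v = (edgeInterval σ f).1.2) :
    PairBefore (rightKey σ) (.inl u) (.inr e) (.inl v) (.inr f) := by
  simp only [PairBefore, rightKey, Sum.elim_inl, Sum.elim_inr]
  omega

theorem pairBefore_extensionKey {ℓ : CIdx G σ → ℕ} (hℓ : ∀ x y, CRel G σ x y → ℓ x < ℓ y)
    (hu : σ u = (edgeInterval σ e).1.1) (hv : σ v = (edgeInterval σ f).1.2)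
    (hef : ℓ (edgeInterval σ e) < ℓ (edgeInterval σ f)) :
    PairBefore (extensionKey σ ℓ) (.inl u) (.inr e) (.inl v) (.inr f) := by
  have hu' := reach_le hℓ hu.le
  have hv' := lt_reach ℓ hv.ge
  simp only [PairBefore, extensionKey, Sum.elim_inl, Sum.elim_inr]
  omega

theorem exists_pairBefore_realizerKeys {m : ℕ} {L : Fin m → CIdx G σ → ℕ}
    (hL : IsRealizer (CRel G σ) L) (hu : u ∈ (e : Sym2 V)) (hv : v ∈ (f : Sym2 V))
    (hef : e ≠ f) (huv : σ u < σ v) :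
    ∃ i, PairBefore (realizerKeys σ L i) (.inl u) (.inr e) (.inl v) (.inr f) := by
  rcases edgeInterval_eq_or_eq_of_mem (σ := σ) hv with hv | hv
  · exact ⟨0, pairBefore_leftKey hu huv hv⟩
  rcases edgeInterval_eq_or_eq_of_mem (σ := σ) hu with hu | hu
  · have hfe : ¬ CRel G σ (edgeInterval σ f) (edgeInterval σ e) := by
      simp only [CRel, ← hu, ← hv, not_le]
      exact huv
    obtain ⟨i, hi⟩ := hL.exists_lt_of_not_rel (edgeInterval_injective.ne hef) hfe
    exact ⟨i.succ.succ, pairBefore_extensionKey (fun x y h => ((hL.2 x y).1 h).2 i) hu hv hi⟩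
  · exact ⟨1, pairBefore_rightKey hu huv hv⟩

end Keys

/-- For any bijection `σ : V(G) → [n]`, `π(G^{1/2}) ≤ dim(C_{G,σ}) + 2`. -/
theorem stmt5 {V : Type*} [Fintype V] (G : SimpleGraph V)
    (σ : V ≃ Fin (Fintype.card V)) :
    sepDim (subdiv G) ≤ orderDim (CRel G σ) + 2 := by
  obtain ⟨L, hL⟩ := exists_isRealizer_orderDim (CRel G σ) CRel_irrefl CRel_trans
  refine sepDim_subdiv_le_of_keys G (realizerKeys σ L) fun u v e f hu hv huv hef => ?_
  rcases (σ.injective.ne huv).lt_or_gt with h | h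
  · obtain ⟨i, hi⟩ := exists_pairBefore_realizerKeys hL hu hv hef h
    exact ⟨i, .inl hi⟩
  · obtain ⟨i, hi⟩ := exists_pairBefore_realizerKeys hL hv hu hef.symm h
    exact ⟨i, .inr hi⟩
end

section
/- Let G be a finite simple graph with chromatic number χ(G), and let V_1, …, V_{χ(G)} be the colour classes of a proper colouring of G with χ(G) colours. Let σ be a bijection from V(G) to [n] that places all vertices of V_1 first, then V_2, and so on. Then in the partial order C_{G,σ} — the set of open intervals (σ(u), σ(v)) over edges {u,v} of G with σ(u) < σ(v), ordered by (a,b) ⊲ (c,d) iff b ≤ c — every chain has size at most χ(G) − 1. -/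
namespace CIdx

variable {V : Type*} [Fintype V] {G : SimpleGraph V} {σ : V ≃ Fin (Fintype.card V)} {c : ℕ}
  (col : G.Coloring (Fin c))

def leftColor (p : CIdx G σ) : Fin c := col (σ.symm p.val.1)

def rightColor (p : CIdx G σ) : Fin c := col (σ.symm p.val.2)

lemma monotone_coloring_comp_symm (hσ : ∀ u v : V, col u < col v → σ u < σ v) :
    Monotone fun i => col (σ.symm i) := by
  intro i j hij
  by_contra! hlt
  have := hσ _ _ hlt
  simp only [Equiv.apply_symm_apply] at this
  exact this.not_ge hij

variable {col}

lemma leftColor_lt_rightColor (hmono : Monotone fun i => col (σ.symm i)) (p : CIdx G σ) :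
    p.leftColor col < p.rightColor col := by
  obtain ⟨_, u, v, hadj, hlt, rfl⟩ := p
  simpa [leftColor, rightColor] using
    lt_of_le_of_ne (by simpa using hmono hlt.le) (col.valid hadj)

lemma leftColor_lt_of_cRel (hmono : Monotone fun i => col (σ.symm i)) {p q : CIdx G σ}
    (h : CRel G σ p q) : p.leftColor col < q.leftColor col :=
  (leftColor_lt_rightColor hmono p).trans_le (hmono h)

lemma leftColor_injOn_of_isChain (hmono : Monotone fun i => col (σ.symm i))
    {S : Finset (CIdx G σ)} (hS : ∀ p ∈ S, ∀ q ∈ S, p ≠ q → CRel G σ p q ∨ CRel G σ q p) :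
    Set.InjOn (leftColor col) (S : Set (CIdx G σ)) := by
  intro p hp q hq hpq
  by_contra hne
  rcases hS p hp q hq hne with h | h
  · exact (leftColor_lt_of_cRel hmono h).ne hpq
  · exact (leftColor_lt_of_cRel hmono h).ne hpq.symm

lemma leftColor_lt_pred (hmono : Monotone fun i => col (σ.symm i)) (p : CIdx G σ) :
    (p.leftColor col : ℕ) < c - 1 := by
  have := leftColor_lt_rightColor hmono p
  have := (p.rightColor col).isLt
  omega

end CIdx

theorem stmt6_general {V : Type*} [Fintype V] (G : SimpleGraph V) (c : ℕ)
    (col : G.Coloring (Fin c))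
    (σ : V ≃ Fin (Fintype.card V))
    (hσ : ∀ u v : V, col u < col v → σ u < σ v)
    (S : Finset (CIdx G σ))
    (hS : ∀ p ∈ S, ∀ q ∈ S, p ≠ q → CRel G σ p q ∨ CRel G σ q p) :
    S.card ≤ c - 1 := by
  have hmono := CIdx.monotone_coloring_comp_symm col hσ
  have hinj : Set.InjOn (fun p : CIdx G σ => (p.leftColor col : ℕ)) S :=
    Fin.val_injective.comp_injOn (CIdx.leftColor_injOn_of_isChain hmono hS)
  simpa using Finset.card_le_card_of_injOn _
    (fun p _ => Finset.mem_range.mpr (CIdx.leftColor_lt_pred hmono p)) hinj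

/-- If `σ` places the colour classes `V_1, …, V_{χ(G)}` of an optimal proper colouring
of `G` consecutively in this order, then every chain of the interval order `C_{G,σ}`
has size at most `χ(G) - 1`. -/
theorem stmt6 {V : Type*} [Fintype V] (G : SimpleGraph V) (c : ℕ)
    (hc : G.chromaticNumber = (c : ℕ∞)) (col : G.Coloring (Fin c))
    (σ : V ≃ Fin (Fintype.card V))
    (hσ : ∀ u v : V, col u < col v → σ u < σ v)
    (S : Finset (CIdx G σ))
    (hS : ∀ p ∈ S, ∀ q ∈ S, p ≠ q → CRel G σ p q ∨ CRel G σ q p) :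
    S.card ≤ c - 1 :=
  stmt6_general G c col σ hσ S hS
end

section
/- For every finite simple graph G there exists a bijection σ from V(G) to [n] such that the partial order C_{G,σ} (open intervals (σ(u), σ(v)) over edges {u,v} with σ(u) < σ(v), ordered by (a,b) ⊲ (c,d) iff b ≤ c) has height at most χ(G) − 1 and π(G^{1/2}) ≤ dim(C_{G,σ}) + 2. -/
/-! ### Auxiliary lemmas -/


section Aux

lemma keyltA {B m1 r1 m2 r2 : ℕ} (hr : r1 < B) (h : m1 < m2 ∨ (m1 = m2 ∧ r1 < r2)) :
    m1 * B + r1 < m2 * B + r2 := by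
  rcases h with h | ⟨rfl, h⟩
  · calc m1 * B + r1 < m1 * B + B := by omega
    _ = (m1 + 1) * B := by ring
    _ ≤ m2 * B := Nat.mul_le_mul_right B h
    _ ≤ m2 * B + r2 := Nat.le_add_right _ _
  · omega

lemma keyinjA {B m1 r1 m2 r2 : ℕ} (h1 : r1 < B) (h2 : r2 < B)
    (h : m1 * B + r1 = m2 * B + r2) : m1 = m2 ∧ r1 = r2 := by
  rcases lt_trichotomy m1 m2 with hm | hm | hm
  · have := keyltA h1 (Or.inl hm) (r2 := r2); omega
  · subst hm
    constructor
    · rfl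
    · omega
  · have := keyltA h2 (Or.inl hm) (r2 := r1); omega

variable {V : Type*} [Fintype V] {G : SimpleGraph V}

noncomputable def ends (σ : V ≃ Fin (Fintype.card V)) (e : G.edgeSet) :
    Fin (Fintype.card V) × Fin (Fintype.card V) :=
  Sym2.lift ⟨fun u v => (min (σ u) (σ v), max (σ u) (σ v)), by
    intro u v; simp [min_comm, max_comm]⟩ e.val

lemma ends_spec (σ : V ≃ Fin (Fintype.card V)) (e : G.edgeSet) :
    ∃ u v : V, (e : Sym2 V) = s(u, v) ∧ G.Adj u v ∧ σ u < σ v ∧ ends σ e = (σ u, σ v) := by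
  obtain ⟨s, hs⟩ := e
  induction s using Sym2.ind with
  | _ u v =>
    rw [SimpleGraph.mem_edgeSet] at hs
    have hne : σ u ≠ σ v := fun h => hs.ne (σ.injective h)
    rcases lt_or_gt_of_ne hne with h | h
    · exact ⟨u, v, rfl, hs, h, by
        simp [ends, min_eq_left h.le, max_eq_right h.le]⟩
    · exact ⟨v, u, Sym2.eq_swap, hs.symm, h, by
        simp [ends, min_eq_right h.le, max_eq_left h.le]⟩

lemma ends_lt (σ : V ≃ Fin (Fintype.card V)) (e : G.edgeSet) :
    (ends σ e).1 < (ends σ e).2 := by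
  obtain ⟨u, v, -, -, h, he⟩ := ends_spec σ e
  rw [he]; exact h

lemma sigma_mem_ends {σ : V ≃ Fin (Fintype.card V)} {e : G.edgeSet} {u : V}
    (h : u ∈ (e : Sym2 V)) : σ u = (ends σ e).1 ∨ σ u = (ends σ e).2 := by
  obtain ⟨a, b, hab, -, -, he⟩ := ends_spec σ e
  rw [hab, Sym2.mem_iff] at h
  rw [he]
  rcases h with rfl | rfl
  · exact Or.inl rfl
  · exact Or.inr rfl

lemma ends_injective (σ : V ≃ Fin (Fintype.card V)) :
    Function.Injective (ends (G := G) σ) := by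
  intro e f h
  obtain ⟨u, v, he1, -, -, he2⟩ := ends_spec σ e
  obtain ⟨x, y, hf1, -, -, hf2⟩ := ends_spec σ f
  rw [he2, hf2, Prod.mk.injEq] at h
  have hu : u = x := σ.injective h.1
  have hv : v = y := σ.injective h.2
  apply Subtype.ext
  rw [he1, hf1, hu, hv]

noncomputable def cidx (σ : V ≃ Fin (Fintype.card V)) (e : G.edgeSet) : CIdx G σ :=
  ⟨ends σ e, by
    obtain ⟨u, v, -, hadj, hlt, he⟩ := ends_spec σ e
    exact ⟨u, v, hadj, hlt, he⟩⟩

lemma cidx_injective (σ : V ≃ Fin (Fintype.card V)) :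
    Function.Injective (cidx (G := G) σ) := by
  intro e f h
  exact ends_injective σ (congrArg Subtype.val h)

lemma CIdx_lt {σ : V ≃ Fin (Fintype.card V)} (p : CIdx G σ) : p.val.1 < p.val.2 := by
  obtain ⟨u, v, -, hlt, hp⟩ := p.prop
  rw [hp]; exact hlt

lemma CRel_irrefl_s7 {σ : V ≃ Fin (Fintype.card V)} (p : CIdx G σ) : ¬ CRel G σ p p :=
  fun h => absurd (lt_of_lt_of_le (CIdx_lt p) h) (lt_irrefl _)

lemma realizer_lt {α : Type*} {r : α → α → Prop} {m : ℕ} {L : Fin m → α → ℕ}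
    (hL : IsRealizer r L) {x y : α} (h : r x y) : ∀ i, L i x < L i y :=
  ((hL.2 x y).1 h).2

lemma realizer_flip {α : Type*} {r : α → α → Prop} {m : ℕ} {L : Fin m → α → ℕ}
    (hL : IsRealizer r L) {x y : α} (hxy : x ≠ y) (h : ¬ r x y) : ∃ i, L i y < L i x := by
  rw [hL.2 x y] at h
  push_neg at h
  obtain ⟨i, hi⟩ := h hxy
  exact ⟨i, lt_of_le_of_ne hi (fun h' => hxy ((hL.1 i) h'.symm))⟩

end Aux

section Realizer

variable {V : Type*} [Fintype V] {G : SimpleGraph V}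

lemma realizer_exists (σ : V ≃ Fin (Fintype.card V)) :
    ∃ (N : ℕ) (L : Fin N → CIdx G σ → ℕ), IsRealizer (CRel G σ) L := by
  classical
  haveI : Finite (CIdx G σ) := by unfold CIdx; infer_instance
  haveI : Fintype (CIdx G σ) := Fintype.ofFinite _
  set M := (Fintype.card V + 1) * (Fintype.card V + 1) with hM
  set k : CIdx G σ → ℕ := fun p => p.val.1.val * (Fintype.card V + 1) + p.val.2.val with hk
  have kM : ∀ p, k p < M := by
    intro p
    have h1 : p.val.1.val < Fintype.card V + 1 := Nat.lt_succ_of_lt p.val.1.isLt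
    have h2 : p.val.2.val < Fintype.card V + 1 := Nat.lt_succ_of_lt p.val.2.isLt
    have := keyltA (B := Fintype.card V + 1) (m1 := p.val.1.val) (r1 := p.val.2.val)
      (m2 := Fintype.card V + 1) (r2 := 0) h2 (Or.inl h1)
    simp only [hk, hM]
    omega
  have kinj : Function.Injective k := by
    intro p q h
    obtain ⟨h1, h2⟩ := keyinjA (B := Fintype.card V + 1) (Nat.lt_succ_of_lt p.val.2.isLt)
      (Nat.lt_succ_of_lt q.val.2.isLt) h
    exact Subtype.ext (Prod.ext (Fin.ext h1) (Fin.ext h2))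
  have kmono : ∀ {p q : CIdx G σ}, CRel G σ p q → k p < k q := by
    intro p q h
    have h' : p.val.2 ≤ q.val.1 := h
    have h1 : p.val.1.val < q.val.1.val := lt_of_lt_of_le (CIdx_lt p) h'
    exact keyltA (Nat.lt_succ_of_lt p.val.2.isLt) (Or.inl h1)
  have hM4 : ∀ (p : CIdx G σ), 4 ≤ M := by
    intro p
    have h := p.val.1.isLt
    rw [hM]; nlinarith
  set N := Fintype.card (CIdx G σ) with hN
  set ε : Fin N → CIdx G σ := fun i => (Fintype.equivFin (CIdx G σ)).symm i with hε
  refine ⟨N, fun i w => (if CRel G σ (ε i) w then M * M else 0) + (if w = ε i then M else k w),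
    ?_, ?_⟩
  · intro i w w' h
    have hM4' := hM4 w
    have hMM : M + M ≤ M * M := by
      calc M + M = 2 * M := by ring
      _ ≤ M * M := Nat.mul_le_mul_right M (by omega)
    have k1 := kM w
    have k2 := kM w'
    simp only at h
    split_ifs at h
    all_goals first
      | omega
      | (exact kinj (by omega))
      | (exact Eq.trans ‹w = ε i› (Eq.symm ‹w' = ε i›))
  · intro x y
    have hM4' := hM4 x
    have hMM : M + M ≤ M * M := by
      calc M + M = 2 * M := by ring
      _ ≤ M * M := Nat.mul_le_mul_right M (by omega)
    have kx := kM x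
    have ky := kM y
    constructor
    · intro hxy
      have hne : x ≠ y := fun hh => CRel_irrefl_s7 x (hh ▸ hxy)
      refine ⟨hne, fun i => ?_⟩
      show (if CRel G σ (ε i) x then M * M else 0) + (if x = ε i then M else k x) <
        (if CRel G σ (ε i) y then M * M else 0) + (if y = ε i then M else k y)
      have hkxy := kmono hxy
      by_cases h1 : CRel G σ (ε i) x
      · have h2 : CRel G σ (ε i) y := by
          have ha : (ε i).val.2 ≤ x.val.1 := h1
          have hb : x.val.2 ≤ y.val.1 := hxy
          exact le_trans (le_trans ha (le_of_lt (CIdx_lt x))) hb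
        have hx : x ≠ ε i := fun hh => CRel_irrefl_s7 _ (hh ▸ h1)
        have hy : y ≠ ε i := fun hh => CRel_irrefl_s7 _ (hh ▸ h2)
        rw [if_pos h1, if_pos h2, if_neg hx, if_neg hy]
        omega
      · by_cases h3 : x = ε i
        · have h2 : CRel G σ (ε i) y := h3 ▸ hxy
          have hy : y ≠ ε i := fun hh => hne (h3.trans hh.symm)
          rw [if_neg h1, if_pos h2, if_pos h3, if_neg hy]
          omega
        · rw [if_neg h1, if_neg h3]
          by_cases h2 : CRel G σ (ε i) y
          · rw [if_pos h2]
            omega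
          · rw [if_neg h2]
            by_cases h4 : y = ε i
            · rw [if_pos h4]
              omega
            · rw [if_neg h4]
              omega
    · rintro ⟨hne, hall⟩
      by_contra hrel
      have hi := hall ((Fintype.equivFin (CIdx G σ)) x)
      have hx : ε ((Fintype.equivFin (CIdx G σ)) x) = x := Equiv.symm_apply_apply _ x
      simp only [hx] at hi
      rw [if_neg (CRel_irrefl_s7 x), if_pos trivial, if_neg hrel, if_neg (fun hh => hne hh.symm)] at hi
      omega

end Realizer
section Sep

variable {V : Type*} [Fintype V] {G : SimpleGraph V}

lemma sep_exists (σ : V ≃ Fin (Fintype.card V)) {d : ℕ} (L : Fin d → CIdx G σ → ℕ)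
    (hL : IsRealizer (CRel G σ) L) :
    ∃ F : Fin (d + 2) → (V ⊕ ↥G.edgeSet) → ℕ, SepFamily (subdiv G) F := by
  classical
  haveI : Finite (CIdx G σ) := by unfold CIdx; infer_instance
  haveI : Fintype (CIdx G σ) := Fintype.ofFinite _
  set B := Fintype.card V + 2 with hB
  set S' : Fin d → V → ℕ := fun j v =>
    (Finset.univ.filter (fun q : CIdx G σ => q.val.2 = σ v)).sup (fun q => L j q + 1) with hS'
  have le_S' : ∀ (j : Fin d) (v : V) (p : CIdx G σ), p.val.2 = σ v → L j p + 1 ≤ S' j v := by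
    intro j v p hp
    exact Finset.le_sup (f := fun q => L j q + 1) (Finset.mem_filter.2 ⟨Finset.mem_univ _, hp⟩)
  have S'_le : ∀ (j : Fin d) (v : V) (p : CIdx G σ), σ v = p.val.1 → S' j v ≤ L j p := by
    intro j v p hp
    apply Finset.sup_le
    intro q hq
    have hq2 : q.val.2 = σ v := (Finset.mem_filter.1 hq).2
    have hrel : CRel G σ q p := by show q.val.2 ≤ p.val.1; rw [hq2, hp]
    have := realizer_lt hL hrel j
    omega
  set K1 : V ⊕ ↥G.edgeSet → ℕ := Sum.elim (fun v => (σ v).val * B + 0)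
      (fun g => (ends σ g).1.val * B + (ends σ g).2.val) with hK1
  set K2 : V ⊕ ↥G.edgeSet → ℕ := Sum.elim (fun v => (σ v).val * B + 0)
      (fun g => ((ends σ g).2.val - 1) * B + (B - 1 - (ends σ g).1.val)) with hK2
  set K3 : Fin d → V ⊕ ↥G.edgeSet → ℕ := fun j =>
    Sum.elim (fun v => S' j v * B + (1 + (σ v).val))
      (fun g => (L j (cidx σ g) + 1) * B + 0) with hK3
  set F : Fin (d + 2) → V ⊕ ↥G.edgeSet → ℕ := fun i =>
    Fin.cases K1 (fun i1 : Fin (d + 1) => Fin.cases K2 (fun j : Fin d => K3 j) i1) i with hF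
  have e0 : ∀ z, F 0 z = K1 z := by
    intro z; rw [hF]; simp only [Fin.cases_zero]
  have e1 : ∀ z, F (Fin.succ 0) z = K2 z := by
    intro z; rw [hF]; simp only [Fin.cases_succ, Fin.cases_zero]
  have e2 : ∀ (j : Fin d) z, F (Fin.succ (Fin.succ j)) z = K3 j z := by
    intro j z; rw [hF]; simp only [Fin.cases_succ]
  have injK1 : Function.Injective K1 := by
    intro z z' h
    cases z with
    | inl v => cases z' with
      | inl v' =>
        simp only [hK1, Sum.elim_inl] at h
        obtain ⟨h1, -⟩ := keyinjA (by omega) (by omega) h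
        exact congrArg Sum.inl (σ.injective (Fin.ext h1))
      | inr g =>
        exfalso
        simp only [hK1, Sum.elim_inl, Sum.elim_inr] at h
        have hg : (ends σ g).1.val < (ends σ g).2.val := ends_lt σ g
        have hg2 := (ends σ g).2.isLt
        obtain ⟨-, h2⟩ := keyinjA (by omega) (by omega) h
        omega
    | inr g => cases z' with
      | inl v' =>
        exfalso
        simp only [hK1, Sum.elim_inl, Sum.elim_inr] at h
        have hg : (ends σ g).1.val < (ends σ g).2.val := ends_lt σ g
        have hg2 := (ends σ g).2.isLt
        obtain ⟨-, h2⟩ := keyinjA (by omega) (by omega) h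
        omega
      | inr g' =>
        simp only [hK1, Sum.elim_inr] at h
        have hg2 := (ends σ g).2.isLt
        have hg2' := (ends σ g').2.isLt
        obtain ⟨h1, h2⟩ := keyinjA (by omega) (by omega) h
        exact congrArg Sum.inr (ends_injective σ (Prod.ext (Fin.ext h1) (Fin.ext h2)))
  have injK2 : Function.Injective K2 := by
    intro z z' h
    cases z with
    | inl v => cases z' with
      | inl v' =>
        simp only [hK2, Sum.elim_inl] at h
        obtain ⟨h1, -⟩ := keyinjA (by omega) (by omega) h
        exact congrArg Sum.inl (σ.injective (Fin.ext h1))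
      | inr g =>
        exfalso
        simp only [hK2, Sum.elim_inl, Sum.elim_inr] at h
        have hg1 := (ends σ g).1.isLt
        obtain ⟨-, h2⟩ := keyinjA (by omega) (by omega) h
        omega
    | inr g => cases z' with
      | inl v' =>
        exfalso
        simp only [hK2, Sum.elim_inl, Sum.elim_inr] at h
        have hg1 := (ends σ g).1.isLt
        obtain ⟨-, h2⟩ := keyinjA (by omega) (by omega) h
        omega
      | inr g' =>
        simp only [hK2, Sum.elim_inr] at h
        have hg : (ends σ g).1.val < (ends σ g).2.val := ends_lt σ g
        have hg' : (ends σ g').1.val < (ends σ g').2.val := ends_lt σ g'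
        have hg1 := (ends σ g).1.isLt
        have hg1' := (ends σ g').1.isLt
        have hg2 := (ends σ g).2.isLt
        have hg2' := (ends σ g').2.isLt
        obtain ⟨h1, h2⟩ := keyinjA (by omega) (by omega) h
        exact congrArg Sum.inr (ends_injective σ
          (Prod.ext (Fin.ext (by omega)) (Fin.ext (by omega))))
  have injK3 : ∀ j, Function.Injective (K3 j) := by
    intro j z z' h
    cases z with
    | inl v => cases z' with
      | inl v' =>
        simp only [hK3, Sum.elim_inl] at h
        have h1 := (σ v).isLt
        have h2 := (σ v').isLt
        obtain ⟨-, h3⟩ := keyinjA (by omega) (by omega) h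
        exact congrArg Sum.inl (σ.injective (Fin.ext (by omega)))
      | inr g =>
        exfalso
        simp only [hK3, Sum.elim_inl, Sum.elim_inr, Fin.eta] at h
        have h1 := (σ v).isLt
        obtain ⟨-, h2⟩ := keyinjA (by omega) (by omega) h
        omega
    | inr g => cases z' with
      | inl v' =>
        exfalso
        simp only [hK3, Sum.elim_inl, Sum.elim_inr, Fin.eta] at h
        have h1 := (σ v').isLt
        obtain ⟨-, h2⟩ := keyinjA (by omega) (by omega) h
        omega
      | inr g' =>
        simp only [hK3, Sum.elim_inr] at h
        obtain ⟨h1, -⟩ := keyinjA (by omega) (by omega) h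
        exact congrArg Sum.inr (cidx_injective σ (hL.1 j (by omega)))
  refine ⟨F, ?_, ?_⟩
  · intro i
    induction i using Fin.cases with
    | zero => rw [funext e0]; exact injK1
    | succ i1 =>
      induction i1 using Fin.cases with
      | zero => rw [funext e1]; exact injK2
      | succ j => rw [funext (e2 j)]; exact injK3 j
  · have hadj : ∀ {x y : V ⊕ ↥G.edgeSet}, (subdiv G).Adj x y →
        ∃ (u : V) (e : G.edgeSet), u ∈ (e : Sym2 V) ∧
          ((x = Sum.inl u ∧ y = Sum.inr e) ∨ (x = Sum.inr e ∧ y = Sum.inl u)) := by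
      intro x y h
      rw [subdiv, SimpleGraph.fromRel_adj] at h
      obtain ⟨-, h | h⟩ := h
      · obtain ⟨u, e, h1, h2, h3⟩ := h; exact ⟨u, e, h3, Or.inl ⟨h1, h2⟩⟩
      · obtain ⟨u, e, h1, h2, h3⟩ := h; exact ⟨u, e, h3, Or.inr ⟨h2, h1⟩⟩
    have main : ∀ (u x : V) (e f : G.edgeSet), u ∈ (e : Sym2 V) → x ∈ (f : Sym2 V) →
        u ≠ x → e ≠ f →
        ∃ i : Fin (d + 2),
          (F i (Sum.inl u) < F i (Sum.inl x) ∧ F i (Sum.inl u) < F i (Sum.inr f) ∧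
            F i (Sum.inr e) < F i (Sum.inl x) ∧ F i (Sum.inr e) < F i (Sum.inr f)) ∨
          (F i (Sum.inl x) < F i (Sum.inl u) ∧ F i (Sum.inr f) < F i (Sum.inl u) ∧
            F i (Sum.inl x) < F i (Sum.inr e) ∧ F i (Sum.inr f) < F i (Sum.inr e)) := by
      intro u x e f hu hx hux hef
      have hab : (ends σ e).1.val < (ends σ e).2.val := ends_lt σ e
      have hcd : (ends σ f).1.val < (ends σ f).2.val := ends_lt σ f
      have hb1 := (ends σ e).2.isLt
      have hd1 := (ends σ f).2.isLt
      have ha1 := (ends σ e).1.isLt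
      have hc1 := (ends σ f).1.isLt
      have hσu := (σ u).isLt
      have hσx := (σ x).isLt
      have hux' : (σ u).val ≠ (σ x).val := fun h => hux (σ.injective (Fin.ext h))
      have hef' : ¬((ends σ e).1.val = (ends σ f).1.val ∧
          (ends σ e).2.val = (ends σ f).2.val) := by
        rintro ⟨h1, h2⟩
        exact hef (ends_injective σ (Prod.ext (Fin.ext h1) (Fin.ext h2)))
      rcases sigma_mem_ends (σ := σ) hu with hu1f | hu1f <;> rcases sigma_mem_ends (σ := σ) hx with hx1f | hx1f <;>
        have hu1 := congrArg Fin.val hu1f <;> have hx1 := congrArg Fin.val hx1f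
      · -- role (left, left) : O₁
        rcases lt_trichotomy ((ends σ e).1.val) ((ends σ f).1.val) with hlt | heq | hgt
        · refine ⟨(0 : Fin (d + 2)), Or.inl ⟨?_, ?_, ?_, ?_⟩⟩ <;>
            (simp only [e0]; simp only [hK1, Sum.elim_inl, Sum.elim_inr];
             exact keyltA (by omega) (by omega))
        · exact absurd (by omega : (σ u).val = (σ x).val) hux'
        · refine ⟨(0 : Fin (d + 2)), Or.inr ⟨?_, ?_, ?_, ?_⟩⟩ <;>
            (simp only [e0]; simp only [hK1, Sum.elim_inl, Sum.elim_inr];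
             exact keyltA (by omega) (by omega))
      · -- role (left, right)
        by_cases hbd : (ends σ e).2.val < (ends σ f).2.val
        · refine ⟨(Fin.succ 0 : Fin (d + 2)), Or.inl ⟨?_, ?_, ?_, ?_⟩⟩ <;>
            (simp only [e1]; simp only [hK2, Sum.elim_inl, Sum.elim_inr];
             exact keyltA (by omega) (by omega))
        · by_cases hbd2 : (ends σ e).2.val = (ends σ f).2.val
          · rcases lt_or_gt_of_ne (fun h : (ends σ e).1.val = (ends σ f).1.val =>
              hef' ⟨h, hbd2⟩) with hac | hca
            · refine ⟨(0 : Fin (d + 2)), Or.inl ⟨?_, ?_, ?_, ?_⟩⟩ <;>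
                (simp only [e0]; simp only [hK1, Sum.elim_inl, Sum.elim_inr];
                 exact keyltA (by omega) (by omega))
            · refine ⟨(Fin.succ 0 : Fin (d + 2)), Or.inl ⟨?_, ?_, ?_, ?_⟩⟩ <;>
                (simp only [e1]; simp only [hK2, Sum.elim_inl, Sum.elim_inr];
                 exact keyltA (by omega) (by omega))
          · -- d1 < b1
            by_cases hac : (ends σ e).1.val < (ends σ f).1.val
            · refine ⟨(0 : Fin (d + 2)), Or.inl ⟨?_, ?_, ?_, ?_⟩⟩ <;>
                (simp only [e0]; simp only [hK1, Sum.elim_inl, Sum.elim_inr];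
                 exact keyltA (by omega) (by omega))
            · by_cases hda : (ends σ f).2.val ≤ (ends σ e).1.val
              · refine ⟨(0 : Fin (d + 2)), Or.inr ⟨?_, ?_, ?_, ?_⟩⟩ <;>
                  (simp only [e0]; simp only [hK1, Sum.elim_inl, Sum.elim_inr];
                   exact keyltA (by omega) (by omega))
              · -- R-case
                obtain ⟨j, hj⟩ := realizer_flip hL
                  (x := cidx σ f) (y := cidx σ e)
                  (fun h => hef (cidx_injective σ h).symm)
                  (by intro h; have h' : (ends σ f).2.val ≤ (ends σ e).1.val := h; omega)
                have f1 : S' j u ≤ L j (cidx σ e) := S'_le j u _ hu1f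
                have f2 : L j (cidx σ f) + 1 ≤ S' j x := le_S' j x _ hx1f.symm
                refine ⟨(Fin.succ (Fin.succ j) : Fin (d + 2)), Or.inl ⟨?_, ?_, ?_, ?_⟩⟩ <;>
                  (simp only [e2]; simp only [hK3, Sum.elim_inl, Sum.elim_inr, Fin.eta];
                   exact keyltA (by omega) (by omega))
      · -- role (right, left)
        by_cases hdb : (ends σ f).2.val < (ends σ e).2.val
        · refine ⟨(Fin.succ 0 : Fin (d + 2)), Or.inr ⟨?_, ?_, ?_, ?_⟩⟩ <;>
            (simp only [e1]; simp only [hK2, Sum.elim_inl, Sum.elim_inr];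
             exact keyltA (by omega) (by omega))
        · by_cases hdb2 : (ends σ f).2.val = (ends σ e).2.val
          · rcases lt_or_gt_of_ne (fun h : (ends σ e).1.val = (ends σ f).1.val =>
              hef' ⟨h, hdb2.symm⟩) with hac | hca
            · refine ⟨(Fin.succ 0 : Fin (d + 2)), Or.inr ⟨?_, ?_, ?_, ?_⟩⟩ <;>
                (simp only [e1]; simp only [hK2, Sum.elim_inl, Sum.elim_inr];
                 exact keyltA (by omega) (by omega))
            · refine ⟨(0 : Fin (d + 2)), Or.inr ⟨?_, ?_, ?_, ?_⟩⟩ <;>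
                (simp only [e0]; simp only [hK1, Sum.elim_inl, Sum.elim_inr];
                 exact keyltA (by omega) (by omega))
          · -- b1 < d1
            by_cases hca : (ends σ f).1.val < (ends σ e).1.val
            · refine ⟨(0 : Fin (d + 2)), Or.inr ⟨?_, ?_, ?_, ?_⟩⟩ <;>
                (simp only [e0]; simp only [hK1, Sum.elim_inl, Sum.elim_inr];
                 exact keyltA (by omega) (by omega))
            · by_cases hbc : (ends σ e).2.val ≤ (ends σ f).1.val
              · refine ⟨(0 : Fin (d + 2)), Or.inl ⟨?_, ?_, ?_, ?_⟩⟩ <;>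
                  (simp only [e0]; simp only [hK1, Sum.elim_inl, Sum.elim_inr];
                   exact keyltA (by omega) (by omega))
              · -- mirror R-case
                obtain ⟨j, hj⟩ := realizer_flip hL
                  (x := cidx σ e) (y := cidx σ f)
                  (fun h => hef (cidx_injective σ h))
                  (by intro h; have h' : (ends σ e).2.val ≤ (ends σ f).1.val := h; omega)
                have f1 : S' j x ≤ L j (cidx σ f) := S'_le j x _ hx1f
                have f2 : L j (cidx σ e) + 1 ≤ S' j u := le_S' j u _ hu1f.symm
                refine ⟨(Fin.succ (Fin.succ j) : Fin (d + 2)), Or.inr ⟨?_, ?_, ?_, ?_⟩⟩ <;>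
                  (simp only [e2]; simp only [hK3, Sum.elim_inl, Sum.elim_inr, Fin.eta];
                   exact keyltA (by omega) (by omega))
      · -- role (right, right) : O₂
        rcases lt_trichotomy ((ends σ e).2.val) ((ends σ f).2.val) with hlt | heq | hgt
        · refine ⟨(Fin.succ 0 : Fin (d + 2)), Or.inl ⟨?_, ?_, ?_, ?_⟩⟩ <;>
            (simp only [e1]; simp only [hK2, Sum.elim_inl, Sum.elim_inr];
             exact keyltA (by omega) (by omega))
        · exact absurd (by omega : (σ u).val = (σ x).val) hux'
        · refine ⟨(Fin.succ 0 : Fin (d + 2)), Or.inr ⟨?_, ?_, ?_, ?_⟩⟩ <;>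
            (simp only [e1]; simp only [hK2, Sum.elim_inl, Sum.elim_inr];
             exact keyltA (by omega) (by omega))
    intro p q r s hpq hrs h1 h2 h3 h4
    obtain ⟨u, e, hu, hor1⟩ := hadj hpq
    obtain ⟨x, f, hx, hor2⟩ := hadj hrs
    rcases hor1 with ⟨rfl, rfl⟩ | ⟨rfl, rfl⟩ <;> rcases hor2 with ⟨rfl, rfl⟩ | ⟨rfl, rfl⟩
    · obtain ⟨i, h⟩ := main u x e f hu hx
        (fun hh => h1 (congrArg Sum.inl hh)) (fun hh => h4 (congrArg Sum.inr hh))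
      exact ⟨i, by tauto⟩
    · obtain ⟨i, h⟩ := main u x e f hu hx
        (fun hh => h2 (congrArg Sum.inl hh)) (fun hh => h3 (congrArg Sum.inr hh))
      exact ⟨i, by tauto⟩
    · obtain ⟨i, h⟩ := main u x e f hu hx
        (fun hh => h3 (congrArg Sum.inl hh)) (fun hh => h2 (congrArg Sum.inr hh))
      exact ⟨i, by tauto⟩
    · obtain ⟨i, h⟩ := main u x e f hu hx
        (fun hh => h4 (congrArg Sum.inl hh)) (fun hh => h1 (congrArg Sum.inr hh))
      exact ⟨i, by tauto⟩

end Sep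

/-- For every finite simple graph `G` there is a bijection `σ : V(G) → [n]` such that
the interval order `C_{G,σ}` has height at most `χ(G) - 1` and
`π(G^{1/2}) ≤ dim(C_{G,σ}) + 2`. -/
theorem stmt7 {V : Type*} [Fintype V] (G : SimpleGraph V) (c : ℕ)
    (hc : G.chromaticNumber = (c : ℕ∞)) :
    ∃ σ : V ≃ Fin (Fintype.card V),
      (∀ S : Finset (CIdx G σ),
        (∀ p ∈ S, ∀ q ∈ S, p ≠ q → CRel G σ p q ∨ CRel G σ q p) → S.card ≤ c - 1) ∧
      sepDim (subdiv G) ≤ orderDim (CRel G σ) + 2 := by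
  classical
  have hcol : G.Colorable c := SimpleGraph.chromaticNumber_le_iff_colorable.mp (le_of_eq hc)
  obtain ⟨C⟩ := hcol
  let σ₀ := Fintype.equivFin V
  set key₀ : V → ℕ := fun v => (C v : ℕ) * Fintype.card V + (σ₀ v : ℕ) with hkey
  have hkinj : Function.Injective key₀ := by
    intro u v h
    obtain ⟨-, hc2⟩ := keyinjA (σ₀ u).isLt (σ₀ v).isLt h
    exact σ₀.injective (Fin.ext hc2)
  letI : LinearOrder V := LinearOrder.lift' key₀ hkinj
  let ι : Fin (Fintype.card V) ≃o V := monoEquivOfFin V rfl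
  set σ : V ≃ Fin (Fintype.card V) := ι.symm.toEquiv with hσ
  have hltkey : ∀ u v : V, u < v ↔ key₀ u < key₀ v := fun _ _ => Iff.rfl
  have hkeycol : ∀ {u v : V}, key₀ u < key₀ v → (C u : ℕ) ≤ (C v : ℕ) := by
    intro u v h
    by_contra hcc
    push_neg at hcc
    have h2 : key₀ v < key₀ u := keyltA (σ₀ v).isLt (Or.inl hcc)
    omega
  have hmono : ∀ {i j : Fin (Fintype.card V)}, i < j → key₀ (σ.symm i) < key₀ (σ.symm j) := by
    intro i j hij
    have : (σ.symm i : V) < σ.symm j := ι.strictMono hij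
    exact (hltkey _ _).mp this
  have hpcol : ∀ p : CIdx G σ, (C (σ.symm p.val.1) : ℕ) < (C (σ.symm p.val.2) : ℕ) := by
    intro p
    obtain ⟨u, v, hadj, hltuv, hp⟩ := p.prop
    have h1 : σ.symm p.val.1 = u := by rw [hp]; exact σ.symm_apply_apply u
    have h2 : σ.symm p.val.2 = v := by rw [hp]; exact σ.symm_apply_apply v
    rw [h1, h2]
    have huv : u < v := (OrderIso.lt_iff_lt ι.symm).mp hltuv
    have hk : key₀ u < key₀ v := (hltkey u v).mp huv
    have hle := hkeycol hk
    have hne : (C u : ℕ) ≠ (C v : ℕ) := fun hh => C.valid hadj (Fin.ext hh)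
    omega
  have hidxcol : ∀ (i j : Fin (Fintype.card V)), i ≤ j →
      (C (σ.symm i) : ℕ) ≤ (C (σ.symm j) : ℕ) := by
    intro i j hij
    rcases eq_or_lt_of_le hij with rfl | hlt'
    · exact le_refl _
    · exact hkeycol (hmono hlt')
  refine ⟨σ, ?_, ?_⟩
  · intro S hS
    set ψ : CIdx G σ → ℕ := fun p => (C (σ.symm p.val.2) : ℕ) with hψ
    have hψmono : ∀ p q : CIdx G σ, CRel G σ p q → ψ p < ψ q := by
      intro p q hpq
      have h1 : (C (σ.symm p.val.2) : ℕ) ≤ (C (σ.symm q.val.1) : ℕ) := hidxcol _ _ hpq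
      exact lt_of_le_of_lt h1 (hpcol q)
    have hmaps : ∀ p ∈ S, ψ p ∈ Finset.Icc 1 (c - 1) := by
      intro p _
      have h1 := hpcol p
      have h2 : ((C (σ.symm p.val.2)) : ℕ) < c := (C _).isLt
      rw [Finset.mem_Icc]
      constructor
      · simp only [hψ]; omega
      · simp only [hψ]; omega
    have hinj : Set.InjOn ψ S := by
      intro p hp q hq hpq
      by_contra hne
      rcases hS p hp q hq hne with h | h
      · exact absurd hpq (Nat.ne_of_lt (hψmono _ _ h))
      · exact absurd hpq.symm (Nat.ne_of_lt (hψmono _ _ h))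
    calc S.card ≤ (Finset.Icc 1 (c - 1)).card := Finset.card_le_card_of_injOn ψ hmaps hinj
      _ = c - 1 := by rw [Nat.card_Icc]; omega
  · obtain ⟨N, L0, hL0⟩ := realizer_exists (G := G) σ
    have hne : {m : ℕ | ∃ L : Fin m → CIdx G σ → ℕ, IsRealizer (CRel G σ) L}.Nonempty :=
      ⟨N, L0, hL0⟩
    have hd : orderDim (CRel G σ) ∈
        {m : ℕ | ∃ L : Fin m → CIdx G σ → ℕ, IsRealizer (CRel G σ) L} := by
      rw [orderDim]; exact Nat.sInf_mem hne
    obtain ⟨L, hL⟩ := hd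
    obtain ⟨F, hF⟩ := sep_exists σ L hL
    rw [sepDim]
    exact Nat.sInf_le ⟨F, hF⟩
end

section
/- For every integer n ≥ 2, the separation dimension of the fully subdivided complete graph satisfies π(K_n^{1/2}) ≤ dim(C_n) + 2, where C_n is the canonical open interval order consisting of all open intervals (a,b) with a < b in [n], ordered by (a,b) ⊲ (c,d) iff b ≤ c. -/
/-- Index type for the subdivision vertices of `K_p^{1/2}` (equivalently, the open
intervals `(a,b)` with `a < b` in `[p]`). -/
abbrev KIdx (p : ℕ) := {q : Fin p × Fin p // q.1 < q.2}

/-- The fully subdivided complete graph `K_p^{1/2}`: original vertices `Fin p`, and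
for each pair `i < j` a subdivision vertex adjacent exactly to `i` and `j`. -/
def Ksub (p : ℕ) : SimpleGraph (Fin p ⊕ KIdx p) :=
  SimpleGraph.fromRel fun x y => ∃ (i : Fin p) (e : KIdx p),
    x = Sum.inl i ∧ y = Sum.inr e ∧ (i = e.val.1 ∨ i = e.val.2)

/-- The canonical open interval order `C_p`: `(a,b) ⊲ (c,d)` iff `b ≤ c`. -/
def canonRel (p : ℕ) (e f : KIdx p) : Prop := e.val.2 ≤ f.val.1



/-! ### Auxiliary arithmetic lemmas -/

private lemma block_lt {x y u v N : ℕ} (hxy : x < y) (hu : u < N) :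
    x * N + u < y * N + v :=
  calc x * N + u < x * N + N := by omega
    _ = (x + 1) * N := by ring
    _ ≤ y * N := Nat.mul_le_mul hxy (le_refl N)
    _ ≤ y * N + v := Nat.le_add_right _ _

private lemma block_eq {x y u v N : ℕ} (hu : u < N) (hv : v < N)
    (h : x * N + u = y * N + v) : x = y ∧ u = v := by
  have h1 : (x * N + u) % N = u := by
    rw [mul_comm x N, Nat.mul_add_mod]; exact Nat.mod_eq_of_lt hu
  have h2 : (y * N + v) % N = v := by
    rw [mul_comm y N, Nat.mul_add_mod]; exact Nat.mod_eq_of_lt hv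
  have huv : u = v := by rw [← h1, ← h2, h]
  refine ⟨?_, huv⟩
  have hx : x * N = y * N := by omega
  exact Nat.eq_of_mul_eq_mul_right (by omega) hx

private lemma kidx_lt {n : ℕ} (e : KIdx n) : (e.1.1 : ℕ) < (e.1.2 : ℕ) := e.2

private lemma kidx_ext {n : ℕ} {e f : KIdx n} (h1 : (e.1.1:ℕ) = (f.1.1:ℕ))
    (h2 : (e.1.2:ℕ) = (f.1.2:ℕ)) : e = f := by
  apply Subtype.ext; apply Prod.ext <;> exact Fin.ext ‹_›

/-! ### The three kinds of orders -/

/-- Order by left endpoint. -/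
def ptG1 (n : ℕ) : Fin n ⊕ KIdx n → ℕ :=
  Sum.elim (fun p => (p : ℕ) * (n+1)) (fun e => (e.1.1 : ℕ) * (n+1) + (e.1.2 : ℕ))

/-- Order by right endpoint. -/
def ptG2 (n : ℕ) : Fin n ⊕ KIdx n → ℕ :=
  Sum.elim (fun p => (p : ℕ) * (n+1) + n) (fun e => (e.1.2 : ℕ) * (n+1) + (e.1.1 : ℕ))

/-- Maximum (shifted) label of an interval ending at or before `p`. -/
def Mx (n : ℕ) (ℓ : KIdx n → ℕ) (p : ℕ) : ℕ :=
  (Finset.univ.filter (fun g : KIdx n => (g.1.2 : ℕ) ≤ p)).sup (fun g => ℓ g + 1)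

/-- Extension to points of a linear extension `ℓ` of the interval order. -/
def extF (n : ℕ) (ℓ : KIdx n → ℕ) : Fin n ⊕ KIdx n → ℕ :=
  Sum.elim (fun p => (2 * Mx n ℓ (p : ℕ) + 1) * n + (p : ℕ)) (fun e => (2 * (ℓ e + 1)) * n)

private lemma ptG1_inj (n : ℕ) : Function.Injective (ptG1 n) := by
  intro x y h
  match x, y with
  | Sum.inl p, Sum.inl q =>
      simp only [ptG1, Sum.elim_inl] at h
      have := block_eq (x := (p:ℕ)) (y := (q:ℕ)) (u := 0) (v := 0) (N := n+1)
        (by omega) (by omega) (by omega)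
      exact congrArg Sum.inl (Fin.ext this.1)
  | Sum.inl p, Sum.inr e =>
      simp only [ptG1, Sum.elim_inl, Sum.elim_inr] at h
      have hb : (0:ℕ) < (e.1.2 : ℕ) := by have := kidx_lt e; omega
      have := block_eq (x := (p:ℕ)) (y := (e.1.1:ℕ)) (u := 0) (v := (e.1.2:ℕ)) (N := n+1)
        (by omega) (by have := e.1.2.isLt; omega) (by omega)
      omega
  | Sum.inr e, Sum.inl p =>
      simp only [ptG1, Sum.elim_inl, Sum.elim_inr] at h
      have hb : (0:ℕ) < (e.1.2 : ℕ) := by have := kidx_lt e; omega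
      have := block_eq (x := (e.1.1:ℕ)) (y := (p:ℕ)) (u := (e.1.2:ℕ)) (v := 0) (N := n+1)
        (by have := e.1.2.isLt; omega) (by omega) (by omega)
      omega
  | Sum.inr e, Sum.inr f =>
      simp only [ptG1, Sum.elim_inr] at h
      have := block_eq (N := n+1) (by have := e.1.2.isLt; omega)
        (by have := f.1.2.isLt; omega) h
      exact congrArg Sum.inr (kidx_ext this.1 this.2)

private lemma ptG2_inj (n : ℕ) : Function.Injective (ptG2 n) := by
  intro x y h
  match x, y with
  | Sum.inl p, Sum.inl q =>
      simp only [ptG2, Sum.elim_inl] at h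
      have := block_eq (u := n) (v := n) (N := n+1) (by omega) (by omega) h
      exact congrArg Sum.inl (Fin.ext this.1)
  | Sum.inl p, Sum.inr e =>
      simp only [ptG2, Sum.elim_inl, Sum.elim_inr] at h
      have ha : (e.1.1 : ℕ) < n := by have := kidx_lt e; have := e.1.2.isLt; omega
      have := block_eq (u := n) (v := (e.1.1:ℕ)) (N := n+1) (by omega) (by omega) h
      omega
  | Sum.inr e, Sum.inl p =>
      simp only [ptG2, Sum.elim_inl, Sum.elim_inr] at h
      have ha : (e.1.1 : ℕ) < n := by have := kidx_lt e; have := e.1.2.isLt; omega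
      have := block_eq (u := (e.1.1:ℕ)) (v := n) (N := n+1) (by omega) (by omega) h
      omega
  | Sum.inr e, Sum.inr f =>
      simp only [ptG2, Sum.elim_inr] at h
      have := block_eq (N := n+1) (by have := kidx_lt e; have := e.1.2.isLt; omega)
        (by have := kidx_lt f; have := f.1.2.isLt; omega) h
      exact congrArg Sum.inr (kidx_ext this.2 this.1)

private lemma extF_inj {n : ℕ} (hn : 0 < n) {ℓ : KIdx n → ℕ}
    (hℓ : Function.Injective ℓ) : Function.Injective (extF n ℓ) := by
  intro x y h
  match x, y with
  | Sum.inl p, Sum.inl q =>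
      simp only [extF, Sum.elim_inl] at h
      have := block_eq (N := n) p.isLt q.isLt h
      exact congrArg Sum.inl (Fin.ext this.2)
  | Sum.inl p, Sum.inr e =>
      simp only [extF, Sum.elim_inl, Sum.elim_inr] at h
      have := block_eq (x := 2 * Mx n ℓ (p:ℕ) + 1) (y := 2 * (ℓ e + 1))
        (u := (p:ℕ)) (v := 0) (N := n) p.isLt hn (by omega)
      omega
  | Sum.inr e, Sum.inl p =>
      simp only [extF, Sum.elim_inl, Sum.elim_inr] at h
      have := block_eq (x := 2 * (ℓ e + 1)) (y := 2 * Mx n ℓ (p:ℕ) + 1)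
        (u := 0) (v := (p:ℕ)) (N := n) hn p.isLt (by omega)
      omega
  | Sum.inr e, Sum.inr f =>
      simp only [extF, Sum.elim_inr] at h
      have h2 := block_eq (x := 2 * (ℓ e + 1)) (y := 2 * (ℓ f + 1))
        (u := 0) (v := 0) (N := n) hn hn (by omega)
      have : ℓ e = ℓ f := by omega
      exact congrArg Sum.inr (hℓ this)

/-! ### Order facts about `extF` -/

private lemma Mx_mono {n : ℕ} (ℓ : KIdx n → ℕ) {p q : ℕ} (h : p ≤ q) :
    Mx n ℓ p ≤ Mx n ℓ q := by
  apply Finset.sup_mono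
  intro g hg
  simp only [Finset.mem_filter] at *
  exact ⟨hg.1, le_trans hg.2 h⟩

private lemma le_Mx {n : ℕ} (ℓ : KIdx n → ℕ) {p : ℕ} {f : KIdx n}
    (h : (f.1.2 : ℕ) ≤ p) : ℓ f + 1 ≤ Mx n ℓ p := by
  rw [Mx]
  exact Finset.le_sup (f := fun g : KIdx n => ℓ g + 1) (by simp [Finset.mem_filter, h])

private lemma Mx_lt {n : ℕ} (ℓ : KIdx n → ℕ) {p t : ℕ} (ht : 0 < t)
    (h : ∀ g : KIdx n, (g.1.2 : ℕ) ≤ p → ℓ g + 1 < t) : Mx n ℓ p < t := by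
  rw [Mx, Finset.sup_lt_iff ht]
  intro g hg
  exact h g (by simpa using (Finset.mem_filter.1 hg).2)

private lemma pt_lt_pt {n : ℕ} (ℓ : KIdx n → ℕ) {p q : Fin n} (h : (p:ℕ) < (q:ℕ)) :
    extF n ℓ (Sum.inl p) < extF n ℓ (Sum.inl q) := by
  simp only [extF, Sum.elim_inl]
  have hM : Mx n ℓ (p:ℕ) ≤ Mx n ℓ (q:ℕ) := Mx_mono ℓ (by omega)
  exact Nat.add_lt_add_of_le_of_lt (Nat.mul_le_mul (by omega) (le_refl n)) h

private lemma pt_lt_w {n : ℕ} (ℓ : KIdx n → ℕ) {p : Fin n} {e : KIdx n}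
    (h : Mx n ℓ (p:ℕ) < ℓ e + 1) :
    extF n ℓ (Sum.inl p) < extF n ℓ (Sum.inr e) := by
  simp only [extF, Sum.elim_inl, Sum.elim_inr]
  have := @block_lt (2 * Mx n ℓ (p:ℕ) + 1) (2 * (ℓ e + 1)) (p:ℕ) 0 n (by omega) p.isLt
  omega

private lemma w_lt_pt {n : ℕ} (hn : 0 < n) (ℓ : KIdx n → ℕ) {p : Fin n} {e : KIdx n}
    (h : ℓ e + 1 ≤ Mx n ℓ (p:ℕ)) :
    extF n ℓ (Sum.inr e) < extF n ℓ (Sum.inl p) := by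
  simp only [extF, Sum.elim_inl, Sum.elim_inr]
  have := @block_lt (2 * (ℓ e + 1)) (2 * Mx n ℓ (p:ℕ) + 1) 0 (p:ℕ) n (by omega) hn
  omega

private lemma w_lt_w {n : ℕ} (hn : 0 < n) (ℓ : KIdx n → ℕ) {e f : KIdx n}
    (h : ℓ e < ℓ f) :
    extF n ℓ (Sum.inr e) < extF n ℓ (Sum.inr f) := by
  simp only [extF, Sum.elim_inr]
  have := @block_lt (2 * (ℓ e + 1)) (2 * (ℓ f + 1)) 0 0 n (by omega) hn
  omega

/-! ### "Before" predicate and the two endpoint orders -/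

private def Bef {n : ℕ} (F : Fin n ⊕ KIdx n → ℕ) (x1 x2 y1 y2 : Fin n ⊕ KIdx n) : Prop :=
  F x1 < F y1 ∧ F x1 < F y2 ∧ F x2 < F y1 ∧ F x2 < F y2

private lemma bef_G1 {n : ℕ} (e f : KIdx n) (h : (e.1.1:ℕ) < (f.1.1:ℕ)) :
    Bef (ptG1 n) (Sum.inl e.1.1) (Sum.inr e) (Sum.inl f.1.1) (Sum.inr f) := by
  have hb := e.1.2.isLt
  refine ⟨?_, ?_, ?_, ?_⟩ <;> simp only [Bef, ptG1, Sum.elim_inl, Sum.elim_inr]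
  · have := @block_lt (e.1.1:ℕ) (f.1.1:ℕ) 0 0 (n+1) h (by omega); omega
  · have := @block_lt (e.1.1:ℕ) (f.1.1:ℕ) 0 (f.1.2:ℕ) (n+1) h (by omega); omega
  · have := @block_lt (e.1.1:ℕ) (f.1.1:ℕ) (e.1.2:ℕ) 0 (n+1) h (by omega); omega
  · have := @block_lt (e.1.1:ℕ) (f.1.1:ℕ) (e.1.2:ℕ) (f.1.2:ℕ) (n+1) h (by omega); omega

private lemma bef_G2 {n : ℕ} (e f : KIdx n) (h : (e.1.2:ℕ) < (f.1.2:ℕ)) :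
    Bef (ptG2 n) (Sum.inl e.1.2) (Sum.inr e) (Sum.inl f.1.2) (Sum.inr f) := by
  have ha := e.1.1.isLt
  refine ⟨?_, ?_, ?_, ?_⟩ <;> simp only [Bef, ptG2, Sum.elim_inl, Sum.elim_inr]
  · have := @block_lt (e.1.2:ℕ) (f.1.2:ℕ) n n (n+1) h (by omega); omega
  · have := @block_lt (e.1.2:ℕ) (f.1.2:ℕ) n (f.1.1:ℕ) (n+1) h (by omega); omega
  · have := @block_lt (e.1.2:ℕ) (f.1.2:ℕ) (e.1.1:ℕ) n (n+1) h (by omega); omega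
  · have := @block_lt (e.1.2:ℕ) (f.1.2:ℕ) (e.1.1:ℕ) (f.1.1:ℕ) (n+1) h (by omega); omega


/-! ### Realizer facts -/

private lemma realizer_exists_lt {n d : ℕ} {L : Fin d → KIdx n → ℕ}
    (hR : IsRealizer (canonRel n) L) {e f : KIdx n} (hne : e ≠ f)
    (hnc : ¬ canonRel n f e) : ∃ k, L k e < L k f := by
  by_contra hx
  push_neg at hx
  have hall : ∀ k, L k f < L k e := by
    intro k
    have h1 := hx k
    have h2 : L k f ≠ L k e := fun hh => hne ((hR.1 k) hh.symm)
    omega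
  exact hnc ((hR.2 f e).2 ⟨hne.symm, hall⟩)

/-- The key lemma: separating an edge at the left endpoint of `e` from an edge at
the right endpoint of `f`, using the realizer orders. -/
private lemma sepLR {n d : ℕ} (hn : 0 < n) {L : Fin d → KIdx n → ℕ}
    (hR : IsRealizer (canonRel n) L) (e f : KIdx n) (hef : e ≠ f)
    (hij : (e.1.1 : ℕ) ≠ (f.1.2 : ℕ)) :
    ∃ k : Fin d,
      Bef (extF n (L k)) (Sum.inl e.1.1) (Sum.inr e) (Sum.inl f.1.2) (Sum.inr f) ∨
      Bef (extF n (L k)) (Sum.inl f.1.2) (Sum.inr f) (Sum.inl e.1.1) (Sum.inr e) := by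
  by_cases hc : canonRel n f e
  · -- f is entirely to the left of e : edge at f comes first
    have hfe : (f.1.2 : ℕ) ≤ (e.1.1 : ℕ) := hc
    have hnc : ¬ canonRel n e f := by
      intro hh
      have h1 : (e.1.2 : ℕ) ≤ (f.1.1 : ℕ) := hh
      have := kidx_lt e; have := kidx_lt f
      omega
    obtain ⟨k, hk⟩ := realizer_exists_lt hR hef.symm hnc
    refine ⟨k, Or.inr ⟨?_, ?_, ?_, ?_⟩⟩
    · -- point f.2 < point e.1
      exact pt_lt_pt (L k) (by omega)
    · -- point f.2 < w_e : every interval ending ≤ f.2 is below e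
      refine pt_lt_w (L k) (Mx_lt (L k) (by omega) ?_)
      intro g hg
      have : canonRel n g e := by
        show (g.1.2 : ℕ) ≤ (e.1.1 : ℕ); omega
      have := ((hR.2 g e).1 this).2 k
      omega
    · -- w_f < point e.1 : f ends at f.2 ≤ e.1
      exact w_lt_pt hn (L k) (le_Mx (L k) (by omega))
    · exact w_lt_w hn (L k) hk
  · -- e.1 < f.2 : edge at e comes first
    have hlt : (e.1.1 : ℕ) < (f.1.2 : ℕ) := by
      have : ¬ ((f.1.2 : ℕ) ≤ (e.1.1 : ℕ)) := hc
      omega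
    obtain ⟨k, hk⟩ := realizer_exists_lt hR hef hc
    refine ⟨k, Or.inl ⟨?_, ?_, ?_, ?_⟩⟩
    · exact pt_lt_pt (L k) hlt
    · -- point e.1 < w_f : every interval ending ≤ e.1 is below e, and L k e < L k f
      refine pt_lt_w (L k) (Mx_lt (L k) (by omega) ?_)
      intro g hg
      have hge : canonRel n g e := by
        show (g.1.2 : ℕ) ≤ (e.1.1 : ℕ); omega
      have := ((hR.2 g e).1 hge).2 k
      omega
    · -- w_e < point f.2 : since L k e < L k f and f ends at f.2
      have h1 : L k f + 1 ≤ Mx n (L k) (f.1.2:ℕ) := le_Mx (L k) (le_refl _)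
      exact w_lt_pt hn (L k) (by omega)
    · exact w_lt_w hn (L k) hk

/-- The core separation statement for two disjoint edges. -/
private lemma core {n d : ℕ} (hn : 0 < n) {L : Fin d → KIdx n → ℕ}
    (hR : IsRealizer (canonRel n) L)
    (F : Fin (d+2) → Fin n ⊕ KIdx n → ℕ)
    (hF1 : ∀ h : d < d + 2, F ⟨d, h⟩ = ptG1 n)
    (hF2 : ∀ h : d + 1 < d + 2, F ⟨d+1, h⟩ = ptG2 n)
    (hFk : ∀ (k : ℕ) (h : k < d), F ⟨k, by omega⟩ = extF n (L ⟨k, h⟩))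
    (i j : Fin n) (e f : KIdx n)
    (hie : i = e.val.1 ∨ i = e.val.2) (hjf : j = f.val.1 ∨ j = f.val.2)
    (hij : i ≠ j) (hef : e ≠ f) :
    ∃ k : Fin (d+2),
      Bef (F k) (Sum.inl i) (Sum.inr e) (Sum.inl j) (Sum.inr f) ∨
      Bef (F k) (Sum.inl j) (Sum.inr f) (Sum.inl i) (Sum.inr e) := by
  have hijv : (i : ℕ) ≠ (j : ℕ) := fun hh => hij (Fin.ext hh)
  rcases hie with hie | hie <;> rcases hjf with hjf | hjf <;> subst hie <;> subst hjf
  · -- left-left : use ptG1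
    refine ⟨⟨d, by omega⟩, ?_⟩
    rw [hF1 (by omega)]
    rcases lt_or_gt_of_ne hijv with hlt | hlt
    · exact Or.inl (bef_G1 e f hlt)
    · exact Or.inr (bef_G1 f e hlt)
  · -- left-right : use sepLR
    obtain ⟨k, hk⟩ := sepLR hn hR e f hef hijv
    refine ⟨⟨(k:ℕ), by omega⟩, ?_⟩
    rw [hFk (k:ℕ) k.isLt]
    simpa using hk
  · -- right-left : use sepLR with the edges swapped
    obtain ⟨k, hk⟩ := sepLR hn hR f e hef.symm (Ne.symm hijv)
    refine ⟨⟨(k:ℕ), by omega⟩, ?_⟩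
    rw [hFk (k:ℕ) k.isLt]
    simpa using hk.symm
  · -- right-right : use ptG2
    refine ⟨⟨d+1, by omega⟩, ?_⟩
    rw [hF2 (by omega)]
    rcases lt_or_gt_of_ne hijv with hlt | hlt
    · exact Or.inl (bef_G2 e f hlt)
    · exact Or.inr (bef_G2 f e hlt)



private lemma ksub_adj {n : ℕ} {x y : Fin n ⊕ KIdx n} (h : (Ksub n).Adj x y) :
    ∃ (i : Fin n) (e : KIdx n), (i = e.val.1 ∨ i = e.val.2) ∧
      ((x = Sum.inl i ∧ y = Sum.inr e) ∨ (x = Sum.inr e ∧ y = Sum.inl i)) := by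
  rw [Ksub, SimpleGraph.fromRel_adj] at h
  rcases h.2 with ⟨i, e, hx, hy, hie⟩ | ⟨i, e, hy, hx, hie⟩
  · exact ⟨i, e, hie, Or.inl ⟨hx, hy⟩⟩
  · exact ⟨i, e, hie, Or.inr ⟨hx, hy⟩⟩

private lemma sep_exists_s8 (n d : ℕ) (hn : 0 < n) (L : Fin d → KIdx n → ℕ)
    (hR : IsRealizer (canonRel n) L) :
    ∃ F : Fin (d+2) → (Fin n ⊕ KIdx n) → ℕ, SepFamily (Ksub n) F := by
  classical
  refine ⟨fun k => if h : (k:ℕ) < d then extF n (L ⟨(k:ℕ), h⟩)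
    else if (k:ℕ) = d then ptG1 n else ptG2 n, ?_, ?_⟩
  · intro k
    by_cases h : (k:ℕ) < d
    · simpa only [dif_pos h] using extF_inj hn (hR.1 _)
    · by_cases h2 : (k:ℕ) = d
      · simpa only [dif_neg h, if_pos h2] using ptG1_inj n
      · simpa only [dif_neg h, if_neg h2] using ptG2_inj n
  · intro a b c d' hab hcd hac had hbc hbd
    set F : Fin (d+2) → (Fin n ⊕ KIdx n) → ℕ := fun k =>
      if h : (k:ℕ) < d then extF n (L ⟨(k:ℕ), h⟩)
      else if (k:ℕ) = d then ptG1 n else ptG2 n with hFdef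
    have hF1 : ∀ h : d < d + 2, F ⟨d, h⟩ = ptG1 n := by
      intro h; simp [hFdef]
    have hF2 : ∀ h : d + 1 < d + 2, F ⟨d+1, h⟩ = ptG2 n := by
      intro h; simp [hFdef]
    have hFk : ∀ (k : ℕ) (h : k < d), F ⟨k, by omega⟩ = extF n (L ⟨k, h⟩) := by
      intro k h; simp [hFdef, dif_pos h]
    obtain ⟨i, e, hie, hxy⟩ := ksub_adj hab
    obtain ⟨j, f, hjf, huv⟩ := ksub_adj hcd
    rcases hxy with ⟨ha, hb⟩ | ⟨ha, hb⟩ <;> rcases huv with ⟨hc, hd⟩ | ⟨hc, hd⟩ <;>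
        subst ha <;> subst hb <;> subst hc <;> subst hd
    · have hij : i ≠ j := fun hh => hac (congrArg Sum.inl hh)
      have hef : e ≠ f := fun hh => hbd (congrArg Sum.inr hh)
      obtain ⟨k, hk⟩ := core hn hR F hF1 hF2 hFk i j e f hie hjf hij hef
      refine ⟨k, ?_⟩
      rcases hk with ⟨h1, h2, h3, h4⟩ | ⟨h1, h2, h3, h4⟩
      · exact Or.inl ⟨h1, h2, h3, h4⟩
      · exact Or.inr ⟨h1, h3, h2, h4⟩
    · have hij : i ≠ j := fun hh => had (congrArg Sum.inl hh)
      have hef : e ≠ f := fun hh => hbc (congrArg Sum.inr hh)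
      obtain ⟨k, hk⟩ := core hn hR F hF1 hF2 hFk i j e f hie hjf hij hef
      refine ⟨k, ?_⟩
      rcases hk with ⟨h1, h2, h3, h4⟩ | ⟨h1, h2, h3, h4⟩
      · exact Or.inl ⟨h2, h1, h4, h3⟩
      · exact Or.inr ⟨h3, h1, h4, h2⟩
    · have hij : i ≠ j := fun hh => hbc (congrArg Sum.inl hh)
      have hef : e ≠ f := fun hh => had (congrArg Sum.inr hh)
      obtain ⟨k, hk⟩ := core hn hR F hF1 hF2 hFk i j e f hie hjf hij hef
      refine ⟨k, ?_⟩
      rcases hk with ⟨h1, h2, h3, h4⟩ | ⟨h1, h2, h3, h4⟩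
      · exact Or.inl ⟨h3, h4, h1, h2⟩
      · exact Or.inr ⟨h2, h4, h1, h3⟩
    · have hij : i ≠ j := fun hh => hbd (congrArg Sum.inl hh)
      have hef : e ≠ f := fun hh => hac (congrArg Sum.inr hh)
      obtain ⟨k, hk⟩ := core hn hR F hF1 hF2 hFk i j e f hie hjf hij hef
      refine ⟨k, ?_⟩
      rcases hk with ⟨h1, h2, h3, h4⟩ | ⟨h1, h2, h3, h4⟩
      · exact Or.inl ⟨h4, h3, h2, h1⟩
      · exact Or.inr ⟨h4, h2, h3, h1⟩



/-! ### Existence of some realizer of the canonical interval order -/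

private lemma realizer_exists_s8 (n : ℕ) :
    ∃ (m : ℕ) (L : Fin m → KIdx n → ℕ), IsRealizer (canonRel n) L := by
  classical
  -- base key, a linear extension of the order
  set K : KIdx n → ℕ := fun e => (e.1.1 : ℕ) * n + (e.1.2 : ℕ) with hKdef
  have hKbound : ∀ x : KIdx n, K x < n * n := by
    intro x
    have h1 : (x.1.1 : ℕ) < n := x.1.1.isLt
    have h2 : (x.1.2 : ℕ) < n := x.1.2.isLt
    have := @block_lt (x.1.1:ℕ) n (x.1.2:ℕ) 0 n h1 h2
    simpa [hKdef] using (by omega : (x.1.1:ℕ) * n + (x.1.2:ℕ) < n * n)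
  have hKinj : Function.Injective K := by
    intro x y h
    simp only [hKdef] at h
    have := block_eq (N := n) x.1.2.isLt y.1.2.isLt h
    exact kidx_ext this.1 this.2
  have hKmono : ∀ x y : KIdx n, canonRel n x y → K x < K y := by
    intro x y hxy
    have h1 : (x.1.2 : ℕ) ≤ (y.1.1 : ℕ) := hxy
    have h2 : (x.1.1 : ℕ) < (x.1.2 : ℕ) := kidx_lt x
    have := @block_lt (x.1.1:ℕ) (y.1.1:ℕ) (x.1.2:ℕ) (y.1.2:ℕ) n (by omega) x.1.2.isLt
    simpa [hKdef] using this
  -- class of x relative to g : below g, equal to g, or other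
  set cl : KIdx n → KIdx n → ℕ :=
    fun g x => if canonRel n x g then 0 else if x = g then 1 else 2 with hcldef
  set Lf : KIdx n → KIdx n → ℕ := fun g x => cl g x * (n * n) + K x with hLfdef
  have hclmono : ∀ g x y, canonRel n x y → cl g x ≤ cl g y := by
    intro g x y hxy
    have hx2 : (x.1.2 : ℕ) ≤ (y.1.1 : ℕ) := hxy
    by_cases hyg : canonRel n y g
    · have hy2 : (y.1.2 : ℕ) ≤ (g.1.1 : ℕ) := hyg
      have hxg : canonRel n x g := by
        show (x.1.2 : ℕ) ≤ (g.1.1 : ℕ)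
        have := kidx_lt y; omega
      simp [hcldef, hxg, hyg]
    · by_cases hy : y = g
      · have hxg : canonRel n x g := by rw [← hy]; exact hxy
        simp [hcldef, hxg]
      · have hy2 : cl g y = 2 := by simp [hcldef, hyg, hy]
        have hx2' : cl g x ≤ 2 := by simp only [hcldef]; split_ifs <;> omega
        omega
  have hLfmono : ∀ g x y, canonRel n x y → Lf g x < Lf g y := by
    intro g x y hxy
    simp only [hLfdef]
    exact Nat.add_lt_add_of_le_of_lt
      (Nat.mul_le_mul (hclmono g x y hxy) (le_refl _)) (hKmono x y hxy)
  have hLfinj : ∀ g, Function.Injective (Lf g) := by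
    intro g x y h
    simp only [hLfdef] at h
    have := block_eq (N := n * n) (hKbound x) (hKbound y) h
    exact hKinj this.2
  have hirr : ∀ x : KIdx n, ¬ canonRel n x x := by
    intro x hx
    have h1 : (x.1.2 : ℕ) ≤ (x.1.1 : ℕ) := hx
    have := kidx_lt x; omega
  have hne_of : ∀ x y : KIdx n, canonRel n x y → x ≠ y := by
    intro x y hxy hh; subst hh; exact hirr x hxy
  refine ⟨Fintype.card (KIdx n),
    fun i => Lf ((Fintype.equivFin (KIdx n)).symm i), ?_, ?_⟩
  · intro i; exact hLfinj _
  · intro x y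
    constructor
    · intro hxy
      exact ⟨hne_of x y hxy, fun i => hLfmono _ x y hxy⟩
    · rintro ⟨hne, hall⟩
      have h := hall (Fintype.equivFin (KIdx n) y)
      simp only [Equiv.symm_apply_apply] at h
      by_contra hnc
      -- then cl y x = 2, so Lf y x ≥ 2 n² > n² + K y = Lf y y
      have hclx : cl y x = 2 := by
        simp only [hcldef]
        rw [if_neg hnc, if_neg hne]
      have hcly : cl y y = 1 := by
        simp only [hcldef]
        rw [if_neg (hirr y)]; simp
      rw [hLfdef] at h
      simp only [hclx, hcly] at h
      have := hKbound y
      omega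

/-- For every `n ≥ 2`, `π(K_n^{1/2}) ≤ dim(C_n) + 2`. -/
theorem stmt8 (n : ℕ) (hn : 2 ≤ n) :
    sepDim (Ksub n) ≤ orderDim (canonRel n) + 2 := by
  obtain ⟨m, L0, hL0⟩ := realizer_exists_s8 n
  have hTne : {m : ℕ | ∃ L : Fin m → KIdx n → ℕ, IsRealizer (canonRel n) L}.Nonempty :=
    ⟨m, L0, hL0⟩
  have hmem : orderDim (canonRel n) ∈
      {m : ℕ | ∃ L : Fin m → KIdx n → ℕ, IsRealizer (canonRel n) L} := by
    rw [orderDim]; exact Nat.sInf_mem hTne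
  obtain ⟨L, hL⟩ := hmem
  obtain ⟨F, hF⟩ := sep_exists_s8 n (orderDim (canonRel n)) (by omega) L hL
  rw [sepDim]
  exact Nat.sInf_le ⟨F, hF⟩
end

section
/- For every ε > 0 there exists N such that for all n ≥ N, the separation dimension of the fully subdivided complete graph satisfies π(K_n^{1/2}) ≤ (1 + ε) · log log (n − 1). -/
/-!
Number the branch vertices of `K_n^{1/2}` by `L`-bit integers. An order `σ` of them induces an
order of `K_n^{1/2}`: sort lexicographically by `(min, max)` of the `σ`-values of the ends, a branch
vertex `x` counting as the degenerate interval `(x, x)`. Then the half-edges `x w_e` and `y w_f`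
come apart as soon as `x` precedes both ends of `f`, or `y` both ends of `e`; so any family of
orders in which every `z` comes before any two other vertices `u, v` (a 3-suitable family) works.
The orders `x ↦ x xor m` are such a family as soon as the masks `m` realise every bit pattern on
every pair of positions, since each comparison is decided by the highest differing bit. Masks of
this kind are the rows of the matrix whose `L ≤ C(2t, t)` columns are distinct `t`-subsets of
`[2t]`, together with the zero and all-ones masks: `2t + 2 = log L + O(log log L)` orders.
-/

open Finset Function Filter

section OrderRank

variable {V α : Type*} [Fintype V] [LinearOrder α]

def orderRank (f : V → α) (v : V) : ℕ := #{w | f w < f v}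

lemma orderRank_le_orderRank {f : V → α} {v w : V} (h : f v ≤ f w) :
    orderRank f v ≤ orderRank f w :=
  card_le_card fun _ hu => by simp only [mem_filter_univ] at hu ⊢; exact hu.trans_le h

lemma orderRank_lt_orderRank_iff {f : V → α} {v w : V} :
    orderRank f v < orderRank f w ↔ f v < f w := by
  refine ⟨fun h => lt_of_not_ge fun hwv => h.not_ge (orderRank_le_orderRank hwv), fun h => ?_⟩
  refine card_lt_card <| (ssubset_iff_of_subset fun u hu => ?_).2 ⟨v, by simpa using h, by simp⟩
  simp only [mem_filter_univ] at hu ⊢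
  exact hu.trans h

lemma orderRank_injective {f : V → α} (hf : Injective f) : Injective (orderRank f) :=
  fun _ _ h =>
  hf <| le_antisymm (not_lt.1 fun hwv => h.not_gt (orderRank_lt_orderRank_iff.2 hwv))
      (not_lt.1 fun hvw => h.not_lt (orderRank_lt_orderRank_iff.2 hvw))

theorem sepDim_le_card {ι : Type*} [Fintype ι] (G : SimpleGraph V) (F : ι → V → α)
    (hF : ∀ i, Injective (F i))
    (hsep : ∀ a b c d, G.Adj a b → G.Adj c d → a ≠ c → a ≠ d → b ≠ c → b ≠ d →
      ∃ i, (F i a < F i c ∧ F i a < F i d ∧ F i b < F i c ∧ F i b < F i d) ∨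
        (F i c < F i a ∧ F i d < F i a ∧ F i c < F i b ∧ F i d < F i b)) :
    sepDim G ≤ Fintype.card ι := by
  let e := Fintype.equivFin ι
  refine Nat.sInf_le
    ⟨fun j => orderRank (F (e.symm j)), fun j => orderRank_injective (hF _), ?_⟩
  intro a b c d hab hcd hac had hbc hbd
  obtain ⟨i, hi⟩ := hsep a b c d hab hcd hac had hbc hbd
  exact ⟨e i, by simpa only [Equiv.symm_apply_apply, orderRank_lt_orderRank_iff] using hi⟩

end OrderRank

lemma KIdx.eq_of_common_ends {n : ℕ} {e f : KIdx n} {x y : Fin n}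
    (hxe : x = e.1.1 ∨ x = e.1.2) (hye : y = e.1.1 ∨ y = e.1.2)
    (hxf : x = f.1.1 ∨ x = f.1.2) (hyf : y = f.1.1 ∨ y = f.1.2) (hxy : x ≠ y) : e = f := by
  obtain ⟨⟨a, b⟩, hab⟩ := e
  obtain ⟨⟨c, d⟩, hcd⟩ := f
  simp only at hxe hye hxf hyf hab hcd
  ext <;> simp only <;> omega

namespace Ksub

variable {n : ℕ}

lemma exists_of_adj {a b : Fin n ⊕ KIdx n} (h : (Ksub n).Adj a b) :
    ∃ (x : Fin n) (e : KIdx n), (x = e.1.1 ∨ x = e.1.2) ∧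
      (a = .inl x ∧ b = .inr e ∨ a = .inr e ∧ b = .inl x) := by
  obtain ⟨-, ⟨x, e, rfl, rfl, hx⟩ | ⟨x, e, rfl, rfl, hx⟩⟩ := (SimpleGraph.fromRel_adj _ _ _).1 h
  exacts [⟨x, e, hx, .inl ⟨rfl, rfl⟩⟩, ⟨x, e, hx, .inr ⟨rfl, rfl⟩⟩]

def ends : Fin n ⊕ KIdx n → Fin n × Fin n := Sum.elim (fun x => (x, x)) Subtype.val

lemma eq_of_ends_eq_or_swap {v w : Fin n ⊕ KIdx n}
    (h : ends v = ends w ∨ ends v = (ends w).swap) : v = w := by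
  rcases v with x | ⟨⟨a, b⟩, hab : a < b⟩ <;> rcases w with y | ⟨⟨c, d⟩, hcd : c < d⟩ <;>
    simp only [ends, Sum.elim_inl, Sum.elim_inr, Prod.swap_prod_mk, Prod.mk.injEq,
      Sum.inl.injEq, Sum.inr.injEq, reduceCtorEq, Subtype.mk.injEq] at h ⊢ <;> omega

variable (σ : Fin n → ℕ)

def lo (v : Fin n ⊕ KIdx n) : ℕ := min (σ (ends v).1) (σ (ends v).2)

def key (v : Fin n ⊕ KIdx n) : ℕ ×ₗ ℕ := toLex (lo σ v, max (σ (ends v).1) (σ (ends v).2))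

variable {σ} {x : Fin n} {e : KIdx n} {v : Fin n ⊕ KIdx n}

lemma key_injective (hσ : Injective σ) : Injective (key σ) := by
  intro v w h
  simp only [key, lo, toLex_inj, Prod.mk.injEq] at h
  apply eq_of_ends_eq_or_swap
  have : σ (ends v).1 = σ (ends w).1 ∧ σ (ends v).2 = σ (ends w).2 ∨
      σ (ends v).1 = σ (ends w).2 ∧ σ (ends v).2 = σ (ends w).1 := by omega
  rcases this with ⟨h1, h2⟩ | ⟨h1, h2⟩
  · exact .inl (Prod.ext (hσ h1) (hσ h2))
  · exact .inr (Prod.ext (hσ h1) (hσ h2))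

lemma lo_le (hx : x = e.1.1 ∨ x = e.1.2) (hv : v = .inl x ∨ v = .inr e) : lo σ v ≤ σ x := by
  rcases hv with rfl | rfl <;> rcases hx with rfl | rfl <;> simp [lo, ends]

lemma min_le_lo (hx : x = e.1.1 ∨ x = e.1.2) (hv : v = .inl x ∨ v = .inr e) :
    min (σ e.1.1) (σ e.1.2) ≤ lo σ v := by
  rcases hv with rfl | rfl <;> rcases hx with rfl | rfl <;> simp [lo, ends]

lemma key_lt_key {y : Fin n} {f : KIdx n} {w : Fin n ⊕ KIdx n}
    (hx : x = e.1.1 ∨ x = e.1.2) (hv : v = .inl x ∨ v = .inr e)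
    (hy : y = f.1.1 ∨ y = f.1.2) (hw : w = .inl y ∨ w = .inr f)
    (h₁ : σ x < σ f.1.1) (h₂ : σ x < σ f.1.2) : key σ v < key σ w :=
  Prod.Lex.toLex_lt_toLex.2 <| .inl <|
    (lo_le hx hv).trans_lt <| (lt_min h₁ h₂).trans_le (min_le_lo hy hw)

end Ksub

def IsThreeSuitable {ι X : Type*} (σ : ι → X → ℕ) : Prop :=
  ∀ z u v, z ≠ u → z ≠ v → ∃ i, σ i z < σ i u ∧ σ i z < σ i v

open Ksub in
theorem sepDim_Ksub_le_card {n : ℕ} {ι : Type*} [Fintype ι] (σ : ι → Fin n → ℕ)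
    (hσ : ∀ i, Injective (σ i)) (hsuit : IsThreeSuitable σ) :
    sepDim (Ksub n) ≤ Fintype.card ι := by
  refine sepDim_le_card _ (fun i => key (σ i)) (fun i => key_injective (hσ i)) ?_
  intro a b c d hab hcd hac had hbc hbd
  obtain ⟨x, e, hxe, hab⟩ := exists_of_adj hab
  obtain ⟨y, f, hyf, hcd⟩ := exists_of_adj hcd
  have ha : a = .inl x ∨ a = .inr e := hab.imp And.left And.left
  have hb : b = .inl x ∨ b = .inr e := (hab.imp And.right And.right).symm
  have hc : c = .inl y ∨ c = .inr f := hcd.imp And.left And.left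
  have hd : d = .inl y ∨ d = .inr f := (hcd.imp And.right And.right).symm
  have hxy : x ≠ y := by
    rintro rfl
    rcases hab with ⟨rfl, -⟩ | ⟨-, rfl⟩ <;> rcases hcd with ⟨rfl, -⟩ | ⟨-, rfl⟩ <;> contradiction
  have hef : e ≠ f := by
    rintro rfl
    rcases hab with ⟨-, rfl⟩ | ⟨rfl, -⟩ <;> rcases hcd with ⟨-, rfl⟩ | ⟨rfl, -⟩ <;> contradiction
  by_cases hxf : x = f.1.1 ∨ x = f.1.2
  · have hye : ¬(y = e.1.1 ∨ y = e.1.2) := fun hye =>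
      hef (KIdx.eq_of_common_ends hxe hye hxf hyf hxy)
    obtain ⟨i, h₁, h₂⟩ := hsuit y e.1.1 e.1.2 (hye <| .inl ·) (hye <| .inr ·)
    exact ⟨i, .inr ⟨key_lt_key hyf hc hxe ha h₁ h₂, key_lt_key hyf hd hxe ha h₁ h₂,
      key_lt_key hyf hc hxe hb h₁ h₂, key_lt_key hyf hd hxe hb h₁ h₂⟩⟩
  · obtain ⟨i, h₁, h₂⟩ := hsuit x f.1.1 f.1.2 (hxf <| .inl ·) (hxf <| .inr ·)
    exact ⟨i, .inl ⟨key_lt_key hxe ha hyf hc h₁ h₂, key_lt_key hxe ha hyf hd h₁ h₂,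
      key_lt_key hxe hb hyf hc h₁ h₂, key_lt_key hxe hb hyf hd h₁ h₂⟩⟩

namespace Nat

lemma exists_highest_testBit_ne {z w : ℕ} (h : z ≠ w) :
    ∃ p, z.testBit p ≠ w.testBit p ∧ ∀ j, p < j → z.testBit j = w.testBit j := by
  obtain ⟨p, hp, hhigh⟩ := exists_most_significant_bit (xor_ne_zero_iff.2 h)
  refine ⟨p, ?_, fun j hj => ?_⟩
  · simpa [testBit_xor] using hp
  · simpa [testBit_xor] using hhigh j hj

lemma lt_of_testBit_ne {z w L p : ℕ} (hz : z < 2 ^ L) (hw : w < 2 ^ L)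
    (hp : z.testBit p ≠ w.testBit p) : p < L := by
  by_contra! hLp
  have h := Nat.pow_le_pow_right two_pos hLp
  exact hp <| (testBit_lt_two_pow (hz.trans_le h)).trans (testBit_lt_two_pow (hw.trans_le h)).symm

lemma xor_lt_xor_of_testBit {z w m p : ℕ} (hp : z.testBit p ≠ w.testBit p)
    (hhigh : ∀ j, p < j → z.testBit j = w.testBit j) (hm : m.testBit p = z.testBit p) :
    z ^^^ m < w ^^^ m :=
  lt_of_testBit p (by simp [hm]) (by simpa [hm] using hp.symm)
    (fun j hj => by simp [hhigh j hj])

lemma testBit_sum_two_pow (s : Finset ℕ) (p : ℕ) :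
    (∑ i ∈ s, 2 ^ i).testBit p = decide (p ∈ s) := by
  rw [Bool.eq_iff_iff, decide_eq_true_iff, ← mem_bitIndices, ← List.mem_toFinset,
    Finset.toFinset_bitIndices_sum_two_pow]

end Nat

theorem isThreeSuitable_xor_sum_two_pow {n L : ℕ} {𝒜 : Finset (Finset ℕ)} (hn : n ≤ 2 ^ L)
    (h𝒜 : ∀ p < L, ∀ q < L, 𝒜.Shatters {p, q}) :
    IsThreeSuitable fun (s : 𝒜) (x : Fin n) => (x : ℕ) ^^^ ∑ i ∈ s.1, 2 ^ i := by
  intro z u v hzu hzv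
  have hlt (x : Fin n) : (x : ℕ) < 2 ^ L := x.2.trans_le hn
  obtain ⟨p, hp, hphigh⟩ := Nat.exists_highest_testBit_ne (Fin.val_ne_of_ne hzu)
  obtain ⟨q, hq, hqhigh⟩ := Nat.exists_highest_testBit_ne (Fin.val_ne_of_ne hzv)
  obtain ⟨s, hs, hst⟩ := h𝒜 p (Nat.lt_of_testBit_ne (hlt z) (hlt u) hp)
    q (Nat.lt_of_testBit_ne (hlt z) (hlt v) hq) (filter_subset (fun j => (z : ℕ).testBit j) _)
  have hmask : ∀ j ∈ ({p, q} : Finset ℕ), (∑ i ∈ s, 2 ^ i).testBit j = (z : ℕ).testBit j := by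
    intro j hj
    have := congrArg (j ∈ ·) hst
    simp only [mem_inter, mem_filter, hj, true_and] at this
    simp [Nat.testBit_sum_two_pow, this]
  exact ⟨⟨s, hs⟩, Nat.xor_lt_xor_of_testBit hp hphigh (hmask p (by simp)),
    Nat.xor_lt_xor_of_testBit hq hqhigh (hmask q (by simp))⟩

lemma Finset.shatters_pair_of_forall {α : Type*} [DecidableEq α] {𝒜 : Finset (Finset α)} {p q : α}
    (h : ∀ P Q : Prop, (p = q → (P ↔ Q)) → ∃ u ∈ 𝒜, (p ∈ u ↔ P) ∧ (q ∈ u ↔ Q)) :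
    𝒜.Shatters {p, q} := by
  intro T hT
  obtain ⟨u, hu, hp, hq⟩ := h (p ∈ T) (q ∈ T) (by rintro rfl; rfl)
  refine ⟨u, hu, ext fun x => ?_⟩
  have := @hT x
  simp only [mem_inter, mem_insert, mem_singleton] at this ⊢
  constructor
  · rintro ⟨rfl | rfl, hx⟩ <;> tauto
  · intro hx; rcases this hx with rfl | rfl <;> tauto

theorem exists_card_le_forall_shatters_pair {L t : ℕ} (hL : L ≤ t.centralBinom) :
    ∃ 𝒜 : Finset (Finset ℕ), #𝒜 ≤ 2 * t + 2 ∧ ∀ p < L, ∀ q < L, 𝒜.Shatters {p, q} := by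
  obtain ⟨col, hcol, hinj⟩ := (range L).finite_toSet.exists_injOn_of_encard_le
    (t := (powersetCard t (range (2 * t)) : Set (Finset ℕ))) (by
      simp only [Set.encard_coe_eq_coe_finsetCard, card_range, card_powersetCard]
      exact_mod_cast hL.trans_eq (Nat.centralBinom_eq_two_mul_choose t))
  have hcol (p : ℕ) (hp : p < L) : col p ⊆ range (2 * t) ∧ #(col p) = t :=
    mem_powersetCard.1 (hcol (by simpa using hp))
  let row (r : ℕ) : Finset ℕ := {p ∈ range L | r ∈ col p}
  refine ⟨insert ∅ (insert (range L) ((range (2 * t)).image row)), ?_, ?_⟩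
  · have h₁ := card_insert_le ∅ (insert (range L) ((range (2 * t)).image row))
    have h₂ := card_insert_le (range L) ((range (2 * t)).image row)
    have h₃ := card_image_le (s := range (2 * t)) (f := row)
    rw [card_range] at h₃
    omega
  have hsep : ∀ p < L, ∀ q < L, p ≠ q → ∃ r < 2 * t, p ∈ row r ∧ q ∉ row r := by
    intro p hp q hq hpq
    have hsub : ¬col p ⊆ col q := fun h => hpq <| hinj (by simpa using hp) (by simpa using hq) <|
      eq_of_subset_of_card_le h ((hcol q hq).2.trans (hcol p hp).2.symm).le
    obtain ⟨r, hrp, hrq⟩ := not_subset.1 hsub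
    exact ⟨r, mem_range.1 ((hcol p hp).1 hrp), by simp [row, hp, hrp], by simp [row, hrq]⟩
  intro p hp q hq
  refine shatters_pair_of_forall fun P Q hPQ => ?_
  by_cases hP : P <;> by_cases hQ : Q
  · exact ⟨range L, by simp, by simp [hp, hP], by simp [hq, hQ]⟩
  · obtain ⟨r, hr, hpr, hqr⟩ := hsep p hp q hq (fun h => hQ ((hPQ h).1 hP))
    exact ⟨row r, mem_insert_of_mem <| mem_insert_of_mem <| mem_image_of_mem row (mem_range.2 hr),
      by simp [hpr, hP], by simp [hqr, hQ]⟩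
  · obtain ⟨r, hr, hqr, hpr⟩ := hsep q hq p hp (fun h => hP ((hPQ h.symm).2 hQ))
    exact ⟨row r, mem_insert_of_mem <| mem_insert_of_mem <| mem_image_of_mem row (mem_range.2 hr),
      by simp [hpr, hP], by simp [hqr, hQ]⟩
  · exact ⟨∅, by simp, by simp [hP], by simp [hQ]⟩

theorem sepDim_Ksub_le_of_le_centralBinom {n L t : ℕ} (hn : n ≤ 2 ^ L)
    (hL : L ≤ t.centralBinom) : sepDim (Ksub n) ≤ 2 * t + 2 := by
  obtain ⟨𝒜, hcard, h𝒜⟩ := exists_card_le_forall_shatters_pair hL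
  have hinj (s : 𝒜) : Injective fun x : Fin n => (x : ℕ) ^^^ ∑ i ∈ s.1, 2 ^ i := by
    intro x y h
    generalize ∑ i ∈ s.1, 2 ^ i = m at h
    exact Fin.ext <| by simpa [Nat.xor_assoc] using congrArg (· ^^^ m) h
  calc sepDim (Ksub n) ≤ Fintype.card 𝒜 :=
        sepDim_Ksub_le_card _ hinj (isThreeSuitable_xor_sum_two_pow hn h𝒜)
    _ ≤ 2 * t + 2 := (Fintype.card_coe 𝒜).trans_le hcard

lemma Nat.two_pow_le_centralBinom {m t : ℕ} (hm : m ≤ 2 * t) (h : 2 * t ≤ 2 ^ (2 * t - m)) :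
    2 ^ m ≤ t.centralBinom := by
  rcases t.eq_zero_or_pos with rfl | ht
  · simp [Nat.le_zero.1 hm]
  refine Nat.le_of_mul_le_mul_left ?_ (by omega : 0 < 2 * t)
  calc 2 * t * 2 ^ m ≤ 2 ^ (2 * t - m) * 2 ^ m := by gcongr
    _ = 4 ^ t := by rw [← pow_add, Nat.sub_add_cancel hm, pow_mul]; norm_num
    _ ≤ 2 * t * t.centralBinom := four_pow_le_two_mul_self_mul_centralBinom t ht

theorem sepDim_Ksub_le_log_log (n : ℕ) :
    sepDim (Ksub n) ≤
      Nat.log 2 (Nat.log 2 (n - 1)) + 2 * Nat.log 2 (Nat.log 2 (Nat.log 2 (n - 1))) + 8 := by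
  set l := Nat.log 2 (Nat.log 2 (n - 1))
  set j := Nat.log 2 l
  have hn : n ≤ 2 ^ (Nat.log 2 (n - 1) + 1) := by
    have := Nat.lt_pow_succ_log_self one_lt_two (n - 1); omega
  have hL : Nat.log 2 (n - 1) + 1 ≤ 2 ^ (l + 1) := Nat.lt_pow_succ_log_self one_lt_two _
  have hl : l < 2 * 2 ^ j := by
    simpa [pow_succ, mul_comm] using Nat.lt_pow_succ_log_self one_lt_two l
  have hj : j < 2 ^ j := Nat.lt_two_pow_self
  have hC : 2 ^ (l + 1) ≤ ((l + 2 * j + 6) / 2).centralBinom := by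
    refine Nat.two_pow_le_centralBinom (by omega) ?_
    have h₁ : 1 ≤ 2 ^ j := Nat.one_le_two_pow
    calc 2 * ((l + 2 * j + 6) / 2) ≤ 16 * (2 ^ j * 2 ^ j) := by
          have h₂ : 2 * ((l + 2 * j + 6) / 2) ≤ l + 2 * j + 6 := Nat.mul_div_le _ _
          nlinarith
      _ = 2 ^ (2 * j + 4) := by ring
      _ ≤ 2 ^ (2 * ((l + 2 * j + 6) / 2) - (l + 1)) := Nat.pow_le_pow_right two_pos (by omega)
  have := sepDim_Ksub_le_of_le_centralBinom hn (hL.trans hC)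
  omega

open Real in
lemma eventually_two_mul_natLog_add_le {ε : ℝ} (hε : 0 < ε) :
    ∀ᶠ l : ℕ in atTop, (2 * Nat.log 2 l + 8 : ℝ) ≤ ε * l := by
  have ho : (fun x : ℝ => 2 * logb 2 x + 8) =o[atTop] id :=
    (isLittleO_logb_id_atTop.const_mul_left 2).add (Asymptotics.isLittleO_const_id_atTop 8)
  filter_upwards [(ho.comp_tendsto tendsto_natCast_atTop_atTop).bound hε,
    eventually_ge_atTop 1] with l hl hl1
  have hlog : (Nat.log 2 l : ℝ) ≤ logb 2 l := by exact_mod_cast natLog_le_logb l 2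
  have hpos : 0 ≤ logb 2 (l : ℝ) := logb_nonneg one_lt_two (by exact_mod_cast hl1)
  simp only [Function.comp_apply, id, Real.norm_eq_abs, Nat.abs_cast] at hl
  rw [abs_of_nonneg (by positivity)] at hl
  linarith

lemma tendsto_natLog_natLog_sub_one :
    Tendsto (fun n : ℕ => Nat.log 2 (Nat.log 2 (n - 1))) atTop atTop := by
  refine tendsto_atTop_atTop.2 fun b => ⟨2 ^ 2 ^ b + 1, fun n hn => ?_⟩
  exact Nat.le_log_of_pow_le one_lt_two <| Nat.le_log_of_pow_le one_lt_two (by omega)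

lemma natLog_natLog_le_logb_logb {n : ℕ} (hn : 3 ≤ n) :
    (Nat.log 2 (Nat.log 2 (n - 1)) : ℝ) ≤ Real.logb 2 (Real.logb 2 ((n : ℝ) - 1)) := by
  have hlog : 1 ≤ Nat.log 2 (n - 1) := Nat.le_log_of_pow_le one_lt_two (by omega)
  calc (Nat.log 2 (Nat.log 2 (n - 1)) : ℝ) ≤ Real.logb 2 (Nat.log 2 (n - 1)) := by
        exact_mod_cast Real.natLog_le_logb _ 2
    _ ≤ Real.logb 2 (Real.logb 2 ((n - 1 : ℕ) : ℝ)) :=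
        Real.logb_le_logb_of_le one_lt_two (by positivity)
          (by exact_mod_cast Real.natLog_le_logb _ 2)
    _ = Real.logb 2 (Real.logb 2 ((n : ℝ) - 1)) := by rw [Nat.cast_sub (by omega), Nat.cast_one]

/-- For every `ε > 0` there is `N` such that for all `n ≥ N`,
`π(K_n^{1/2}) ≤ (1 + ε) · log log (n − 1)` (logarithms to base 2). -/
theorem stmt9 (ε : ℝ) (hε : 0 < ε) :
    ∃ N : ℕ, ∀ n : ℕ, N ≤ n →
      (sepDim (Ksub n) : ℝ) ≤ (1 + ε) * Real.logb 2 (Real.logb 2 ((n : ℝ) - 1)) := by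
  obtain ⟨N, hN⟩ := eventually_atTop.1 <|
    (tendsto_natLog_natLog_sub_one.eventually (eventually_two_mul_natLog_add_le hε)).and
      (eventually_ge_atTop 3)
  refine ⟨N, fun n hn => ?_⟩
  obtain ⟨hsmall, hn3⟩ := hN n hn
  set l := Nat.log 2 (Nat.log 2 (n - 1))
  calc (sepDim (Ksub n) : ℝ) ≤ l + (2 * Nat.log 2 l + 8 : ℝ) := by
        exact_mod_cast (sepDim_Ksub_le_log_log n).trans_eq (by ring)
    _ ≤ (1 + ε) * l := by linarith
    _ ≤ (1 + ε) * Real.logb 2 (Real.logb 2 ((n : ℝ) - 1)) := by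
        gcongr
        exact natLog_natLog_le_logb_logb hn3
end

section
/- Let K_p^{1/2} have original vertices v_1, …, v_p and subdivision vertices u_{ij} (for 1 ≤ i < j ≤ p) adjacent exactly to v_i and v_j. Let F be a family of linear orders of the vertex set of K_p^{1/2} that is pairwise suitable for K_p^{1/2} and satisfies: (P1) v_1 ≺_σ v_2 ≺_σ ⋯ ≺_σ v_p for every σ ∈ F, and (P2) v_i ≺_σ u_{ij} ≺_σ v_j for all i < j and every σ ∈ F. Then |F| is at least the order dimension of the canonical open interval order C_p. -/
/-- If `F` is a pairwise suitable family for `K_p^{1/2}` satisfying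
(P1) `v_1 ≺ ⋯ ≺ v_p` in every order of `F`, and
(P2) `v_i ≺ u_{ij} ≺ v_j` in every order of `F`,
then `|F|` is at least the order dimension of the canonical open interval order `C_p`. -/
theorem stmt11 (p m : ℕ) (F : Fin m → (Fin p ⊕ KIdx p) → ℕ)
    (hF : SepFamily (Ksub p) F)
    (hP1 : ∀ i, ∀ a b : Fin p, a < b → F i (Sum.inl a) < F i (Sum.inl b))
    (hP2 : ∀ i, ∀ e : KIdx p,
      F i (Sum.inl e.val.1) < F i (Sum.inr e) ∧ F i (Sum.inr e) < F i (Sum.inl e.val.2)) :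
    orderDim (canonRel p) ≤ m := by
  apply Nat.sInf_le
  refine ⟨fun i e => F i (Sum.inr e), fun i => (hF.1 i).comp Sum.inr_injective, ?_⟩
  intro e f
  constructor
  · intro h
    have hne : e ≠ f := by
      intro heq; subst heq; exact absurd h (not_le.2 e.prop)
    refine ⟨hne, fun i => ?_⟩
    have h1 := (hP2 i e).2
    have h2 := (hP2 i f).1
    rcases lt_or_eq_of_le h with hlt | heq
    · exact h1.trans ((hP1 i _ _ hlt).trans h2)
    · rw [heq] at h1; exact h1.trans h2
  · rintro ⟨hne, hlt⟩
    by_contra hcon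
    rw [canonRel, not_le] at hcon
    have hadj1 : (Ksub p).Adj (Sum.inl e.val.2) (Sum.inr e) :=
      ⟨by simp, Or.inl ⟨e.val.2, e, rfl, rfl, Or.inr rfl⟩⟩
    have hadj2 : (Ksub p).Adj (Sum.inl f.val.1) (Sum.inr f) :=
      ⟨by simp, Or.inl ⟨f.val.1, f, rfl, rfl, Or.inl rfl⟩⟩
    obtain ⟨i, hcase⟩ := hF.2 _ _ _ _ hadj1 hadj2
      (by simp [Sum.inl.injEq]; exact (ne_of_gt hcon)) (by simp) (by simp)
      (by simp [hne])
    rcases hcase with ⟨h1, _, _, _⟩ | ⟨_, _, _, h4⟩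
    · exact absurd h1 (not_lt.2 (hP1 i _ _ hcon).le)
    · exact absurd (hlt i) (not_lt.2 h4.le)
end

section
/- Let K_p^{1/2} have original vertices v_1, …, v_p and subdivision vertices u_{ij} (for 1 ≤ i < j ≤ p) adjacent exactly to v_i and v_j. Let F be a family of linear orders of the vertex set of K_p^{1/2} that is pairwise suitable for K_p^{1/2} and satisfies v_1 ≺_σ ⋯ ≺_σ v_p and v_i ≺_σ u_{ij} ≺_σ v_j for all i < j and every σ ∈ F. Then for all i < j and k < l with the open intervals (i,j) and (k,l) having nonempty intersection, there exist σ_a, σ_b ∈ F with u_{ij} ≺_{σ_a} u_{kl} and u_{kl} ≺_{σ_b} u_{ij}. -/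
lemma Ksub_adj_left (p : ℕ) (e : KIdx p) : (Ksub p).Adj (Sum.inl e.val.1) (Sum.inr e) := by
  refine ⟨by simp, Or.inl ⟨e.val.1, e, rfl, rfl, Or.inl rfl⟩⟩

lemma Ksub_adj_right (p : ℕ) (e : KIdx p) : (Ksub p).Adj (Sum.inl e.val.2) (Sum.inr e) := by
  refine ⟨by simp, Or.inl ⟨e.val.2, e, rfl, rfl, Or.inr rfl⟩⟩

lemma aux_stmt12 {p m : ℕ} (F : Fin m → (Fin p ⊕ KIdx p) → ℕ)
    (hF : SepFamily (Ksub p) F)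
    (hP1 : ∀ i, ∀ a b : Fin p, a < b → F i (Sum.inl a) < F i (Sum.inl b))
    (e f : KIdx p) (hef : e ≠ f) (hlt : e.val.1 < f.val.2) :
    ∃ a, F a (Sum.inr e) < F a (Sum.inr f) := by
  obtain ⟨i, h⟩ := hF.2 (Sum.inl e.val.1) (Sum.inr e) (Sum.inl f.val.2) (Sum.inr f)
    (Ksub_adj_left p e) (Ksub_adj_right p f)
    (by simp [Sum.inl.injEq]; exact hlt.ne)
    (by simp) (by simp) (by simp [hef])
  rcases h with ⟨_, _, _, h4⟩ | ⟨h1, _, _, _⟩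
  · exact ⟨i, h4⟩
  · exact absurd h1 (not_lt_of_gt (hP1 i _ _ hlt))

/-- If `F` is a pairwise suitable family for `K_p^{1/2}` with `v_1 ≺ ⋯ ≺ v_p` and
`v_i ≺ u_{ij} ≺ v_j` in every order of `F`, then for any two distinct open intervals
`(i,j)` and `(k,l)` with nonempty intersection there are orders `σ_a, σ_b ∈ F` with
`u_{ij} ≺_{σ_a} u_{kl}` and `u_{kl} ≺_{σ_b} u_{ij}`. -/
theorem stmt12 (p m : ℕ) (F : Fin m → (Fin p ⊕ KIdx p) → ℕ)
    (hF : SepFamily (Ksub p) F)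
    (hP1 : ∀ i, ∀ a b : Fin p, a < b → F i (Sum.inl a) < F i (Sum.inl b))
    (hP2 : ∀ i, ∀ e : KIdx p,
      F i (Sum.inl e.val.1) < F i (Sum.inr e) ∧ F i (Sum.inr e) < F i (Sum.inl e.val.2))
    (e f : KIdx p) (hef : e ≠ f)
    (hint : f.val.1 < e.val.2 ∧ e.val.1 < f.val.2) :
    (∃ a, F a (Sum.inr e) < F a (Sum.inr f)) ∧
    (∃ b, F b (Sum.inr f) < F b (Sum.inr e)) := by
  exact ⟨aux_stmt12 F hF hP1 e f hef hint.2, aux_stmt12 F hF hP1 f e hef.symm hint.1⟩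
end

section
/- Let F be a pairwise suitable family of linear orders for K_n^{1/2}, with original vertices v_1, …, v_n and subdivision vertices u_{ij} (i < j) adjacent exactly to v_i and v_j. Then there exists a pairwise suitable family F' for K_n^{1/2} with |F'| = |F| such that in every order σ' ∈ F', for all i < j, the vertex u_{ij} lies strictly between v_i and v_j (i.e., either v_i ≺_{σ'} u_{ij} ≺_{σ'} v_j or v_j ≺_{σ'} u_{ij} ≺_{σ'} v_i). -/
def kcode (n : ℕ) (e : KIdx n) : ℕ := e.val.1.val * n + e.val.2.val

lemma kcode_lt (n : ℕ) (e : KIdx n) : kcode n e < n^2 := by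
  have h1 : e.val.1.val < n := e.val.1.isLt
  have h2 : e.val.2.val < n := e.val.2.isLt
  have h3 : (e.val.1.val + 1) * n ≤ n * n := Nat.mul_le_mul_right n h1
  have h4 : e.val.1.val * n + n = (e.val.1.val + 1) * n := by ring
  have h5 : n^2 = n * n := sq n
  unfold kcode
  omega

lemma kcode_inj (n : ℕ) {e f : KIdx n} (h : kcode n e = kcode n f) : e = f := by
  have h2 : e.val.2.val < n := e.val.2.isLt
  have h2' : f.val.2.val < n := f.val.2.isLt
  unfold kcode at h
  have hm : (e.val.1.val * n + e.val.2.val) % n = (f.val.1.val * n + f.val.2.val) % n := by rw [h]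
  rw [add_comm (↑(e.val.1) * n), add_comm (↑(f.val.1) * n), Nat.add_mul_mod_self_right, Nat.add_mul_mod_self_right, Nat.mod_eq_of_lt h2, Nat.mod_eq_of_lt h2'] at hm
  have h1 : e.val.1.val * n = f.val.1.val * n := by omega
  have h1' : e.val.1.val = f.val.1.val := Nat.eq_of_mul_eq_mul_right (by omega) h1
  apply Subtype.ext
  apply Prod.ext <;> apply Fin.ext <;> assumption

lemma decompK {K a b r s : ℕ} (hK : 0 < K) (hr : r < K) (hs : s < K)
    (h : a * K + r = b * K + s) : a = b ∧ r = s := by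
  have h1 : (a * K + r) % K = r := by rw [add_comm, Nat.add_mul_mod_self_right, Nat.mod_eq_of_lt hr]
  have h2 : (b * K + s) % K = s := by rw [add_comm, Nat.add_mul_mod_self_right, Nat.mod_eq_of_lt hs]
  have hrs : r = s := by rw [← h1, h, h2]
  subst hrs
  have : a * K = b * K := by omega
  exact ⟨Nat.eq_of_mul_eq_mul_right hK this, rfl⟩

def newF (n m : ℕ) (F : Fin m → (Fin n ⊕ KIdx n) → ℕ) (σ : Fin m) :
    (Fin n ⊕ KIdx n) → ℕ :=
  Sum.elim (fun v => F σ (Sum.inl v) * (2 * n ^ 2 + 4))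
    (fun e =>
      if F σ (Sum.inr e) < min (F σ (Sum.inl e.val.1)) (F σ (Sum.inl e.val.2)) then
        min (F σ (Sum.inl e.val.1)) (F σ (Sum.inl e.val.2)) * (2 * n ^ 2 + 4) + (1 + kcode n e)
      else if max (F σ (Sum.inl e.val.1)) (F σ (Sum.inl e.val.2)) < F σ (Sum.inr e) then
        (max (F σ (Sum.inl e.val.1)) (F σ (Sum.inl e.val.2)) - 1) * (2 * n ^ 2 + 4)
          + (2 * n ^ 2 + 4 - (1 + kcode n e))
      else F σ (Sum.inr e) * (2 * n ^ 2 + 4) + (1 + kcode n e))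

lemma newF_inr (n m : ℕ) (F : Fin m → (Fin n ⊕ KIdx n) → ℕ) (σ : Fin m) (e : KIdx n)
    (hinj : Function.Injective (F σ)) :
    ∃ q r, newF n m F σ (Sum.inr e) = q * (2 * n ^ 2 + 4) + r ∧ 0 < r ∧ r < 2 * n ^ 2 + 4 ∧
      (r = 1 + kcode n e ∨ r = 2 * n ^ 2 + 4 - (1 + kcode n e)) ∧
      min (F σ (Sum.inl e.val.1)) (F σ (Sum.inl e.val.2)) * (2 * n ^ 2 + 4)
        < newF n m F σ (Sum.inr e) ∧
      newF n m F σ (Sum.inr e)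
        < max (F σ (Sum.inl e.val.1)) (F σ (Sum.inl e.val.2)) * (2 * n ^ 2 + 4) ∧
      newF n m F σ (Sum.inr e)
        ≤ max (min (F σ (Sum.inl e.val.1)) (F σ (Sum.inl e.val.2))) (F σ (Sum.inr e))
            * (2 * n ^ 2 + 4) + n ^ 2 ∧
      min (max (F σ (Sum.inl e.val.1)) (F σ (Sum.inl e.val.2))) (F σ (Sum.inr e))
            * (2 * n ^ 2 + 4) + (n ^ 2 + 4)
        ≤ newF n m F σ (Sum.inr e) + (2 * n ^ 2 + 4) := by
  set N := n ^ 2 with hN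
  set K := 2 * N + 4 with hK
  set x1 := F σ (Sum.inl e.val.1) with hx1
  set x2 := F σ (Sum.inl e.val.2) with hx2
  set t := F σ (Sum.inr e) with ht
  have hKK : 2 * n ^ 2 + 4 = K := rfl
  have hcode : kcode n e < N := kcode_lt n e
  have hne : x1 ≠ x2 := by
    intro h
    have := hinj h
    have h12 : e.val.1 ≠ e.val.2 := Fin.ne_of_lt e.prop
    simp only [Sum.inl.injEq] at this
    exact h12 this
  have ht1 : t ≠ x1 := by
    intro h; exact absurd (hinj h) (by simp)
  have ht2 : t ≠ x2 := by
    intro h; exact absurd (hinj h) (by simp)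
  have hmul : ∀ a b : ℕ, a < b → a * K + K ≤ b * K := by
    intro a b h
    calc a * K + K = (a + 1) * K := by ring
    _ ≤ b * K := Nat.mul_le_mul_right K h
  set lo := min x1 x2 with hlo
  set hi := max x1 x2 with hhi
  have hlohi : lo < hi := by
    rcases lt_or_gt_of_ne hne with h | h
    · simp [hlo, hhi, min_eq_left h.le, max_eq_right h.le, h]
    · simp [hlo, hhi, min_eq_right h.le, max_eq_left h.le, h]
  have hGe : newF n m F σ (Sum.inr e) =
      if t < lo then lo * K + (1 + kcode n e)
      else if hi < t then (hi - 1) * K + (K - (1 + kcode n e))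
      else t * K + (1 + kcode n e) := by
    simp only [newF, Sum.elim_inr, ← hx1, ← hx2, ← ht, ← hlo, ← hhi, hKK]
  rw [hGe]
  split_ifs with h1 h2
  · -- t < lo
    have hmaxlt : max lo t = lo := max_eq_left h1.le
    have hminht : min hi t = t := min_eq_right (le_of_lt (h1.trans hlohi))
    refine ⟨lo, 1 + kcode n e, rfl, by omega, by omega, Or.inl rfl, by omega, ?_, ?_, ?_⟩
    · have := hmul lo hi hlohi; omega
    · rw [hmaxlt]; omega
    · rw [hminht]
      have := hmul t lo h1; omega
  · -- hi < t
    have hmaxlt : max lo t = t := max_eq_right (le_of_lt (hlohi.trans h2))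
    have hminht : min hi t = hi := min_eq_left h2.le
    have hhi1 : (hi - 1) * K + K = hi * K := by
      have h9 : hi - 1 + 1 = hi := by omega
      calc (hi - 1) * K + K = (hi - 1 + 1) * K := by ring
      _ = hi * K := by rw [h9]
    refine ⟨hi - 1, K - (1 + kcode n e), rfl, by omega, by omega, Or.inr rfl, ?_, by omega, ?_, ?_⟩
    · have := hmul lo hi hlohi; omega
    · rw [hmaxlt]
      have := hmul hi t h2; omega
    · rw [hminht]; omega
  · -- lo < t < hi
    have hlot : lo < t := by
      have : lo ≤ t := le_of_not_gt h1
      have : t ≠ lo := by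
        rcases min_choice x1 x2 with h | h <;> rw [hlo, h] <;> assumption
      omega
    have hthi : t < hi := by
      have : t ≤ hi := le_of_not_gt h2
      have : t ≠ hi := by
        rcases max_choice x1 x2 with h | h <;> rw [hhi, h] <;> assumption
      omega
    have hmaxlt : max lo t = t := max_eq_right hlot.le
    have hminht : min hi t = t := min_eq_right hthi.le
    refine ⟨t, 1 + kcode n e, rfl, by omega, by omega, Or.inl rfl, ?_, ?_, ?_, ?_⟩
    · have := hmul lo t hlot; omega
    · have := hmul t hi hthi; omega
    · rw [hmaxlt]; omega
    · rw [hminht]; omega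

lemma newF_inj (n m : ℕ) (F : Fin m → (Fin n ⊕ KIdx n) → ℕ) (σ : Fin m)
    (hinj : Function.Injective (F σ)) : Function.Injective (newF n m F σ) := by
  have hcode : ∀ e : KIdx n, kcode n e < n ^ 2 := kcode_lt n
  have hKpos : 0 < 2 * n ^ 2 + 4 := by omega
  intro x y h
  match x, y with
  | Sum.inl a, Sum.inl b =>
    simp only [newF, Sum.elim_inl] at h
    have := Nat.eq_of_mul_eq_mul_right hKpos h
    exact congrArg Sum.inl (Sum.inl_injective (hinj this))
  | Sum.inl a, Sum.inr e =>
    obtain ⟨q, r, hqr, hr0, hrK, _, _⟩ := newF_inr n m F σ e hinj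
    have h' : F σ (Sum.inl a) * (2*n^2+4) = q * (2*n^2+4) + r := by rw [← hqr]; exact h
    have := decompK hKpos hKpos hrK (by omega : F σ (Sum.inl a) * (2*n^2+4) + 0 = q * (2*n^2+4) + r)
    omega
  | Sum.inr e, Sum.inl a =>
    obtain ⟨q, r, hqr, hr0, hrK, _, _⟩ := newF_inr n m F σ e hinj
    have h' : q * (2*n^2+4) + r = F σ (Sum.inl a) * (2*n^2+4) := by rw [← hqr]; exact h
    have := decompK hKpos hrK hKpos (by omega : q * (2*n^2+4) + r = F σ (Sum.inl a) * (2*n^2+4) + 0)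
    omega
  | Sum.inr e, Sum.inr f =>
    obtain ⟨q, r, hqr, hr0, hrK, hrform, _⟩ := newF_inr n m F σ e hinj
    obtain ⟨q', r', hqr', hr0', hrK', hrform', _⟩ := newF_inr n m F σ f hinj
    rw [hqr, hqr'] at h
    obtain ⟨-, hrr⟩ := decompK hKpos hrK hrK' h
    have he : kcode n e = kcode n f := by
      have h1 := hcode e; have h2 := hcode f
      rcases hrform with h3 | h3 <;> rcases hrform' with h4 | h4 <;> omega
    exact congrArg Sum.inr (kcode_inj n he)

lemma newF_key (n m : ℕ) (F : Fin m → (Fin n ⊕ KIdx n) → ℕ) (σ : Fin m)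
    (hinj : Function.Injective (F σ)) (p : Fin n) (e : KIdx n) (q : Fin n) (f : KIdx n)
    (hpe : p = e.val.1 ∨ p = e.val.2) (hqf : q = f.val.1 ∨ q = f.val.2)
    (h1 : F σ (Sum.inl p) < F σ (Sum.inl q)) (h2 : F σ (Sum.inl p) < F σ (Sum.inr f))
    (h3 : F σ (Sum.inr e) < F σ (Sum.inl q)) (h4 : F σ (Sum.inr e) < F σ (Sum.inr f)) :
    newF n m F σ (Sum.inl p) < newF n m F σ (Sum.inl q) ∧
    newF n m F σ (Sum.inl p) < newF n m F σ (Sum.inr f) ∧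
    newF n m F σ (Sum.inr e) < newF n m F σ (Sum.inl q) ∧
    newF n m F σ (Sum.inr e) < newF n m F σ (Sum.inr f) := by
  obtain ⟨_, _, _, _, _, _, _, _, ubE, -⟩ := newF_inr n m F σ e hinj
  obtain ⟨_, _, _, _, _, _, _, _, -, lbF⟩ := newF_inr n m F σ f hinj
  set N := n ^ 2 with hN
  set K := 2 * N + 4 with hK
  have hKpos : 0 < K := by omega
  set P := F σ (Sum.inl p) with hP
  set Q := F σ (Sum.inl q) with hQ
  set te := F σ (Sum.inr e) with hte
  set tf := F σ (Sum.inr f) with htf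
  set U := max P te with hU
  set L := min Q tf with hL
  have hUe : max (min (F σ (Sum.inl e.val.1)) (F σ (Sum.inl e.val.2))) te ≤ U := by
    have : min (F σ (Sum.inl e.val.1)) (F σ (Sum.inl e.val.2)) ≤ P := by
      rcases hpe with h | h <;> rw [hP, h]
      · exact min_le_left _ _
      · exact min_le_right _ _
    omega
  have hLf : L ≤ min (max (F σ (Sum.inl f.val.1)) (F σ (Sum.inl f.val.2))) tf := by
    have : Q ≤ max (F σ (Sum.inl f.val.1)) (F σ (Sum.inl f.val.2)) := by
      rcases hqf with h | h <;> rw [hQ, h]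
      · exact le_max_left _ _
      · exact le_max_right _ _
    omega
  have hUL : U + 1 ≤ L := by omega
  have ubE' : newF n m F σ (Sum.inr e) ≤ U * K + N :=
    le_trans ubE (by have := Nat.mul_le_mul_right K hUe; omega)
  have lbF' : L * K + (N + 4) ≤ newF n m F σ (Sum.inr f) + K :=
    le_trans (by have := Nat.mul_le_mul_right K hLf; omega) lbF
  have hULK : (U + 1) * K ≤ L * K := Nat.mul_le_mul_right K hUL
  have hU1 : (U + 1) * K = U * K + K := by ring
  have hLQ : L * K ≤ Q * K := Nat.mul_le_mul_right K (min_le_left _ _)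
  have hPU : P * K ≤ U * K := Nat.mul_le_mul_right K (le_max_left _ _)
  have hGp : newF n m F σ (Sum.inl p) = P * K := rfl
  have hGq : newF n m F σ (Sum.inl q) = Q * K := rfl
  have hPQ : P * K + K ≤ Q * K := by
    have : (P + 1) * K ≤ Q * K := Nat.mul_le_mul_right K h1
    have h9 : (P + 1) * K = P * K + K := by ring
    omega
  refine ⟨?_, ?_, ?_, ?_⟩
  · omega
  · -- P*K < G f
    rw [hGp]; omega
  · rw [hGq]; omega
  · omega

/-- Any pairwise suitable family `F` for `K_n^{1/2}` can be replaced by a pairwise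
suitable family `F'` of the same cardinality in which every subdivision vertex
`u_{ij}` lies strictly between `v_i` and `v_j` in every order. -/
theorem stmt14 (n m : ℕ) (F : Fin m → (Fin n ⊕ KIdx n) → ℕ)
    (hF : SepFamily (Ksub n) F) :
    ∃ F' : Fin m → (Fin n ⊕ KIdx n) → ℕ, SepFamily (Ksub n) F' ∧
      ∀ i, ∀ e : KIdx n,
        (F' i (Sum.inl e.val.1) < F' i (Sum.inr e) ∧
          F' i (Sum.inr e) < F' i (Sum.inl e.val.2)) ∨
        (F' i (Sum.inl e.val.2) < F' i (Sum.inr e) ∧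
          F' i (Sum.inr e) < F' i (Sum.inl e.val.1)) := by
  obtain ⟨hinj, hsep⟩ := hF
  refine ⟨newF n m F, ⟨fun σ => newF_inj n m F σ (hinj σ), ?_⟩, ?_⟩
  · intro a b c d hab hcd hac had hbc hbd
    obtain ⟨σ, hor⟩ := hsep a b c d hab hcd hac had hbc hbd
    rw [Ksub, SimpleGraph.fromRel_adj] at hab hcd
    obtain ⟨-, hab⟩ := hab
    obtain ⟨-, hcd⟩ := hcd
    have hi := hinj σ
    rcases hab with ⟨p, e, ha, hb, hpe⟩ | ⟨p, e, hb, ha, hpe⟩ <;>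
        rcases hcd with ⟨q, f, hc, hd, hqf⟩ | ⟨q, f, hd, hc, hqf⟩ <;>
        subst ha <;> subst hb <;> subst hc <;> subst hd <;>
        rcases hor with ⟨u1, u2, u3, u4⟩ | ⟨u1, u2, u3, u4⟩
    · obtain ⟨k1, k2, k3, k4⟩ := newF_key n m F σ hi p e q f hpe hqf u1 u2 u3 u4
      exact ⟨σ, Or.inl ⟨k1, k2, k3, k4⟩⟩
    · obtain ⟨k1, k2, k3, k4⟩ := newF_key n m F σ hi q f p e hqf hpe u1 u3 u2 u4
      exact ⟨σ, Or.inr ⟨k1, k3, k2, k4⟩⟩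
    · obtain ⟨k1, k2, k3, k4⟩ := newF_key n m F σ hi p e q f hpe hqf u2 u1 u4 u3
      exact ⟨σ, Or.inl ⟨k2, k1, k4, k3⟩⟩
    · obtain ⟨k1, k2, k3, k4⟩ := newF_key n m F σ hi q f p e hqf hpe u2 u4 u1 u3
      exact ⟨σ, Or.inr ⟨k3, k1, k4, k2⟩⟩
    · obtain ⟨k1, k2, k3, k4⟩ := newF_key n m F σ hi p e q f hpe hqf u3 u4 u1 u2
      exact ⟨σ, Or.inl ⟨k3, k4, k1, k2⟩⟩
    · obtain ⟨k1, k2, k3, k4⟩ := newF_key n m F σ hi q f p e hqf hpe u3 u1 u4 u2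
      exact ⟨σ, Or.inr ⟨k2, k4, k1, k3⟩⟩
    · obtain ⟨k1, k2, k3, k4⟩ := newF_key n m F σ hi p e q f hpe hqf u4 u3 u2 u1
      exact ⟨σ, Or.inl ⟨k4, k3, k2, k1⟩⟩
    · obtain ⟨k1, k2, k3, k4⟩ := newF_key n m F σ hi q f p e hqf hpe u4 u2 u3 u1
      exact ⟨σ, Or.inr ⟨k4, k2, k3, k1⟩⟩
  · intro σ e
    obtain ⟨q, r, hq1, hq2, hq3, hq4, hlo, hhi, hq5, hq6⟩ := newF_inr n m F σ e (hinj σ)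
    have hne : F σ (Sum.inl e.val.1) ≠ F σ (Sum.inl e.val.2) := by
      intro h
      have := (hinj σ) h
      simp only [Sum.inl.injEq] at this
      exact (Fin.ne_of_lt e.prop) this
    rcases lt_or_gt_of_ne hne with h | h
    · rw [min_eq_left h.le] at hlo
      rw [max_eq_right h.le] at hhi
      exact Or.inl ⟨hlo, hhi⟩
    · rw [min_eq_right h.le] at hlo
      rw [max_eq_left h.le] at hhi
      exact Or.inr ⟨hlo, hhi⟩
end
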